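/- arXiv:2403.12183 — 5 statements merged into one kernel-verified Lean document; each statement's English description precedes it below -/
import Mathlib

section
/- In every matching market of size n in which all pairs are mutually acceptable, for every unstable matching λ there exist a stable matching μ and a path from λ to μ; that is, any unstable matching can be transformed into a stable matching by a finite sequence of successive satisfactions of blocking pairs (Roth–Vande Vate stabilization theorem). -/
/-- A matching market of size `n`: firms and workers are both indexed by `Fin n`.
`fpref f w` is the rank firm `f` assigns to worker `w` (smaller = more preferred);
injectivity makes each preference a strict total order.  All pairs are mutually
acceptable: being unmatched is implicitly worse than being matched to anybody. -/
structure Market (n : ℕ) where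
  fpref : Fin n → Fin n → ℕ
  wpref : Fin n → Fin n → ℕ
  fpref_inj : ∀ f, Function.Injective (fpref f)
  wpref_inj : ∀ w, Function.Injective (wpref w)

/-- A (possibly partial) one-to-one matching between firms and workers.
`mf f = none` means firm `f` is unmatched, similarly for `mw`. -/
structure Matching (n : ℕ) where
  mf : Fin n → Option (Fin n)
  mw : Fin n → Option (Fin n)
  consistent : ∀ f w, mf f = some w ↔ mw w = some f

variable {n : ℕ}

/-- Firm `f` strictly prefers worker `w` to the (optional) partner `o`.
An unmatched firm prefers any worker (mutual acceptability). -/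
def FPrefOver (M : Market n) (f w : Fin n) (o : Option (Fin n)) : Prop :=
  ∀ w' ∈ o, M.fpref f w < M.fpref f w'

/-- Worker `w` strictly prefers firm `f` to the (optional) partner `o`. -/
def WPrefOver (M : Market n) (w f : Fin n) (o : Option (Fin n)) : Prop :=
  ∀ f' ∈ o, M.wpref w f < M.wpref w f'

/-- `(f, w)` is a blocking pair of `μ`. -/
def Blocking (M : Market n) (μ : Matching n) (f w : Fin n) : Prop :=
  μ.mf f ≠ some w ∧ FPrefOver M f w (μ.mf f) ∧ WPrefOver M w f (μ.mw w)

/-- A matching is stable if it admits no blocking pair. -/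
def Stable (M : Market n) (μ : Matching n) : Prop :=
  ∀ f w, ¬ Blocking M μ f w

/-- `μ'` is obtained from `μ` by satisfying the blocking pair `(f, w)`:
`f` and `w` are matched to each other, their former partners (if any) become
unmatched, and everyone else keeps the same partner. -/
def Satisfies (M : Market n) (μ μ' : Matching n) (f w : Fin n) : Prop :=
  Blocking M μ f w ∧ μ'.mf f = some w ∧
  (∀ w', μ.mf f = some w' → μ'.mw w' = none) ∧
  (∀ f', μ.mw w = some f' → μ'.mf f' = none) ∧
  (∀ f', f' ≠ f → μ.mw w ≠ some f' → μ'.mf f' = μ.mf f') ∧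
  (∀ w', w' ≠ w → μ.mf f ≠ some w' → μ'.mw w' = μ.mw w')

/-- One step of the blocking-pair dynamics. -/
def StepRel (M : Market n) (μ μ' : Matching n) : Prop :=
  ∃ f w, Satisfies M μ μ' f w

namespace RVV

variable {n : ℕ}

lemma mf_ne_of_mw_none {μ : Matching n} {v : Fin n} (h : μ.mw v = none) (f : Fin n) :
    μ.mf f ≠ some v := by
  intro hf
  rw [(μ.consistent f v).mp hf] at h
  exact Option.some_ne_none f h

lemma mw_ne_of_mf_none {μ : Matching n} {g : Fin n} (h : μ.mf g = none) (w : Fin n) :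
    μ.mw w ≠ some g := by
  intro hw
  rw [(μ.consistent g w).mpr hw] at h
  exact Option.some_ne_none w h

lemma fprefOver_some {M : Market n} {f w w' : Fin n} :
    FPrefOver M f w (some w') ↔ M.fpref f w < M.fpref f w' := by
  simp [FPrefOver]

lemma fprefOver_none {M : Market n} {f w : Fin n} : FPrefOver M f w none := by
  simp [FPrefOver]

lemma wprefOver_some {M : Market n} {w f f' : Fin n} :
    WPrefOver M w f (some f') ↔ M.wpref w f < M.wpref w f' := by
  simp [WPrefOver]

lemma wprefOver_none {M : Market n} {w f : Fin n} : WPrefOver M w f none := by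
  simp [WPrefOver]

lemma blocking_of {M : Market n} {μ : Matching n} {f w : Fin n}
    (hf : FPrefOver M f w (μ.mf f)) (hw : WPrefOver M w f (μ.mw w)) :
    Blocking M μ f w := by
  refine ⟨?_, hf, hw⟩
  intro h
  exact lt_irrefl _ (hf w (by simp [h, Option.mem_def]))

/-- The matching obtained by matching `f` with `w` and unmatching their former partners. -/
def doMatch (μ : Matching n) (f w : Fin n) : Matching n where
  mf f' := if f' = f then some w else if μ.mf f' = some w then none else μ.mf f'
  mw w' := if w' = w then some f else if μ.mw w' = some f then none else μ.mw w'
  consistent := by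
    intro f' w'
    beta_reduce
    rcases eq_or_ne f' f with hf | hf
    · rcases eq_or_ne w' w with hw | hw
      · rw [if_pos hf, if_pos hw, hf, hw]; simp
      · rw [if_pos hf, if_neg hw]
        constructor
        · intro h; exact absurd (Option.some_inj.mp h).symm hw
        · intro h
          exfalso
          by_cases hc : μ.mw w' = some f
          · rw [if_pos hc] at h; exact nomatch h
          · rw [if_neg hc] at h; rw [hf] at h; exact hc h
    · rcases eq_or_ne w' w with hw | hw
      · rw [if_neg hf, if_pos hw]
        rw [hw]
        constructor
        · intro h
          exfalso
          by_cases hc : μ.mf f' = some w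
          · rw [if_pos hc] at h; exact nomatch h
          · rw [if_neg hc] at h; exact hc h
        · intro h; exact absurd (Option.some_inj.mp h).symm hf
      · rw [if_neg hf, if_neg hw]
        constructor
        · intro h
          by_cases hc : μ.mf f' = some w
          · rw [if_pos hc] at h; exact nomatch h
          · rw [if_neg hc] at h
            have h2 := (μ.consistent f' w').mp h
            have hne : μ.mw w' ≠ some f := by
              rw [h2]; simp [hf]
            rw [if_neg hne]; exact h2
        · intro h
          by_cases hc : μ.mw w' = some f
          · rw [if_pos hc] at h; exact nomatch h
          · rw [if_neg hc] at h
            have h2 := (μ.consistent f' w').mpr h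
            have hne : μ.mf f' ≠ some w := by
              rw [h2]; simp [hw]
            rw [if_neg hne]; exact h2

lemma doMatch_mf_self (μ : Matching n) (f w : Fin n) : (doMatch μ f w).mf f = some w := by
  simp [doMatch]

lemma doMatch_mw_self (μ : Matching n) (f w : Fin n) : (doMatch μ f w).mw w = some f := by
  simp [doMatch]

lemma doMatch_mf_other {μ : Matching n} {f f' : Fin n} (w : Fin n) (h1 : f' ≠ f)
    (h2 : μ.mf f' ≠ some w) : (doMatch μ f w).mf f' = μ.mf f' := by
  simp [doMatch, if_neg h1, if_neg h2]

lemma doMatch_mw_other {μ : Matching n} {w w' : Fin n} (f : Fin n) (h1 : w' ≠ w)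
    (h2 : μ.mw w' ≠ some f) : (doMatch μ f w).mw w' = μ.mw w' := by
  simp [doMatch, if_neg h1, if_neg h2]

lemma doMatch_mf_displaced {μ : Matching n} {f f' w : Fin n} (h1 : f' ≠ f)
    (h2 : μ.mw w = some f') : (doMatch μ f w).mf f' = none := by
  have h3 : μ.mf f' = some w := (μ.consistent f' w).mpr h2
  simp [doMatch, if_neg h1, h3]

lemma doMatch_mw_displaced {μ : Matching n} {f w w' : Fin n} (h1 : w' ≠ w)
    (h2 : μ.mf f = some w') : (doMatch μ f w).mw w' = none := by
  have h3 : μ.mw w' = some f := (μ.consistent f w').mp h2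
  simp [doMatch, if_neg h1, h3]

lemma satisfies_doMatch {M : Market n} {μ : Matching n} {f w : Fin n}
    (hb : Blocking M μ f w) : Satisfies M μ (doMatch μ f w) f w := by
  obtain ⟨hne, hf, hw⟩ := hb
  refine ⟨⟨hne, hf, hw⟩, doMatch_mf_self μ f w, ?_, ?_, ?_, ?_⟩
  · intro w' h
    have hw' : w' ≠ w := by intro hEq; rw [hEq] at h; exact hne h
    exact doMatch_mw_displaced hw' h
  · intro f' h
    have hf' : f' ≠ f := by
      intro hEq
      rw [hEq] at h
      exact hne ((μ.consistent f w).mpr h)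
    exact doMatch_mf_displaced hf' h
  · intro f' h1 h2
    refine doMatch_mf_other w h1 ?_
    intro hc
    exact h2 ((μ.consistent f' w).mp hc)
  · intro w' h1 h2
    refine doMatch_mw_other f h1 ?_
    intro hc
    exact h2 ((μ.consistent f w').mpr hc)

lemma stepRel_doMatch {M : Market n} {μ : Matching n} {f w : Fin n}
    (hb : Blocking M μ f w) : StepRel M μ (doMatch μ f w) :=
  ⟨f, w, satisfies_doMatch hb⟩

end RVV
namespace RVV
variable {n : ℕ}

def Bf (M : Market n) (f : Fin n) : ℕ := (∑ w, M.fpref f w) + 1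

lemma fpref_lt_Bf (M : Market n) (f w : Fin n) : M.fpref f w < Bf M f :=
  Nat.lt_succ_of_le (Finset.single_le_sum (fun _ _ => Nat.zero_le _) (Finset.mem_univ w))

def Bw (M : Market n) (w : Fin n) : ℕ := (∑ f, M.wpref w f) + 1

lemma wpref_lt_Bw (M : Market n) (w f : Fin n) : M.wpref w f < Bw M w :=
  Nat.lt_succ_of_le (Finset.single_le_sum (fun _ _ => Nat.zero_le _) (Finset.mem_univ f))

def costF (M : Market n) (μ : Matching n) (f : Fin n) : ℕ := (μ.mf f).elim (Bf M f) (M.fpref f)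

def costW (M : Market n) (μ : Matching n) (w : Fin n) : ℕ := (μ.mw w).elim (Bw M w) (M.wpref w)

def Phi (M : Market n) (μ : Matching n) : ℕ := ∑ f, costF M μ f

def Psi (M : Market n) (μ : Matching n) : ℕ := ∑ w, costW M μ w

def Phimax (M : Market n) : ℕ := ∑ f, Bf M f

lemma costF_le (M : Market n) (μ : Matching n) (f : Fin n) : costF M μ f ≤ Bf M f := by
  cases h : μ.mf f with
  | none => simp [costF, h]
  | some w => simpa [costF, h] using le_of_lt (fpref_lt_Bf M f w)

lemma Phi_le (M : Market n) (μ : Matching n) : Phi M μ ≤ Phimax M :=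
  Finset.sum_le_sum (fun f _ => costF_le M μ f)

lemma Phi_decrease (M : Market n) {μ : Matching n} {f v : Fin n}
    (hb : Blocking M μ f v) (hv : μ.mw v = none) : Phi M (doMatch μ f v) < Phi M μ := by
  refine Finset.sum_lt_sum (fun i _ => ?_) ⟨f, Finset.mem_univ f, ?_⟩
  · by_cases hi : i = f
    · subst hi
      have h1 : costF M (doMatch μ i v) i = M.fpref i v := by
        simp [costF, doMatch_mf_self]
      rw [h1]
      cases h : μ.mf i with
      | none => simp [costF, h]; exact le_of_lt (fpref_lt_Bf M i v)
      | some w0 =>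
        simp [costF, h]
        exact le_of_lt (hb.2.1 w0 (by simp [h, Option.mem_def]))
    · rw [costF, doMatch_mf_other v hi (mf_ne_of_mw_none hv i), ← costF]
  · have h1 : costF M (doMatch μ f v) f = M.fpref f v := by
      simp [costF, doMatch_mf_self]
    rw [h1]
    cases h : μ.mf f with
    | none => simp [costF, h]; exact fpref_lt_Bf M f v
    | some w0 =>
      simp [costF, h]
      exact hb.2.1 w0 (by simp [h, Option.mem_def])

lemma Psi_decrease (M : Market n) {μ : Matching n} {g w : Fin n}
    (hb : Blocking M μ g w) (hg : μ.mf g = none) : Psi M (doMatch μ g w) < Psi M μ := by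
  refine Finset.sum_lt_sum (fun i _ => ?_) ⟨w, Finset.mem_univ w, ?_⟩
  · by_cases hi : i = w
    · subst hi
      have h1 : costW M (doMatch μ g i) i = M.wpref i g := by
        simp [costW, doMatch_mw_self]
      rw [h1]
      cases h : μ.mw i with
      | none => simp [costW, h]; exact le_of_lt (wpref_lt_Bw M i g)
      | some f1 =>
        simp [costW, h]
        exact le_of_lt (hb.2.2 f1 (by simp [h, Option.mem_def]))
    · rw [costW, doMatch_mw_other g hi (mw_ne_of_mf_none hg i), ← costW]
  · have h1 : costW M (doMatch μ g w) w = M.wpref w g := by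
      simp [costW, doMatch_mw_self]
    rw [h1]
    cases h : μ.mw w with
    | none => simp [costW, h]; exact wpref_lt_Bw M w g
    | some f1 =>
      simp [costW, h]
      exact hb.2.2 f1 (by simp [h, Option.mem_def])

end RVV
namespace RVV
variable {n : ℕ}

def meas (M : Market n) (μ : Matching n) (gOpt vOpt : Option (Fin n)) : ℕ :=
  if gOpt.isSome then Phimax M + 2 + Psi M μ
  else if vOpt.isSome then Phi M μ + 1 else 0

lemma meas_le (M : Market n) (μ : Matching n) (gOpt vOpt : Option (Fin n)) :
    meas M μ gOpt vOpt ≤ Phimax M + 2 + Psi M μ := by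
  have h := Phi_le M μ
  unfold meas
  split
  · exact le_refl _
  · split <;> omega

lemma meas_le' (M : Market n) (μ : Matching n) (vOpt : Option (Fin n)) :
    meas M μ none vOpt ≤ Phi M μ + 1 := by
  unfold meas
  simp only [Option.isSome_none, Bool.false_eq_true, if_false]
  split <;> omega

theorem chain (M : Market n) (K : ℕ) : ∀ (m : ℕ) (μ : Matching n) (gOpt vOpt : Option (Fin n)),
    meas M μ gOpt vOpt ≤ m →
    (∀ g ∈ gOpt, μ.mf g = none) →
    (∀ v ∈ vOpt, μ.mw v = none) →
    (∀ f w : Fin n, w.val < K → Blocking M μ f w → gOpt = some f ∨ vOpt = some w) →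
    ∃ μ', Relation.ReflTransGen (StepRel M) μ μ' ∧
      ∀ f w : Fin n, w.val < K → ¬ Blocking M μ' f w := by
  intro m
  induction m with
  | zero =>
    intro μ gOpt vOpt hm h1 h2 h3
    have hg : gOpt = none := by
      cases gOpt with
      | none => rfl
      | some g => simp [meas] at hm
    have hv : vOpt = none := by
      cases vOpt with
      | none => rfl
      | some v => subst hg; simp [meas] at hm
    subst hg; subst hv
    refine ⟨μ, Relation.ReflTransGen.refl, fun f w hwK hb => ?_⟩
    rcases h3 f w hwK hb with h | h <;> exact nomatch h
  | succ m ih =>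
    intro μ gOpt vOpt hm h1 h2 h3
    classical
    cases gOpt with
    | some g =>
      have hg : μ.mf g = none := h1 g rfl
      by_cases hS : ∃ w : Fin n, w.val < K ∧ Blocking M μ g w ∧ vOpt ≠ some w
      · -- firm step
        set S : Finset (Fin n) :=
          Finset.univ.filter (fun w => w.val < K ∧ Blocking M μ g w ∧ vOpt ≠ some w) with hSdef
        have hSne : S.Nonempty := by
          obtain ⟨w0, hw0⟩ := hS
          exact ⟨w0, by simp [hSdef, hw0]⟩
        obtain ⟨ws, hwsS, hmin⟩ := Finset.exists_min_image S (fun w => M.fpref g w) hSne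
        rw [hSdef, Finset.mem_filter] at hwsS
        obtain ⟨-, hwsK, hbs, hwsv⟩ := hwsS
        set μ' := doMatch μ g ws with hμ'
        have hstep : StepRel M μ μ' := stepRel_doMatch hbs
        have hdec : Psi M μ' < Psi M μ := Psi_decrease M hbs hg
        have hmeas : meas M μ' (μ.mw ws) vOpt ≤ m := by
          have h4 := meas_le M μ' (μ.mw ws) vOpt
          have h5 : meas M μ (some g) vOpt = Phimax M + 2 + Psi M μ := by simp [meas]
          omega
        have hh1 : ∀ g' ∈ μ.mw ws, μ'.mf g' = none := by
          intro g' hg'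
          have hne : g' ≠ g := by
            intro hEq; rw [hEq] at hg'; exact mw_ne_of_mf_none hg ws hg'
          exact doMatch_mf_displaced hne hg'
        have hh2 : ∀ v ∈ vOpt, μ'.mw v = none := by
          intro v hv
          have hvw : v ≠ ws := by
            intro hEq; rw [hEq] at hv; exact hwsv hv
          rw [doMatch_mw_other g hvw (by rw [h2 v hv]; exact fun h => nomatch h)]
          exact h2 v hv
        have hh3 : ∀ f w : Fin n, w.val < K → Blocking M μ' f w →
            μ.mw ws = some f ∨ vOpt = some w := by
          intro f w hwK hb'
          by_cases hfg : f = g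
          · subst hfg
            by_cases hwws : w = ws
            · subst hwws
              exact absurd (hb'.2.1 w (by simp [hμ', doMatch_mf_self, Option.mem_def]))
                (lt_irrefl _)
            · -- g still blocks with w in μ'
              have hlt : M.fpref f w < M.fpref f ws :=
                hb'.2.1 ws (by simp [hμ', doMatch_mf_self, Option.mem_def])
              have hmww : (doMatch μ f ws).mw w = μ.mw w :=
                doMatch_mw_other f hwws (mw_ne_of_mf_none hg w)
              have hbold : Blocking M μ f w := by
                refine blocking_of ?_ ?_
                · rw [hg]; exact fprefOver_none
                · rw [← hmww]; exact hb'.2.2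
              by_cases hwv : vOpt = some w
              · exact Or.inr hwv
              · exfalso
                have hwS : w ∈ S := by simp [hSdef, hwK, hbold, hwv]
                exact absurd hlt (not_lt.mpr (hmin w hwS))
          · by_cases hfd : μ.mw ws = some f
            · exact Or.inl hfd
            · have hmff : μ'.mf f = μ.mf f := by
                refine doMatch_mf_other ws hfg ?_
                intro hc
                exact hfd ((μ.consistent f ws).mp hc)
              by_cases hwws : w = ws
              · subst hwws
                exfalso
                have hlt : M.wpref w f < M.wpref w g :=
                  hb'.2.2 g (by simp [hμ', doMatch_mw_self, Option.mem_def])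
                have hbold : Blocking M μ f w := by
                  refine blocking_of ?_ ?_
                  · rw [← hmff]; exact hb'.2.1
                  · intro f1 hf1
                    rw [Option.mem_def] at hf1
                    have h6 : M.wpref w g < M.wpref w f1 :=
                      hbs.2.2 f1 (by rw [Option.mem_def, hf1])
                    exact lt_trans hlt h6
                rcases h3 f w hwK hbold with h | h
                · exact hfg (Option.some_inj.mp h).symm
                · exact hwsv h
              · by_cases hwv : vOpt = some w
                · exact Or.inr hwv
                · exfalso
                  have hmww : μ'.mw w = μ.mw w :=
                    doMatch_mw_other g hwws (mw_ne_of_mf_none hg w)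
                  have hbold : Blocking M μ f w := by
                    refine blocking_of ?_ ?_
                    · rw [← hmff]; exact hb'.2.1
                    · rw [← hmww]; exact hb'.2.2
                  rcases h3 f w hwK hbold with h | h
                  · exact hfg (Option.some_inj.mp h).symm
                  · exact hwv h
        obtain ⟨μ'', hpath, hok⟩ := ih μ' (μ.mw ws) vOpt hmeas hh1 hh2 hh3
        exact ⟨μ'', Relation.ReflTransGen.head hstep hpath, hok⟩
      · -- drop the firm exception
        refine ih μ none vOpt ?_ (by simp) h2 ?_
        · have h4 := meas_le' M μ vOpt
          have h5 := Phi_le M μ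
          have h6 : meas M μ (some g) vOpt = Phimax M + 2 + Psi M μ := by simp [meas]
          omega
        · intro f w hwK hb
          rcases h3 f w hwK hb with h | h
          · have hfg : f = g := (Option.some_inj.mp h).symm
            subst hfg
            by_cases hwv : vOpt = some w
            · exact Or.inr hwv
            · exact absurd ⟨w, hwK, hb, hwv⟩ hS
          · exact Or.inr h
    | none =>
      cases vOpt with
      | some v =>
        have hv0 : μ.mw v = none := h2 v rfl
        by_cases hv : v.val < K ∧ ∃ f, Blocking M μ f v
        · -- worker step
          set B : Finset (Fin n) := Finset.univ.filter (fun f => Blocking M μ f v) with hBdef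
          have hBne : B.Nonempty := by
            obtain ⟨f0, hf0⟩ := hv.2
            exact ⟨f0, by simp [hBdef, hf0]⟩
          obtain ⟨fs, hfsB, hmin⟩ := Finset.exists_min_image B (fun f => M.wpref v f) hBne
          rw [hBdef, Finset.mem_filter] at hfsB
          have hbf : Blocking M μ fs v := hfsB.2
          set μ' := doMatch μ fs v with hμ'
          have hstep : StepRel M μ μ' := stepRel_doMatch hbf
          have hdec : Phi M μ' < Phi M μ := Phi_decrease M hbf hv0
          have hmeas : meas M μ' none (μ.mf fs) ≤ m := by
            have h4 := meas_le' M μ' (μ.mf fs)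
            have h5 : meas M μ none (some v) = Phi M μ + 1 := by simp [meas]
            omega
          have hh2 : ∀ w' ∈ μ.mf fs, μ'.mw w' = none := by
            intro w' hw'
            have hne : w' ≠ v := by
              intro hEq; rw [hEq] at hw'; exact mf_ne_of_mw_none hv0 fs hw'
            exact doMatch_mw_displaced hne hw'
          have hh3 : ∀ f w : Fin n, w.val < K → Blocking M μ' f w →
              (none : Option (Fin n)) = some f ∨ μ.mf fs = some w := by
            intro f w hwK hb'
            by_cases hffs : f = fs
            · subst hffs
              by_cases hwv : w = v
              · subst hwv
                exact absurd (hb'.2.1 w (by simp [hμ', doMatch_mf_self, Option.mem_def]))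
                  (lt_irrefl _)
              · by_cases hwd : μ.mf f = some w
                · exact Or.inr hwd
                · exfalso
                  have hlt : M.fpref f w < M.fpref f v :=
                    hb'.2.1 v (by simp [hμ', doMatch_mf_self, Option.mem_def])
                  have hmww : μ'.mw w = μ.mw w := by
                    refine doMatch_mw_other f hwv ?_
                    intro hc
                    exact hwd ((μ.consistent f w).mpr hc)
                  have hbold : Blocking M μ f w := by
                    refine blocking_of ?_ ?_
                    · intro w1 hw1
                      rw [Option.mem_def] at hw1
                      have h6 : M.fpref f v < M.fpref f w1 :=
                        hbf.2.1 w1 (by rw [Option.mem_def, hw1])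
                      exact lt_trans hlt h6
                    · rw [← hmww]; exact hb'.2.2
                  rcases h3 f w hwK hbold with h | h
                  · exact nomatch h
                  · exact hwv (Option.some_inj.mp h).symm
            · have hmff : μ'.mf f = μ.mf f :=
                doMatch_mf_other v hffs (mf_ne_of_mw_none hv0 f)
              by_cases hwv : w = v
              · subst hwv
                exfalso
                have hlt : M.wpref w f < M.wpref w fs :=
                  hb'.2.2 fs (by simp [hμ', doMatch_mw_self, Option.mem_def])
                have hbold : Blocking M μ f w := by
                  refine blocking_of ?_ ?_
                  · rw [← hmff]; exact hb'.2.1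
                  · rw [hv0]; exact wprefOver_none
                have hfB : f ∈ B := by simp [hBdef, hbold]
                exact absurd hlt (not_lt.mpr (hmin f hfB))
              · by_cases hwd : μ.mf fs = some w
                · exact Or.inr hwd
                · exfalso
                  have hmww : μ'.mw w = μ.mw w := by
                    refine doMatch_mw_other fs hwv ?_
                    intro hc
                    exact hwd ((μ.consistent fs w).mpr hc)
                  have hbold : Blocking M μ f w := by
                    refine blocking_of ?_ ?_
                    · rw [← hmff]; exact hb'.2.1
                    · rw [← hmww]; exact hb'.2.2
                  rcases h3 f w hwK hbold with h | h
                  · exact nomatch h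
                  · exact hwv (Option.some_inj.mp h).symm
          obtain ⟨μ'', hpath, hok⟩ := ih μ' none (μ.mf fs) hmeas (by simp) hh2 hh3
          exact ⟨μ'', Relation.ReflTransGen.head hstep hpath, hok⟩
        · -- drop the worker exception
          refine ih μ none none (by simp [meas]) (by simp) (by simp) ?_
          intro f w hwK hb
          exfalso
          rcases h3 f w hwK hb with h | h
          · exact nomatch h
          · have hwv : w = v := Option.some_inj.mp h.symm
            subst hwv
            exact hv ⟨hwK, f, hb⟩
      | none =>
        refine ⟨μ, Relation.ReflTransGen.refl, fun f w hwK hb => ?_⟩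
        rcases h3 f w hwK hb with h | h <;> exact nomatch h

end RVV
namespace RVV
variable {n : ℕ}

def OkTo (M : Market n) (K : ℕ) (μ : Matching n) : Prop :=
  ∀ f w : Fin n, w.val < K → ¬ Blocking M μ f w

lemma ok_step (M : Market n) {K : ℕ} {μ : Matching n} (hμ : OkTo M K μ) :
    ∃ μ', Relation.ReflTransGen (StepRel M) μ μ' ∧ OkTo M (K + 1) μ' := by
  classical
  by_cases hK : K < n
  · set v : Fin n := ⟨K, hK⟩ with hvdef
    have hsplit : ∀ w : Fin n, w.val < K + 1 → w.val < K ∨ w = v := by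
      intro w hw
      rcases Nat.lt_succ_iff_lt_or_eq.mp hw with h | h
      · exact Or.inl h
      · exact Or.inr (Fin.ext h)
    by_cases hbv : ∃ f, Blocking M μ f v
    · cases hmv : μ.mw v with
      | none =>
        have hh2 : ∀ v' ∈ (some v : Option (Fin n)), μ.mw v' = none := by
          intro v' hv'
          have : v' = v := (Option.some_inj.mp hv').symm
          rw [this]; exact hmv
        have hh3 : ∀ f w : Fin n, w.val < K + 1 → Blocking M μ f w →
            (none : Option (Fin n)) = some f ∨ (some v : Option (Fin n)) = some w := by
          intro f w hwK hb
          rcases hsplit w hwK with h | h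
          · exact absurd hb (hμ f w h)
          · exact Or.inr (by rw [h])
        obtain ⟨μ', hp, hok⟩ := chain M (K + 1) (meas M μ none (some v)) μ none (some v)
          le_rfl (by simp) hh2 hh3
        exact ⟨μ', hp, hok⟩
      | some f0 =>
        set B : Finset (Fin n) := Finset.univ.filter (fun f => Blocking M μ f v) with hBdef
        have hBne : B.Nonempty := by
          obtain ⟨f1, hf1⟩ := hbv
          exact ⟨f1, by simp [hBdef, hf1]⟩
        obtain ⟨fs, hfsB, hmin⟩ := Finset.exists_min_image B (fun f => M.wpref v f) hBne
        rw [hBdef, Finset.mem_filter] at hfsB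
        have hbf : Blocking M μ fs v := hfsB.2
        set μ₁ := doMatch μ fs v with hμ₁
        have hstep : StepRel M μ μ₁ := stepRel_doMatch hbf
        have hf0fs : f0 ≠ fs := by
          intro hEq
          rw [hEq] at hmv
          exact hbf.1 ((μ.consistent fs v).mpr hmv)
        have hh1 : ∀ g ∈ (some f0 : Option (Fin n)), μ₁.mf g = none := by
          intro g hg
          have : g = f0 := (Option.some_inj.mp hg).symm
          rw [this]
          exact doMatch_mf_displaced hf0fs hmv
        have hh2 : ∀ w' ∈ μ.mf fs, μ₁.mw w' = none := by
          intro w' hw'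
          rw [Option.mem_def] at hw'
          have hne : w' ≠ v := by
            intro hEq; rw [hEq] at hw'; exact hbf.1 hw'
          exact doMatch_mw_displaced hne hw'
        have hh3 : ∀ f w : Fin n, w.val < K + 1 → Blocking M μ₁ f w →
            (some f0 : Option (Fin n)) = some f ∨ μ.mf fs = some w := by
          intro f w hwK hb'
          by_cases hffs : f = fs
          · by_cases hwv : w = v
            · exfalso
              have hmf : μ₁.mf f = some w := by
                rw [hffs, hwv]; exact doMatch_mf_self μ fs v
              exact absurd (hb'.2.1 w (by rw [Option.mem_def, hmf])) (lt_irrefl _)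
            · by_cases hwd : μ.mf fs = some w
              · exact Or.inr hwd
              · exfalso
                have hmf : μ₁.mf f = some v := by
                  rw [hffs]; exact doMatch_mf_self μ fs v
                have hlt : M.fpref f w < M.fpref f v :=
                  hb'.2.1 v (by rw [Option.mem_def, hmf])
                have hmww : μ₁.mw w = μ.mw w := by
                  refine doMatch_mw_other fs hwv ?_
                  intro hc
                  exact hwd ((μ.consistent fs w).mpr hc)
                have hbold : Blocking M μ f w := by
                  refine blocking_of ?_ ?_
                  · intro w1 hw1
                    rw [Option.mem_def] at hw1
                    have h6 : M.fpref f v < M.fpref f w1 := by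
                      rw [hffs] at hw1 ⊢
                      exact hbf.2.1 w1 (by rw [Option.mem_def, hw1])
                    exact lt_trans hlt h6
                  · rw [← hmww]; exact hb'.2.2
                rcases hsplit w hwK with h | h
                · exact hμ f w h hbold
                · exact hwv h
          · by_cases hff0 : f = f0
            · exact Or.inl (by rw [hff0])
            · have hmff : μ₁.mf f = μ.mf f := by
                refine doMatch_mf_other v hffs ?_
                intro hc
                have h8 := (μ.consistent f v).mp hc
                rw [hmv] at h8
                exact hff0 (Option.some_inj.mp h8).symm
              by_cases hwv : w = v
              · exfalso
                have hmwv : μ₁.mw w = some fs := by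
                  rw [hwv]; exact doMatch_mw_self μ fs v
                have hlt : M.wpref w f < M.wpref w fs :=
                  hb'.2.2 fs (by rw [Option.mem_def, hmwv])
                have hbold : Blocking M μ f w := by
                  refine blocking_of ?_ ?_
                  · rw [← hmff]; exact hb'.2.1
                  · intro f1 hf1
                    rw [Option.mem_def, hwv, hmv] at hf1
                    have h7 : M.wpref w fs < M.wpref w f0 := by
                      rw [hwv]
                      exact hbf.2.2 f0 (by rw [Option.mem_def, hmv])
                    rw [← Option.some_inj.mp hf1]
                    exact lt_trans hlt h7
                have hfB : f ∈ B := by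
                  rw [hBdef, Finset.mem_filter]
                  refine ⟨Finset.mem_univ f, ?_⟩
                  rw [← hwv]; exact hbold
                have h9 := hmin f hfB
                rw [← hwv] at h9
                exact absurd hlt (not_lt.mpr h9)
              · by_cases hwd : μ.mf fs = some w
                · exact Or.inr hwd
                · exfalso
                  have hmww : μ₁.mw w = μ.mw w := by
                    refine doMatch_mw_other fs hwv ?_
                    intro hc
                    exact hwd ((μ.consistent fs w).mpr hc)
                  have hbold : Blocking M μ f w := by
                    refine blocking_of ?_ ?_
                    · rw [← hmff]; exact hb'.2.1
                    · rw [← hmww]; exact hb'.2.2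
                  rcases hsplit w hwK with h | h
                  · exact hμ f w h hbold
                  · exact hwv h
        obtain ⟨μ', hp, hok⟩ := chain M (K + 1) (meas M μ₁ (some f0) (μ.mf fs)) μ₁
          (some f0) (μ.mf fs) le_rfl hh1 hh2 hh3
        exact ⟨μ', Relation.ReflTransGen.head hstep hp, hok⟩
    · refine ⟨μ, Relation.ReflTransGen.refl, ?_⟩
      intro f w hwK hb
      rcases hsplit w hwK with h | h
      · exact hμ f w h hb
      · exact hbv ⟨f, by rw [← h]; exact hb⟩
  · refine ⟨μ, Relation.ReflTransGen.refl, ?_⟩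
    intro f w _ hb
    exact hμ f w (lt_of_lt_of_le w.isLt (not_lt.mp hK)) hb

end RVV

namespace RVV
variable {n : ℕ}

lemma ok_all (M : Market n) (lam : Matching n) (K : ℕ) :
    ∃ μ', Relation.ReflTransGen (StepRel M) lam μ' ∧ OkTo M K μ' := by
  induction K with
  | zero => exact ⟨lam, Relation.ReflTransGen.refl, fun f w hw => absurd hw (Nat.not_lt_zero _)⟩
  | succ K ih =>
    obtain ⟨μ1, hp1, hok1⟩ := ih
    obtain ⟨μ2, hp2, hok2⟩ := ok_step M hok1
    exact ⟨μ2, hp1.trans hp2, hok2⟩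

end RVV

/-- **Roth–Vande Vate stabilization theorem**: any unstable matching can be
transformed into a stable matching by a finite sequence of successive
satisfactions of blocking pairs. -/
theorem stmt0 (M : Market n) (lam : Matching n) (hlam : ¬ Stable M lam) :
    ∃ μ : Matching n, Stable M μ ∧ Relation.ReflTransGen (StepRel M) lam μ := by
  obtain ⟨μ, hp, hok⟩ := RVV.ok_all M lam n
  exact ⟨μ, fun f w hb => hok f w w.isLt hb, hp⟩
end

section
/- In every matching market in which all pairs are mutually acceptable, for every κ ≥ 1, every starting matching λ_0, and every κ-random dynamics (λ_t) started at λ_0, with probability 1 there exists a time t such that λ_t is stable (after which the process remains at that stable matching forever). -/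
variable {n : ℕ}

open MeasureTheory

instance : MeasurableSpace (Matching n) := ⊤

/-- `X` is a `κ`-random dynamics started at `λ0`: whenever the current matching is
unstable, the next matching is obtained by satisfying one of its blocking pairs,
chosen at random so that, conditional on the history, every blocking pair is
satisfied with positive probability and the (conditional) probabilities of any two
blocking pairs differ by a factor of at most `κ`; stable matchings are absorbing. -/
structure IsKRandomDynamics (M : Market n) (κ : ℝ) {Ω : Type*} [MeasurableSpace Ω]
    (P : Measure Ω) (X : ℕ → Ω → Matching n) (lam0 : Matching n) : Prop where
  measurable : ∀ t, Measurable (X t)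
  init : ∀ᵐ ω ∂P, X 0 ω = lam0
  stable_fix : ∀ᵐ ω ∂P, ∀ t, Stable M (X t ω) → X (t + 1) ω = X t ω
  unstable_step : ∀ᵐ ω ∂P, ∀ t, ¬ Stable M (X t ω) →
    ∃ f w, Satisfies M (X t ω) (X (t + 1) ω) f w
  pos : ∀ (t : ℕ) (h : ℕ → Matching n), 0 < P {ω | ∀ s ≤ t, X s ω = h s} →
    ¬ Stable M (h t) → ∀ f w, Blocking M (h t) f w →
      0 < P {ω | (∀ s ≤ t, X s ω = h s) ∧ Satisfies M (h t) (X (t + 1) ω) f w}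
  ratio : ∀ (t : ℕ) (h : ℕ → Matching n), 0 < P {ω | ∀ s ≤ t, X s ω = h s} →
    ¬ Stable M (h t) → ∀ f w f' w', Blocking M (h t) f w → Blocking M (h t) f' w' →
      P {ω | (∀ s ≤ t, X s ω = h s) ∧ Satisfies M (h t) (X (t + 1) ω) f w} ≤
        ENNReal.ofReal κ *
          P {ω | (∀ s ≤ t, X s ω = h s) ∧ Satisfies M (h t) (X (t + 1) ω) f' w'}
lemma matching_eq {μ ν : Matching n} (h : ∀ f, μ.mf f = ν.mf f) : μ = ν := by
  have hw : ∀ w, μ.mw w = ν.mw w := by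
    intro w
    cases hm : μ.mw w with
    | none =>
      cases hn : ν.mw w with
      | none => rfl
      | some f =>
        have h1 : μ.mf f = some w := by rw [h f]; exact (ν.consistent f w).mpr hn
        have := (μ.consistent f w).mp h1
        rw [hm] at this; exact absurd this (by simp)
    | some f =>
      have h1 : ν.mf f = some w := by rw [← h f]; exact (μ.consistent f w).mpr hm
      exact ((ν.consistent f w).mp h1).symm
  cases μ with | mk mf mw c => cases ν with | mk mf' mw' c' =>
    simp only [Matching.mk.injEq]
    exact ⟨funext h, funext hw⟩

/-- construct the matching obtained by satisfying (f,w) -/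
def satisfyM (μ : Matching n) (f w : Fin n) : Matching n where
  mf f' := if f' = f then some w else if μ.mw w = some f' then none else μ.mf f'
  mw w' := if w' = w then some f else if μ.mf f = some w' then none else μ.mw w'
  consistent f' w' := by
    rcases eq_or_ne f' f with rfl | hf
    · rcases eq_or_ne w' w with rfl | hw
      · simp
      · simp only [if_pos rfl, if_neg hw]
        constructor
        · intro h; exact absurd (Option.some.inj h).symm hw
        · intro h
          by_cases h2 : μ.mf f' = some w'
          · rw [if_pos h2] at h; exact absurd h (by simp)
          · rw [if_neg h2] at h; exact absurd ((μ.consistent f' w').mpr h) h2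
    · rcases eq_or_ne w' w with rfl | hw
      · simp only [if_pos rfl, if_neg hf]
        constructor
        · intro h
          by_cases h2 : μ.mw w' = some f'
          · rw [if_pos h2] at h; exact absurd h (by simp)
          · rw [if_neg h2] at h; exact absurd ((μ.consistent f' w').mp h) h2
        · intro h; exact absurd (Option.some.inj h).symm hf
      · simp only [if_neg hf, if_neg hw]
        by_cases h2 : μ.mw w = some f'
        · rw [if_pos h2]
          constructor
          · intro h; exact absurd h (by simp)
          · intro h
            by_cases h3 : μ.mf f = some w'
            · rw [if_pos h3] at h; exact absurd h (by simp)
            · rw [if_neg h3] at h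
              have hc1 : μ.mf f' = some w' := (μ.consistent f' w').mpr h
              have hc2 : μ.mf f' = some w := (μ.consistent f' w).mpr h2
              rw [hc1] at hc2
              exact absurd (Option.some.inj hc2) hw
        · rw [if_neg h2]
          by_cases h3 : μ.mf f = some w'
          · rw [if_pos h3]
            constructor
            · intro h
              have hc1 : μ.mw w' = some f' := (μ.consistent f' w').mp h
              have hc2 : μ.mw w' = some f := (μ.consistent f w').mp h3
              rw [hc1] at hc2
              exact absurd (Option.some.inj hc2) hf
            · intro h; exact absurd h (by simp)
          · rw [if_neg h3]; exact μ.consistent f' w'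
lemma satisfyM_satisfies (M : Market n) (μ : Matching n) {f w : Fin n} (hb : Blocking M μ f w) :
    Satisfies M μ (satisfyM μ f w) f w := by
  refine ⟨hb, by simp [satisfyM], ?_, ?_, ?_, ?_⟩
  · intro w' h
    have hne : w' ≠ w := fun e => hb.1 (e ▸ h)
    simp [satisfyM, if_neg hne, h]
  · intro f' h
    have hne : f' ≠ f := fun e => hb.1 ((μ.consistent f w).mpr (e ▸ h))
    simp [satisfyM, if_neg hne, h]
  · intro f' h1 h2; simp [satisfyM, if_neg h1, if_neg h2]
  · intro w' h1 h2; simp [satisfyM, if_neg h1, if_neg h2]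

lemma satisfies_unique {M : Market n} {μ ν₁ ν₂ : Matching n} {f w : Fin n}
    (h1 : Satisfies M μ ν₁ f w) (h2 : Satisfies M μ ν₂ f w) : ν₁ = ν₂ := by
  apply matching_eq
  intro f'
  rcases eq_or_ne f' f with rfl | hf
  · rw [h1.2.1, h2.2.1]
  · by_cases hw : μ.mw w = some f'
    · rw [h1.2.2.2.1 f' hw, h2.2.2.2.1 f' hw]
    · rw [h1.2.2.2.2.1 f' hf hw, h2.2.2.2.2.1 f' hf hw]

lemma satisfies_mw_w {M : Market n} {μ ν : Matching n} {f w : Fin n}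
    (hs : Satisfies M μ ν f w) : ν.mw w = some f :=
  (ν.consistent f w).mp hs.2.1

/-- after satisfying (f,w), any blocking pair of the new matching either involves one
of the two newly-single agents, or `f` (with a worker it prefers less than `w` that
already blocked), or `w` symmetrically, or was already a blocking pair. -/
lemma blocking_after {M : Market n} {μ ν : Matching n} {f w : Fin n}
    (hs : Satisfies M μ ν f w) {g x : Fin n} (hb : Blocking M ν g x) :
    μ.mw w = some g ∨ μ.mf f = some x ∨
    (g = f ∧ x ≠ w ∧ M.fpref f x < M.fpref f w ∧ Blocking M μ f x) ∨
    (g ≠ f ∧ x = w ∧ M.wpref w g < M.wpref w f ∧ Blocking M μ g w) ∨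
    (g ≠ f ∧ x ≠ w ∧ Blocking M μ g x) := by
  obtain ⟨hbl, hmf, hexw, hexf, hkf, hkw⟩ := hs
  by_cases hgw : μ.mw w = some g
  · exact Or.inl hgw
  by_cases hfx : μ.mf f = some x
  · exact Or.inr (Or.inl hfx)
  have hνw : ν.mw w = some f := (ν.consistent f w).mp hmf
  rcases eq_or_ne g f with rfl | hg
  · -- g = f
    have hx : x ≠ w := by rintro rfl; exact hb.1 hmf
    have hxm : ν.mw x = μ.mw x := hkw x hx hfx
    have hlt : M.fpref g x < M.fpref g w := hb.2.1 w (by rw [hmf]; rfl)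
    refine Or.inr (Or.inr (Or.inl ⟨rfl, hx, hlt, hfx, ?_, ?_⟩))
    · intro w'' hmem
      exact lt_trans hlt (hbl.2.1 w'' hmem)
    · rw [← hxm]; exact hb.2.2
  · have hgm : ν.mf g = μ.mf g := hkf g hg hgw
    rcases eq_or_ne x w with rfl | hx
    · -- x = w
      have hlt : M.wpref x g < M.wpref x f := hb.2.2 f (by rw [hνw]; rfl)
      refine Or.inr (Or.inr (Or.inr (Or.inl ⟨hg, rfl, hlt, ?_, ?_, ?_⟩)))
      · intro e; exact hgw ((μ.consistent g x).mp e)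
      · rw [← hgm]; exact hb.2.1
      · intro f'' hmem
        exact lt_trans hlt (hbl.2.2 f'' hmem)
    · have hxm : ν.mw x = μ.mw x := hkw x hx hfx
      refine Or.inr (Or.inr (Or.inr (Or.inr ⟨hg, hx, ?_, ?_, ?_⟩)))
      · rw [← hgm]; exact hb.1
      · rw [← hgm]; exact hb.2.1
      · rw [← hxm]; exact hb.2.2
def Reach (M : Market n) : Matching n → Matching n → Prop := Relation.ReflTransGen (StepRel M)

def Closed (μ : Matching n) (F W : Finset (Fin n)) : Prop :=
  (∀ f ∈ F, ∀ w, μ.mf f = some w → w ∈ W) ∧ (∀ w ∈ W, ∀ f, μ.mw w = some f → f ∈ F)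

def StableWithin (M : Market n) (μ : Matching n) (F W : Finset (Fin n)) : Prop :=
  ∀ f ∈ F, ∀ w ∈ W, ¬ Blocking M μ f w

def Wtop (M : Market n) (w : Fin n) : ℕ := (Finset.univ.sup (M.wpref w)) + 1

lemma wpref_lt_Wtop (M : Market n) (w f : Fin n) : M.wpref w f < Wtop M w :=
  Nat.lt_succ_of_le (Finset.le_sup (Finset.mem_univ f))

def wrank (M : Market n) (μ : Matching n) (w : Fin n) : ℕ :=
  match μ.mw w with
  | none => Wtop M w
  | some f => M.wpref w f

def Pot (M : Market n) (W : Finset (Fin n)) (μ : Matching n) : ℕ := ∑ w ∈ W, wrank M μ w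

/-- The firm-proposing chain lemma: if all blocking pairs within a closed pair of sets
involve the single firm `a`, then there is a path to a matching stable within, changing
nothing outside. -/
lemma chainF (M : Market n) (F W : Finset (Fin n)) :
    ∀ (k : ℕ) (μ : Matching n), Pot M W μ ≤ k →
    Closed μ F W →
    ∀ a, a ∈ F → μ.mf a = none →
    (∀ f ∈ F, ∀ w ∈ W, Blocking M μ f w → f = a) →
    ∃ ν, Reach M μ ν ∧ Closed ν F W ∧ StableWithin M ν F W ∧
      (∀ f, f ∉ F → ν.mf f = μ.mf f) ∧ (∀ w, w ∉ W → ν.mw w = μ.mw w) := by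
  intro k
  induction k with
  | zero =>
    intro μ hpot hcl a haF hanone hinv
    by_cases hstable : StableWithin M μ F W
    · exact ⟨μ, Relation.ReflTransGen.refl, hcl, hstable, fun _ _ => rfl, fun _ _ => rfl⟩
    · exfalso
      -- find a blocking pair within, leading to a potential decrease below 0: impossible
      simp only [StableWithin, not_forall, not_not] at hstable
      obtain ⟨f, hfF, w, hwW, hb⟩ := hstable
      have hfa : f = a := hinv f hfF w hwW hb
      subst hfa
      -- w has rank > 0 is not clear; instead: blocking means w prefers a, so wrank μ w > wpref w a ≥ 0
      have h1 : 0 < wrank M μ w := by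
        unfold wrank
        cases hmw : μ.mw w with
        | none => exact Nat.succ_pos _
        | some g => exact lt_of_le_of_lt (Nat.zero_le _) (hb.2.2 g (by rw [hmw]; rfl))
      have h2 : wrank M μ w ≤ Pot M W μ :=
        Finset.single_le_sum (fun i _ => Nat.zero_le _) hwW
      omega
  | succ k ih =>
    intro μ hpot hcl a haF hanone hinv
    by_cases hstable : StableWithin M μ F W
    · exact ⟨μ, Relation.ReflTransGen.refl, hcl, hstable, fun _ _ => rfl, fun _ _ => rfl⟩
    simp only [StableWithin, not_forall, not_not] at hstable
    obtain ⟨f, hfF, w, hwW, hb0⟩ := hstable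
    have hfa : f = a := hinv f hfF w hwW hb0
    subst hfa
    letI : DecidablePred (fun w => Blocking M μ f w) := fun _ => Classical.dec _
    set B : Finset (Fin n) := W.filter (fun w => Blocking M μ f w) with hB
    have hBne : B.Nonempty := ⟨w, Finset.mem_filter.mpr ⟨hwW, hb0⟩⟩
    obtain ⟨ws, hwsB, hmin⟩ := B.exists_min_image (M.fpref f) hBne
    have hwsW : ws ∈ W := (Finset.mem_filter.mp hwsB).1
    have hbws : Blocking M μ f ws := (Finset.mem_filter.mp hwsB).2
    set ν₁ := satisfyM μ f ws with hν₁
    have hs : Satisfies M μ ν₁ f ws := satisfyM_satisfies M μ hbws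
    have hstep : StepRel M μ ν₁ := ⟨f, ws, hs⟩
    have key : ∀ g ∈ F, ∀ x ∈ W, Blocking M ν₁ g x → μ.mw ws = some g := by
      intro g hgF x hxW hb
      rcases blocking_after hs hb with h | h | ⟨rfl, _, hlt, hbx⟩ | ⟨hg, rfl, _, hbx⟩ |
        ⟨hg, _, hbx⟩
      · exact h
      · rw [hanone] at h; cases h
      · exact absurd (hmin x (Finset.mem_filter.mpr ⟨hxW, hbx⟩)) (not_le.mpr hlt)
      · exact absurd (hinv g hgF x hwsW hbx) hg
      · exact absurd (hinv g hgF x hxW hbx) hg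
    -- facts about ν₁ outside
    have hof : ∀ f', f' ∉ F → ν₁.mf f' = μ.mf f' := by
      intro f' hf'
      have h1 : f' ≠ f := fun e => hf' (e ▸ haF)
      have h2 : μ.mw ws ≠ some f' := fun e => hf' (hcl.2 ws hwsW f' e)
      exact hs.2.2.2.2.1 f' h1 h2
    have how : ∀ w', w' ∉ W → ν₁.mw w' = μ.mw w' := by
      intro w' hw'
      have h1 : w' ≠ ws := fun e => hw' (e ▸ hwsW)
      have h2 : μ.mf f ≠ some w' := by rw [hanone]; simp
      exact hs.2.2.2.2.2 w' h1 h2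
    have hclν : Closed ν₁ F W := by
      constructor
      · intro g hgF x hx
        rcases eq_or_ne g f with rfl | hg
        · rw [hs.2.1] at hx; exact (Option.some.inj hx) ▸ hwsW
        · by_cases h2 : μ.mw ws = some g
          · rw [hs.2.2.2.1 g h2] at hx; cases hx
          · rw [hs.2.2.2.2.1 g hg h2] at hx; exact hcl.1 g hgF x hx
      · intro x hxW g hg
        rcases eq_or_ne x ws with rfl | hx
        · rw [satisfies_mw_w hs] at hg; exact (Option.some.inj hg) ▸ haF
        · have h2 : μ.mf f ≠ some x := by rw [hanone]; simp
          rw [hs.2.2.2.2.2 x hx h2] at hg; exact hcl.2 x hxW g hg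
    cases hg0 : μ.mw ws with
    | none =>
      refine ⟨ν₁, Relation.ReflTransGen.single hstep, hclν, ?_, hof, how⟩
      intro g hgF x hxW hb
      have := key g hgF x hxW hb
      rw [hg0] at this; cases this
    | some g0 =>
      have hg0F : g0 ∈ F := hcl.2 ws hwsW g0 hg0
      have hg0none : ν₁.mf g0 = none := hs.2.2.2.1 g0 hg0
      -- potential decreases
      have hpotlt : Pot M W ν₁ < Pot M W μ := by
        apply Finset.sum_lt_sum
        · intro i hi
          rcases eq_or_ne i ws with rfl | hi'
          · unfold wrank
            rw [satisfies_mw_w hs, hg0]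
            exact le_of_lt (hbws.2.2 g0 (by rw [hg0]; rfl))
          · have h2 : μ.mf f ≠ some i := by rw [hanone]; simp
            unfold wrank
            rw [hs.2.2.2.2.2 i hi' h2]
        · refine ⟨ws, hwsW, ?_⟩
          unfold wrank
          rw [satisfies_mw_w hs, hg0]
          exact hbws.2.2 g0 (by rw [hg0]; rfl)
      have hpot1 : Pot M W ν₁ ≤ k := by omega
      obtain ⟨ν, hreach, hclf, hstf, hoff, howf⟩ := ih ν₁ hpot1 hclν g0 hg0F hg0none
        (fun g hgF x hxW hb => by
          have := key g hgF x hxW hb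
          rw [hg0] at this; exact (Option.some.inj this).symm)
      exact ⟨ν, Relation.ReflTransGen.head hstep hreach, hclf, hstf,
        fun f' hf' => (hoff f' hf').trans (hof f' hf'),
        fun w' hw' => (howf w' hw').trans (how w' hw')⟩
def Market.dual (M : Market n) : Market n := ⟨M.wpref, M.fpref, M.wpref_inj, M.fpref_inj⟩

def Matching.dual (μ : Matching n) : Matching n :=
  ⟨μ.mw, μ.mf, fun w f => (μ.consistent f w).symm⟩

@[simp] lemma dual_dual (μ : Matching n) : μ.dual.dual = μ := rfl

lemma blocking_dual {M : Market n} {μ : Matching n} {f w : Fin n} :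
    Blocking M.dual μ.dual w f ↔ Blocking M μ f w := by
  constructor
  · rintro ⟨h1, h2, h3⟩
    exact ⟨fun e => h1 ((μ.consistent f w).mp e), h3, h2⟩
  · rintro ⟨h1, h2, h3⟩
    exact ⟨fun e => h1 ((μ.consistent f w).mpr e), h3, h2⟩

lemma satisfies_dual {M : Market n} {μ ν : Matching n} {f w : Fin n}
    (h : Satisfies M μ ν f w) : Satisfies M.dual μ.dual ν.dual w f := by
  obtain ⟨hb, h1, h2, h3, h4, h5⟩ := h
  exact ⟨blocking_dual.mpr hb, (ν.consistent f w).mp h1, h3, h2, h5, h4⟩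

lemma stepRel_dual {M : Market n} {μ ν : Matching n} (h : StepRel M μ ν) :
    StepRel M.dual μ.dual ν.dual := by
  obtain ⟨f, w, hs⟩ := h
  exact ⟨w, f, satisfies_dual hs⟩

lemma reach_dual {M : Market n} {μ ν : Matching n} (h : Reach M μ ν) :
    Reach M.dual μ.dual ν.dual :=
  h.lift Matching.dual (fun _ _ hr => stepRel_dual hr)

/-- The worker-proposing chain lemma (dual of `chainF`). -/
lemma chainW (M : Market n) (F W : Finset (Fin n)) (μ : Matching n)
    (hcl : Closed μ F W)
    (a : Fin n) (haW : a ∈ W) (hanone : μ.mw a = none)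
    (hinv : ∀ f ∈ F, ∀ w ∈ W, Blocking M μ f w → w = a) :
    ∃ ν, Reach M μ ν ∧ Closed ν F W ∧ StableWithin M ν F W ∧
      (∀ f, f ∉ F → ν.mf f = μ.mf f) ∧ (∀ w, w ∉ W → ν.mw w = μ.mw w) := by
  obtain ⟨ν', hreach, hclf, hstf, hof, how⟩ :=
    chainF M.dual W F (Pot M.dual F μ.dual) μ.dual le_rfl ⟨hcl.2, hcl.1⟩ a haW hanone
      (fun w hwW f hfF hb => hinv f hfF w hwW (blocking_dual.mp hb))
  refine ⟨ν'.dual, ?_, ⟨hclf.2, hclf.1⟩, ?_, how, hof⟩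
  · have := reach_dual hreach
    rwa [dual_dual] at this
  · intro f hfF w hwW hb
    exact hstf w hwW f hfF (blocking_dual.mpr hb)
lemma closed_satisfy {M : Market n} {μ ν : Matching n} {f w : Fin n} {F W : Finset (Fin n)}
    (hs : Satisfies M μ ν f w) (hf : f ∈ F) (hw : w ∈ W)
    (h1 : ∀ g ∈ F, g ≠ f → ∀ x, μ.mf g = some x → x ∈ W)
    (h2 : ∀ x ∈ W, x ≠ w → ∀ g, μ.mw x = some g → g ∈ F) : Closed ν F W := by
  constructor
  · intro g hg x hx
    rcases eq_or_ne g f with rfl | hgf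
    · rw [hs.2.1] at hx; exact Option.some.inj hx ▸ hw
    · by_cases h3 : μ.mw w = some g
      · rw [hs.2.2.2.1 g h3] at hx; cases hx
      · rw [hs.2.2.2.2.1 g hgf h3] at hx; exact h1 g hg hgf x hx
  · intro x hx g hg
    rcases eq_or_ne x w with rfl | hxw
    · rw [satisfies_mw_w hs] at hg; exact Option.some.inj hg ▸ hf
    · by_cases h3 : μ.mf f = some x
      · rw [hs.2.2.1 x h3] at hg; cases hg
      · rw [hs.2.2.2.2.2 x hxw h3] at hg; exact h2 x hx hxw g hg

lemma grow_firm (M : Market n) (F W : Finset (Fin n)) (μ : Matching n)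
    (hcl : Closed μ F W) (hst : StableWithin M μ F W) (f0 : Fin n) (hf0 : f0 ∉ F) :
    ∃ ν F' W', Reach M μ ν ∧ Closed ν F' W' ∧ StableWithin M ν F' W' ∧
      F.card + W.card < F'.card + W'.card := by
  have hcardF : (insert f0 F).card = F.card + 1 := Finset.card_insert_of_notMem hf0
  cases hy : μ.mf f0 with
  | none =>
    have hcl' : Closed μ (insert f0 F) W := by
      refine ⟨?_, fun w hw g hg => Finset.mem_insert_of_mem (hcl.2 w hw g hg)⟩
      intro f hf w hw
      rcases Finset.mem_insert.mp hf with rfl | hf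
      · rw [hy] at hw; cases hw
      · exact hcl.1 f hf w hw
    obtain ⟨ν, hreach, hclf, hstf, _, _⟩ :=
      chainF M (insert f0 F) W (Pot M W μ) μ le_rfl hcl' f0 (Finset.mem_insert_self f0 F) hy
        (fun f hf w hw hb => by
          rcases Finset.mem_insert.mp hf with rfl | hf
          · rfl
          · exact absurd hb (hst f hf w hw))
    exact ⟨ν, insert f0 F, W, hreach, hclf, hstf, by omega⟩
  | some y0 =>
    have hmy0 : μ.mw y0 = some f0 := (μ.consistent f0 y0).mp hy
    have hy0W : y0 ∉ W := fun h => hf0 (hcl.2 y0 h f0 hmy0)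
    have hcardW : (insert y0 W).card = W.card + 1 := Finset.card_insert_of_notMem hy0W
    set F' := insert f0 F with hF'
    set W' := insert y0 W with hW'
    have hf0F' : f0 ∈ F' := Finset.mem_insert_self f0 F
    have hy0W' : y0 ∈ W' := Finset.mem_insert_self y0 W
    by_cases hbf : ∃ w ∈ W, Blocking M μ f0 w
    · -- the new firm f0 has a blocking partner among the old workers
      letI : DecidablePred (fun w => Blocking M μ f0 w) := fun _ => Classical.dec _
      obtain ⟨ws, hwsB, hmin⟩ := (W.filter (fun w => Blocking M μ f0 w)).exists_min_image
        (M.fpref f0) (by obtain ⟨w, hw, hb⟩ := hbf; exact ⟨w, Finset.mem_filter.mpr ⟨hw, hb⟩⟩)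
      have hwsW : ws ∈ W := (Finset.mem_filter.mp hwsB).1
      have hbws : Blocking M μ f0 ws := (Finset.mem_filter.mp hwsB).2
      set ν₁ := satisfyM μ f0 ws with hν₁def
      have hs : Satisfies M μ ν₁ f0 ws := satisfyM_satisfies M μ hbws
      have hstep : StepRel M μ ν₁ := ⟨f0, ws, hs⟩
      have hν₁y0 : ν₁.mw y0 = none := hs.2.2.1 y0 hy
      have key : ∀ g ∈ F', ∀ x ∈ W', Blocking M ν₁ g x → μ.mw ws = some g ∨ x = y0 := by
        intro g hg x hx hb
        rcases blocking_after hs hb with h | h | ⟨rfl, hxne, hlt, hbx⟩ | ⟨hgne, _, _, hbx⟩ |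
          ⟨hgne, hxne, hbx⟩
        · exact Or.inl h
        · rw [hy] at h; exact Or.inr (Option.some.inj h).symm
        · rcases Finset.mem_insert.mp hx with rfl | hxW
          · exact absurd hy hbx.1
          · exact absurd (hmin x (Finset.mem_filter.mpr ⟨hxW, hbx⟩)) (not_le.mpr hlt)
        · rcases Finset.mem_insert.mp hg with rfl | hgF
          · exact absurd rfl hgne
          · exact absurd hbx (hst g hgF ws hwsW)
        · rcases Finset.mem_insert.mp hg with rfl | hgF
          · exact absurd rfl hgne
          · rcases Finset.mem_insert.mp hx with rfl | hxW
            · exact Or.inr rfl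
            · exact absurd hbx (hst g hgF x hxW)
      cases hg0 : μ.mw ws with
      | none =>
        -- only the newly single worker y0 can be in blocking pairs: one worker chain
        have hclν : Closed ν₁ F' W' := by
          refine closed_satisfy hs hf0F' (Finset.mem_insert_of_mem hwsW) ?_ ?_
          · intro g hg hgf x hx
            rcases Finset.mem_insert.mp hg with rfl | hgF
            · exact absurd rfl hgf
            · exact Finset.mem_insert_of_mem (hcl.1 g hgF x hx)
          · intro x hx hxws g hg
            rcases Finset.mem_insert.mp hx with rfl | hxW
            · rw [hmy0] at hg; exact Option.some.inj hg ▸ hf0F'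
            · exact Finset.mem_insert_of_mem (hcl.2 x hxW g hg)
        obtain ⟨ν, hreach, hclf, hstf, _, _⟩ := chainW M F' W' ν₁ hclν y0 hy0W' hν₁y0
          (fun f hf w hw hb => by
            rcases key f hf w hw hb with h | h
            · rw [hg0] at h; cases h
            · exact h)
        exact ⟨ν, F', W', Relation.ReflTransGen.head hstep hreach, hclf, hstf, by omega⟩
      | some g0 =>
        have hg0F : g0 ∈ F := hcl.2 ws hwsW g0 hg0
        have hg0none : ν₁.mf g0 = none := hs.2.2.2.1 g0 hg0
        -- stage A : firm chain from g0 within (F', W)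
        have hclA : Closed ν₁ F' W := by
          refine closed_satisfy hs hf0F' hwsW ?_ ?_
          · intro g hg hgf x hx
            rcases Finset.mem_insert.mp hg with rfl | hgF
            · exact absurd rfl hgf
            · exact hcl.1 g hgF x hx
          · intro x hx _ g hg
            exact Finset.mem_insert_of_mem (hcl.2 x hx g hg)
        obtain ⟨ν₂, hreach2, hcl2, hst2, _, hout2⟩ :=
          chainF M F' W (Pot M W ν₁) ν₁ le_rfl hclA g0 (Finset.mem_insert_of_mem hg0F) hg0none
            (fun f hf w hw hb => by
              rcases key f hf w (Finset.mem_insert_of_mem hw) hb with h | h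
              · rw [hg0] at h; exact (Option.some.inj h).symm
              · exact absurd (h ▸ hw) hy0W)
        have hν₂y0 : ν₂.mw y0 = none := (hout2 y0 hy0W).trans hν₁y0
        -- stage B : worker chain from y0 within (F', W')
        have hclB : Closed ν₂ F' W' := by
          refine ⟨fun f hf w hw => Finset.mem_insert_of_mem (hcl2.1 f hf w hw), ?_⟩
          intro w hw g hg
          rcases Finset.mem_insert.mp hw with rfl | hwW
          · rw [hν₂y0] at hg; cases hg
          · exact hcl2.2 w hwW g hg
        obtain ⟨ν₃, hreach3, hcl3, hst3, _, _⟩ := chainW M F' W' ν₂ hclB y0 hy0W' hν₂y0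
          (fun f hf w hw hb => by
            rcases Finset.mem_insert.mp hw with rfl | hwW
            · rfl
            · exact absurd hb (hst2 f hf w hwW))
        exact ⟨ν₃, F', W', Relation.ReflTransGen.head hstep (hreach2.trans hreach3),
          hcl3, hst3, by omega⟩
    · by_cases hby : ∃ g ∈ F, Blocking M μ g y0
      · -- the new worker y0 has a blocking partner among the old firms
        letI : DecidablePred (fun g => Blocking M μ g y0) := fun _ => Classical.dec _
        obtain ⟨gs, hgsB, hmin⟩ := (F.filter (fun g => Blocking M μ g y0)).exists_min_image
          (M.wpref y0) (by obtain ⟨g, hg, hb⟩ := hby; exact ⟨g, Finset.mem_filter.mpr ⟨hg, hb⟩⟩)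
        have hgsF : gs ∈ F := (Finset.mem_filter.mp hgsB).1
        have hbgs : Blocking M μ gs y0 := (Finset.mem_filter.mp hgsB).2
        set ν₁ := satisfyM μ gs y0 with hν₁def
        have hs : Satisfies M μ ν₁ gs y0 := satisfyM_satisfies M μ hbgs
        have hstep : StepRel M μ ν₁ := ⟨gs, y0, hs⟩
        have hν₁f0 : ν₁.mf f0 = none := hs.2.2.2.1 f0 hmy0
        have key : ∀ g ∈ F', ∀ x ∈ W', Blocking M ν₁ g x → g = f0 ∨ μ.mf gs = some x := by
          intro g hg x hx hb
          rcases blocking_after hs hb with h | h | ⟨_, hxne, _, hbx⟩ | ⟨hgne, _, hlt, hbx⟩ |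
            ⟨hgne, hxne, hbx⟩
          · rw [hmy0] at h; exact Or.inl (Option.some.inj h).symm
          · exact Or.inr h
          · rcases Finset.mem_insert.mp hx with rfl | hxW
            · exact absurd rfl hxne
            · exact absurd hbx (hst gs hgsF x hxW)
          · rcases Finset.mem_insert.mp hg with rfl | hgF
            · exact Or.inl rfl
            · exact absurd (hmin g (Finset.mem_filter.mpr ⟨hgF, hbx⟩)) (not_le.mpr hlt)
          · rcases Finset.mem_insert.mp hg with rfl | hgF
            · exact Or.inl rfl
            · rcases Finset.mem_insert.mp hx with rfl | hxW
              · exact absurd rfl hxne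
              · exact absurd hbx (hst g hgF x hxW)
        cases hw0 : μ.mf gs with
        | none =>
          have hclν : Closed ν₁ F' W' := by
            refine closed_satisfy hs (Finset.mem_insert_of_mem hgsF) hy0W' ?_ ?_
            · intro g hg hgf x hx
              rcases Finset.mem_insert.mp hg with rfl | hgF
              · rw [hy] at hx; exact Option.some.inj hx ▸ hy0W'
              · exact Finset.mem_insert_of_mem (hcl.1 g hgF x hx)
            · intro x hx hxy g hg
              rcases Finset.mem_insert.mp hx with rfl | hxW
              · exact absurd rfl hxy
              · exact Finset.mem_insert_of_mem (hcl.2 x hxW g hg)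
          obtain ⟨ν, hreach, hclf, hstf, _, _⟩ :=
            chainF M F' W' (Pot M W' ν₁) ν₁ le_rfl hclν f0 hf0F' hν₁f0
              (fun f hf w hw hb => by
                rcases key f hf w hw hb with h | h
                · exact h
                · rw [hw0] at h; cases h)
          exact ⟨ν, F', W', Relation.ReflTransGen.head hstep hreach, hclf, hstf, by omega⟩
        | some w0 =>
          have hw0W : w0 ∈ W := hcl.1 gs hgsF w0 hw0
          have hν₁w0 : ν₁.mw w0 = none := hs.2.2.1 w0 hw0
          -- stage A : worker chain from w0 within (F, W')
          have hclA : Closed ν₁ F W' := by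
            refine closed_satisfy hs hgsF hy0W' ?_ ?_
            · intro g hg _ x hx
              exact Finset.mem_insert_of_mem (hcl.1 g hg x hx)
            · intro x hx hxy g hg
              rcases Finset.mem_insert.mp hx with rfl | hxW
              · exact absurd rfl hxy
              · exact hcl.2 x hxW g hg
          obtain ⟨ν₂, hreach2, hcl2, hst2, hout2, _⟩ :=
            chainW M F W' ν₁ hclA w0 (Finset.mem_insert_of_mem hw0W) hν₁w0
              (fun f hf w hw hb => by
                rcases key f (Finset.mem_insert_of_mem hf) w hw hb with h | h
                · exact absurd (h ▸ hf) hf0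
                · rw [hw0] at h; exact (Option.some.inj h).symm)
          have hν₂f0 : ν₂.mf f0 = none := (hout2 f0 hf0).trans hν₁f0
          -- stage B : firm chain from f0 within (F', W')
          have hclB : Closed ν₂ F' W' := by
            refine ⟨?_, fun w hw g hg => Finset.mem_insert_of_mem (hcl2.2 w hw g hg)⟩
            intro f hf w hw
            rcases Finset.mem_insert.mp hf with rfl | hfF
            · rw [hν₂f0] at hw; cases hw
            · exact hcl2.1 f hfF w hw
          obtain ⟨ν₃, hreach3, hcl3, hst3, _, _⟩ :=
            chainF M F' W' (Pot M W' ν₂) ν₂ le_rfl hclB f0 hf0F' hν₂f0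
              (fun f hf w hw hb => by
                rcases Finset.mem_insert.mp hf with rfl | hfF
                · rfl
                · exact absurd hb (hst2 f hfF w hw))
          exact ⟨ν₃, F', W', Relation.ReflTransGen.head hstep (hreach2.trans hreach3),
            hcl3, hst3, by omega⟩
      · -- no blocking pairs at all involve the new pair : done immediately
        refine ⟨μ, F', W', Relation.ReflTransGen.refl, ?_, ?_, by omega⟩
        · constructor
          · intro f hf w hw
            rcases Finset.mem_insert.mp hf with rfl | hfF
            · rw [hy] at hw; exact Option.some.inj hw ▸ hy0W'
            · exact Finset.mem_insert_of_mem (hcl.1 f hfF w hw)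
          · intro w hw g hg
            rcases Finset.mem_insert.mp hw with rfl | hwW
            · rw [hmy0] at hg; exact Option.some.inj hg ▸ hf0F'
            · exact Finset.mem_insert_of_mem (hcl.2 w hwW g hg)
        · intro f hf w hw hb
          rcases Finset.mem_insert.mp hf with rfl | hfF
          · rcases Finset.mem_insert.mp hw with rfl | hwW
            · exact hb.1 hy
            · exact hbf ⟨w, hwW, hb⟩
          · rcases Finset.mem_insert.mp hw with rfl | hwW
            · exact hby ⟨f, hfF, hb⟩
            · exact hst f hfF w hwW hb
lemma grow_worker (M : Market n) (F W : Finset (Fin n)) (μ : Matching n)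
    (hcl : Closed μ F W) (hst : StableWithin M μ F W) (w0 : Fin n) (hw0 : w0 ∉ W) :
    ∃ ν F' W', Reach M μ ν ∧ Closed ν F' W' ∧ StableWithin M ν F' W' ∧
      F.card + W.card < F'.card + W'.card := by
  obtain ⟨ν', W₁, F₁, hreach, hclf, hstf, hcard⟩ :=
    grow_firm M.dual W F μ.dual ⟨hcl.2, hcl.1⟩
      (fun w hw f hf hb => hst f hf w hw (blocking_dual.mp hb)) w0 hw0
  refine ⟨ν'.dual, F₁, W₁, ?_, ⟨hclf.2, hclf.1⟩, ?_, by omega⟩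
  · have := reach_dual hreach
    rwa [dual_dual] at this
  · intro f hf w hw hb
    exact hstf w hw f hf (blocking_dual.mpr hb)

lemma reach_stable_aux (M : Market n) : ∀ (m : ℕ) (F W : Finset (Fin n)) (μ : Matching n),
    2 * n ≤ F.card + W.card + m → Closed μ F W → StableWithin M μ F W →
    ∃ ν, Reach M μ ν ∧ Stable M ν := by
  intro m
  induction m with
  | zero =>
    intro F W μ hcard hcl hst
    have h1 : F.card ≤ n := by simpa using F.card_le_univ
    have h2 : W.card ≤ n := by simpa using W.card_le_univ
    have hF : F = Finset.univ := Finset.eq_univ_of_card F (by simp; omega)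
    have hW : W = Finset.univ := Finset.eq_univ_of_card W (by simp; omega)
    subst hF; subst hW
    exact ⟨μ, Relation.ReflTransGen.refl,
      fun f w => hst f (Finset.mem_univ f) w (Finset.mem_univ w)⟩
  | succ m ih =>
    intro F W μ hcard hcl hst
    by_cases hF : F = Finset.univ
    · by_cases hW : W = Finset.univ
      · subst hF; subst hW
        exact ⟨μ, Relation.ReflTransGen.refl,
          fun f w => hst f (Finset.mem_univ f) w (Finset.mem_univ w)⟩
      · have : ∃ w0, w0 ∉ W := by
          by_contra h; push_neg at h; exact hW (Finset.eq_univ_iff_forall.mpr h)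
        obtain ⟨w0, hw0⟩ := this
        obtain ⟨ν, F', W', hreach, hcl', hst', hcard'⟩ := grow_worker M F W μ hcl hst w0 hw0
        obtain ⟨ν', hreach', hstable⟩ := ih F' W' ν (by omega) hcl' hst'
        exact ⟨ν', hreach.trans hreach', hstable⟩
    · have : ∃ f0, f0 ∉ F := by
        by_contra h; push_neg at h; exact hF (Finset.eq_univ_iff_forall.mpr h)
      obtain ⟨f0, hf0⟩ := this
      obtain ⟨ν, F', W', hreach, hcl', hst', hcard'⟩ := grow_firm M F W μ hcl hst f0 hf0
      obtain ⟨ν', hreach', hstable⟩ := ih F' W' ν (by omega) hcl' hst'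
      exact ⟨ν', hreach.trans hreach', hstable⟩

theorem exists_reach_stable (M : Market n) (μ : Matching n) :
    ∃ ν, Reach M μ ν ∧ Stable M ν := by
  refine reach_stable_aux M (2 * n) ∅ ∅ μ (by simp) ⟨?_, ?_⟩ ?_ <;> simp [StableWithin]
lemma reach_exists_seq {M : Market n} {μ ν : Matching n} (h : Reach M μ ν) :
    ∃ (k : ℕ) (g : ℕ → Matching n), g 0 = μ ∧ g k = ν ∧ ∀ i < k, StepRel M (g i) (g (i+1)) := by
  induction h with
  | refl => exact ⟨0, fun _ => μ, rfl, rfl, by omega⟩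
  | @tail b c _ hstep ih =>
    obtain ⟨k, g, h0, hk, hs⟩ := ih
    refine ⟨k+1, fun i => if i ≤ k then g i else c, by simp [h0], by simp, ?_⟩
    intro i hi
    rcases Nat.lt_or_ge i k with hik | hik
    · simpa [Nat.le_of_lt hik, Nat.succ_le_of_lt hik] using hs i hik
    · have : i = k := by omega
      subst this
      simpa [hk, show ¬ (i+1 ≤ i) by omega] using hstep

instance : Finite (Matching n) := by
  apply Finite.of_injective (fun μ : Matching n => (μ.mf, μ.mw))
  intro μ ν h
  simp only [Prod.mk.injEq] at h
  exact matching_eq (fun f => congrFun h.1 f)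

noncomputable instance : Fintype (Matching n) := Fintype.ofFinite _

lemma exists_uniform_bound (M : Market n) : ∃ N : ℕ, ∀ μ : Matching n, ∃ k ≤ N,
    ∃ g : ℕ → Matching n, g 0 = μ ∧ Stable M (g k) ∧ ∀ i < k, StepRel M (g i) (g (i+1)) := by
  classical
  choose ν hreach hstable using fun μ => exists_reach_stable M μ
  choose k g h0 hk hs using fun μ => reach_exists_seq (hreach μ)
  refine ⟨Finset.univ.sup k, fun μ =>
    ⟨k μ, Finset.le_sup (Finset.mem_univ μ), g μ, h0 μ, ?_, hs μ⟩⟩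
  rw [hk μ]; exact hstable μ
set_option linter.unusedSectionVars false
section Prob

open MeasureTheory
open scoped ENNReal

variable {Ω : Type*} [MeasurableSpace Ω] {P : Measure Ω}
variable {M : Market n} {κ : ℝ} {X : ℕ → Ω → Matching n} {lam0 : Matching n}

/-- the cylinder event prescribing the history up to time `t` -/
def Cyl (X : ℕ → Ω → Matching n) (t : ℕ) (h : ℕ → Matching n) : Set Ω :=
  {ω | ∀ s ≤ t, X s ω = h s}

lemma measurableSet_matching (A : Set (Matching n)) : MeasurableSet[⊤] A :=
  MeasurableSpace.measurableSet_top

lemma cyl_eq (X : ℕ → Ω → Matching n) (t : ℕ) (h : ℕ → Matching n) :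
    Cyl X t h = ⋂ s ∈ Finset.range (t+1), (X s)⁻¹' {h s} := by
  ext ω; simp [Cyl, Nat.lt_succ_iff]

lemma measurableSet_cyl (hX : ∀ t, Measurable (X t)) (t : ℕ) (h : ℕ → Matching n) :
    MeasurableSet (Cyl X t h) := by
  rw [cyl_eq]
  exact Finset.measurableSet_biInter _ (fun s _ => hX s (measurableSet_matching _))

lemma cyl_congr {t : ℕ} {h1 h2 : ℕ → Matching n} (h : ∀ s ≤ t, h1 s = h2 s) :
    Cyl X t h1 = Cyl X t h2 := by
  ext ω
  constructor <;> intro hω s hs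
  · rw [← h s hs]; exact hω s hs
  · rw [h s hs]; exact hω s hs

lemma step_bound (hX : IsKRandomDynamics M κ P X lam0) (t : ℕ) (h : ℕ → Matching n)
    (hpos : 0 < P (Cyl X t h)) {ν : Matching n} {f w : Fin n}
    (hs : Satisfies M (h t) ν f w) :
    P (Cyl X t h) ≤ ((n^2 : ℝ≥0∞) * ENNReal.ofReal κ) *
      P (Cyl X (t+1) (fun s => if s ≤ t then h s else ν)) := by
  classical
  set K := ENNReal.ofReal κ with hK
  have hunst : ¬ Stable M (h t) := fun hst => hst f w hs.1
  set E : Fin n × Fin n → Set Ω := fun p =>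
    {ω | (∀ s ≤ t, X s ω = h s) ∧ Satisfies M (h t) (X (t + 1) ω) p.1 p.2} with hE
  have hcov : Cyl X t h ≤ᵐ[P] ⋃ p, E p := by
    filter_upwards [hX.unstable_step] with ω hω hmem
    have hXt : X t ω = h t := hmem t le_rfl
    obtain ⟨f', w', hs'⟩ := hω t (by rw [hXt]; exact hunst)
    rw [hXt] at hs'
    exact Set.mem_iUnion.mpr ⟨(f', w'), hmem, hs'⟩
  have h1 : P (Cyl X t h) ≤ ∑ p : Fin n × Fin n, P (E p) := by
    calc P (Cyl X t h) ≤ P (⋃ p, E p) := measure_mono_ae hcov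
    _ ≤ ∑' p, P (E p) := measure_iUnion_le E
    _ = ∑ p, P (E p) := tsum_fintype _
  have h2 : ∀ p : Fin n × Fin n, P (E p) ≤ K * P (E (f, w)) := by
    intro p
    by_cases hb : Blocking M (h t) p.1 p.2
    · exact hX.ratio t h hpos hunst p.1 p.2 f w hb hs.1
    · have he : E p = ∅ := Set.eq_empty_iff_forall_notMem.mpr fun ω hω => hb hω.2.1
      rw [he]; simp
  have h3 : P (E (f, w)) ≤ P (Cyl X (t+1) (fun s => if s ≤ t then h s else ν)) := by
    apply measure_mono
    rintro ω ⟨hhist, hsat⟩ s hs'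
    rcases Nat.lt_or_ge s (t+1) with hlt | hge
    · have hst : s ≤ t := by omega
      simp only [if_pos hst]
      exact hhist s hst
    · have hseq : s = t + 1 := by omega
      subst hseq
      have e : X (t+1) ω = ν := satisfies_unique hsat hs
      simp only [show ¬ (t+1 ≤ t) by omega, if_false]
      exact e
  calc P (Cyl X t h) ≤ ∑ p : Fin n × Fin n, P (E p) := h1
    _ ≤ (Finset.univ : Finset (Fin n × Fin n)).card • (K * P (E (f, w))) :=
        Finset.sum_le_card_nsmul _ _ _ (fun p _ => h2 p)
    _ = ((n^2 : ℝ≥0∞)) * (K * P (E (f, w))) := by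
        simp [nsmul_eq_mul, Finset.card_univ]; ring_nf
    _ ≤ (n^2 : ℝ≥0∞) * (K * P (Cyl X (t+1) (fun s => if s ≤ t then h s else ν))) := by
        gcongr
    _ = ((n^2 : ℝ≥0∞) * K) * P (Cyl X (t+1) (fun s => if s ≤ t then h s else ν)) := by
        ring

lemma path_bound (hX : IsKRandomDynamics M κ P X lam0) (t : ℕ) (h : ℕ → Matching n)
    (hpos : 0 < P (Cyl X t h)) (k : ℕ) (g : ℕ → Matching n)
    (h0 : g 0 = h t) (hsteps : ∀ i < k, StepRel M (g i) (g (i+1))) :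
    P (Cyl X t h) ≤ ((n^2 : ℝ≥0∞) * ENNReal.ofReal κ) ^ k *
      P (Cyl X (t+k) (fun s => if s ≤ t then h s else g (s - t))) := by
  induction k with
  | zero =>
    have he : Cyl X (t+0) (fun s => if s ≤ t then h s else g (s - t)) = Cyl X t h :=
      cyl_congr (fun s hs => if_pos (show s ≤ t from by omega))
    rw [he]; simpa using le_rfl
  | succ k ih =>
    set D := (n^2 : ℝ≥0∞) * ENNReal.ofReal κ with hD
    have hDne : D ≠ ⊤ :=
      ENNReal.mul_ne_top (ENNReal.pow_ne_top (ENNReal.natCast_ne_top n)) ENNReal.ofReal_ne_top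
    set hk : ℕ → Matching n := fun s => if s ≤ t then h s else g (s - t) with hhk
    have ihb := ih (fun i hi => hsteps i (by omega))
    have hpos2 : 0 < P (Cyl X (t+k) hk) := by
      by_contra hc
      push_neg at hc
      have : P (Cyl X (t+k) hk) = 0 := le_antisymm hc zero_le
      rw [this, mul_zero] at ihb
      exact absurd (le_antisymm ihb zero_le) (ne_of_gt hpos)
    have hgk : hk (t+k) = g k := by
      rcases Nat.eq_zero_or_pos k with rfl | hkpos
      · simp [hhk, h0]
      · simp [hhk, show ¬ (t + k ≤ t) by omega]
    obtain ⟨f, w, hsat⟩ := hsteps k (by omega)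
    rw [← hgk] at hsat
    have hsb := step_bound hX (t+k) hk hpos2 hsat
    have hce : Cyl X (t+k+1) (fun s => if s ≤ t+k then hk s else g (k+1)) =
        Cyl X (t+(k+1)) (fun s => if s ≤ t then h s else g (s - t)) := by
      rw [show t + k + 1 = t + (k+1) by omega]
      apply cyl_congr
      intro s hs
      by_cases h1 : s ≤ t + k
      · simp only [if_pos h1, hhk]
      · have hs1 : s = t + k + 1 := by omega
        simp only [if_neg h1, hhk, if_neg (show ¬ s ≤ t by omega)]
        rw [hs1]
        congr 1
        omega
    rw [hce] at hsb
    calc P (Cyl X t h) ≤ D ^ k * P (Cyl X (t+k) hk) := ihb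
      _ ≤ D ^ k * (D * P (Cyl X (t+(k+1)) (fun s => if s ≤ t then h s else g (s - t)))) := by
          gcongr
      _ = D ^ (k+1) * P (Cyl X (t+(k+1)) (fun s => if s ≤ t then h s else g (s - t))) := by
          rw [pow_succ]; ring

end Prob
section Final

open MeasureTheory
open scoped ENNReal

variable {Ω : Type*} [MeasurableSpace Ω] {P : Measure Ω}
variable {M : Market n} {κ : ℝ} {X : ℕ → Ω → Matching n} {lam0 : Matching n}

/-- the event that no stable matching has been seen up to time `t` -/
def Bad (M : Market n) (X : ℕ → Ω → Matching n) (t : ℕ) : Set Ω :=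
  {ω | ∀ s ≤ t, ¬ Stable M (X s ω)}

lemma measurableSet_bad (hX : ∀ t, Measurable (X t)) (t : ℕ) :
    MeasurableSet (Bad M X t) := by
  have he : Bad M X t = ⋂ s ∈ Finset.range (t+1), (X s)⁻¹' {μ | ¬ Stable M μ} := by
    ext ω; simp [Bad, Nat.lt_succ_iff]
  rw [he]
  exact Finset.measurableSet_biInter _ (fun s _ => hX s (measurableSet_matching _))

lemma contraction [IsProbabilityMeasure P] (hX : IsKRandomDynamics M κ P X lam0)
    (hκ : 1 ≤ κ) (hn : 0 < n) (N : ℕ)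
    (hN : ∀ μ : Matching n, ∃ k ≤ N, ∃ g : ℕ → Matching n, g 0 = μ ∧ Stable M (g k) ∧
      ∀ i < k, StepRel M (g i) (g (i+1))) (t : ℕ) :
    P (Bad M X (t+N)) + (((n^2 : ℝ≥0∞) * ENNReal.ofReal κ)⁻¹) ^ N * P (Bad M X t)
      ≤ P (Bad M X t) := by
  classical
  set D : ℝ≥0∞ := (n^2 : ℝ≥0∞) * ENNReal.ofReal κ with hD
  set ε : ℝ≥0∞ := D⁻¹ ^ N with hε
  have hDne : D ≠ ⊤ :=
    ENNReal.mul_ne_top (ENNReal.pow_ne_top (ENNReal.natCast_ne_top n)) ENNReal.ofReal_ne_top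
  have hD0 : D ≠ 0 := by
    apply mul_ne_zero
    · exact pow_ne_zero 2 (Nat.cast_ne_zero.mpr (by omega))
    · simp only [ne_eq, ENNReal.ofReal_eq_zero, not_le]
      linarith
  have hD1 : (1 : ℝ≥0∞) ≤ D := by
    have h1 : (1:ℝ≥0∞) ≤ (n:ℝ≥0∞)^2 := one_le_pow_of_one_le' (by exact_mod_cast hn) 2
    have h2 : (1:ℝ≥0∞) ≤ ENNReal.ofReal κ := by
      rw [← ENNReal.ofReal_one]
      exact ENNReal.ofReal_le_ofReal hκ
    calc (1:ℝ≥0∞) = 1 * 1 := (one_mul 1).symm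
      _ ≤ D := mul_le_mul' h1 h2
  -- decompose Bad t into cylinders
  set ext : (Fin (t+1) → Matching n) → ℕ → Matching n := fun v s =>
    if hs : s ≤ t then v ⟨s, by omega⟩ else v ⟨t, by omega⟩ with hext
  letI : DecidablePred (fun v : Fin (t+1) → Matching n => ∀ i, ¬ Stable M (v i)) :=
    fun _ => Classical.dec _
  set V : Finset (Fin (t+1) → Matching n) :=
    Finset.univ.filter (fun v => ∀ i, ¬ Stable M (v i)) with hV
  have hBt : Bad M X t = ⋃ v ∈ V, Cyl X t (ext v) := by
    ext ω
    constructor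
    · intro hω
      refine Set.mem_biUnion (show (fun i : Fin (t+1) => X i ω) ∈ V from ?_) ?_
      · exact Finset.mem_filter.mpr ⟨Finset.mem_univ _,
          fun i => hω i (Nat.lt_succ_iff.mp i.isLt)⟩
      · intro s hs
        simp only [hext, dif_pos hs]
    · intro hω
      obtain ⟨v, hvV, hωv⟩ := Set.mem_iUnion₂.mp hω
      intro s hs
      have := hωv s hs
      rw [this]
      simp only [hext, dif_pos hs]
      exact (Finset.mem_filter.mp hvV).2 _
  have hdisj : (V : Set (Fin (t+1) → Matching n)).PairwiseDisjoint
      (fun v => Cyl X t (ext v)) := by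
    intro v _ v' _ hne
    apply Set.disjoint_left.mpr
    intro ω hω hω'
    apply hne
    funext i
    have h1 := hω i.val (Nat.lt_succ_iff.mp i.isLt)
    have h2 := hω' i.val (Nat.lt_succ_iff.mp i.isLt)
    rw [h1] at h2
    simpa [hext, dif_pos (Nat.lt_succ_iff.mp i.isLt)] using h2
  have hsum : P (Bad M X t) = ∑ v ∈ V, P (Cyl X t (ext v)) := by
    rw [hBt]
    exact measure_biUnion_finset hdisj (fun v _ => measurableSet_cyl hX.measurable t _)
  -- the per-history estimate
  have hperv : ∀ v ∈ V, P (Bad M X (t+N) ∩ Cyl X t (ext v)) + ε * P (Cyl X t (ext v))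
      ≤ P (Cyl X t (ext v)) := by
    intro v hvV
    by_cases hz : P (Cyl X t (ext v)) = 0
    · have h1 : P (Bad M X (t+N) ∩ Cyl X t (ext v)) = 0 :=
        measure_mono_null Set.inter_subset_right hz
      rw [h1, hz, mul_zero, add_zero]
    · have hpos : 0 < P (Cyl X t (ext v)) := pos_iff_ne_zero.mpr hz
      set h : ℕ → Matching n := ext v with hh
      obtain ⟨k, hkN, g, hg0, hgst, hgsteps⟩ := hN (h t)
      have hpb := path_bound hX t h hpos k g hg0 hgsteps
      set C' := Cyl X (t+k) (fun s => if s ≤ t then h s else g (s - t)) with hC'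
      have hεle : ε * P (Cyl X t h) ≤ P C' := by
        have e1 : ε ≤ D⁻¹ ^ k :=
          pow_le_pow_of_le_one zero_le (ENNReal.inv_le_one.mpr hD1) hkN
        calc ε * P (Cyl X t h) ≤ D⁻¹ ^ k * P (Cyl X t h) := by gcongr
          _ ≤ D⁻¹ ^ k * (D ^ k * P C') := by gcongr
          _ = (D⁻¹ * D) ^ k * P C' := by rw [mul_pow]; ring
          _ = P C' := by rw [ENNReal.inv_mul_cancel hD0 hDne, one_pow, one_mul]
      have hsub : C' ⊆ Cyl X t h := by
        intro ω hω s hs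
        have h1 : X s ω = if s ≤ t then h s else g (s - t) := hω s (by omega)
        rwa [if_pos hs] at h1
      have hdisj2 : Disjoint (Bad M X (t+N) ∩ Cyl X t h) C' := by
        apply Set.disjoint_left.mpr
        rintro ω ⟨hbad, _⟩ hC
        have h1 : X (t+k) ω = if t+k ≤ t then h (t+k) else g (t+k-t) := hC (t+k) le_rfl
        have h2 : (if t+k ≤ t then h (t+k) else g (t+k-t)) = g k := by
          rcases Nat.eq_zero_or_pos k with rfl | hk
          · simp [hg0]
          · rw [if_neg (show ¬ (t + k ≤ t) by omega)]
            congr 1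
            omega
        rw [h2] at h1
        exact hbad (t+k) (by omega) (h1 ▸ hgst)
      calc P (Bad M X (t+N) ∩ Cyl X t h) + ε * P (Cyl X t h)
          ≤ P (Bad M X (t+N) ∩ Cyl X t h) + P C' := by gcongr
        _ = P ((Bad M X (t+N) ∩ Cyl X t h) ∪ C') :=
            (measure_union hdisj2 (measurableSet_cyl hX.measurable _ _)).symm
        _ ≤ P (Cyl X t h) := measure_mono (Set.union_subset Set.inter_subset_right hsub)
  -- sum everything up
  have hcover : P (Bad M X (t+N)) ≤ ∑ v ∈ V, P (Bad M X (t+N) ∩ Cyl X t (ext v)) := by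
    have hsubset : Bad M X (t+N) ⊆ ⋃ v ∈ V, (Bad M X (t+N) ∩ Cyl X t (ext v)) := by
      intro ω hω
      have hωt : ω ∈ Bad M X t := fun s hs => hω s (by omega)
      rw [hBt] at hωt
      obtain ⟨v, hv, hωv⟩ := Set.mem_iUnion₂.mp hωt
      exact Set.mem_biUnion hv ⟨hω, hωv⟩
    calc P (Bad M X (t+N)) ≤ P (⋃ v ∈ V, (Bad M X (t+N) ∩ Cyl X t (ext v))) :=
          measure_mono hsubset
      _ ≤ ∑ v ∈ V, P (Bad M X (t+N) ∩ Cyl X t (ext v)) := measure_biUnion_finset_le _ _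
  calc P (Bad M X (t+N)) + ε * P (Bad M X t)
      ≤ (∑ v ∈ V, P (Bad M X (t+N) ∩ Cyl X t (ext v))) +
        ε * ∑ v ∈ V, P (Cyl X t (ext v)) := by rw [← hsum]; gcongr
    _ = ∑ v ∈ V, (P (Bad M X (t+N) ∩ Cyl X t (ext v)) + ε * P (Cyl X t (ext v))) := by
        rw [Finset.mul_sum, Finset.sum_add_distrib]
    _ ≤ ∑ v ∈ V, P (Cyl X t (ext v)) := Finset.sum_le_sum hperv
    _ = P (Bad M X t) := hsum.symm

end Final
open scoped ENNReal
open MeasureTheory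
open MeasureTheory in

/-- **Almost-sure stabilization of `κ`-random dynamics** (Roth–Vande Vate): with
probability 1 the process reaches a stable matching (after which it stays there). -/
theorem stmt2 (M : Market n) (κ : ℝ) (hκ : 1 ≤ κ) {Ω : Type*} [MeasurableSpace Ω]
    (P : Measure Ω) [IsProbabilityMeasure P] (X : ℕ → Ω → Matching n)
    (lam0 : Matching n) (hX : IsKRandomDynamics M κ P X lam0) :
    P {ω | ∃ t, Stable M (X t ω)} = 1 := by
  have hms : MeasurableSet {ω | ∃ t, Stable M (X t ω)} := by
    have he : {ω | ∃ t, Stable M (X t ω)} = ⋃ t, (X t)⁻¹' {μ | Stable M μ} := by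
      ext ω; simp
    rw [he]
    exact MeasurableSet.iUnion fun t => hX.measurable t (measurableSet_matching _)
  rcases Nat.eq_zero_or_pos n with hn | hn
  · subst hn
    have he : {ω | ∃ t, Stable M (X t ω)} = Set.univ := by
      ext ω
      simp only [Set.mem_setOf_eq, Set.mem_univ, iff_true]
      exact ⟨0, fun f _ => Fin.elim0 f⟩
    rw [he]
    exact measure_univ
  · obtain ⟨N, hN⟩ := exists_uniform_bound M
    set ε : ℝ≥0∞ := (((n^2 : ℝ≥0∞) * ENNReal.ofReal κ)⁻¹) ^ N with hε
    have hDne : ((n^2 : ℝ≥0∞) * ENNReal.ofReal κ) ≠ ⊤ :=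
      ENNReal.mul_ne_top (ENNReal.pow_ne_top (ENNReal.natCast_ne_top n)) ENNReal.ofReal_ne_top
    have hε0 : ε ≠ 0 := pow_ne_zero _ (ENNReal.inv_ne_zero.mpr hDne)
    have hD0 : ((n^2 : ℝ≥0∞) * ENNReal.ofReal κ) ≠ 0 := by
      apply mul_ne_zero
      · exact pow_ne_zero 2 (Nat.cast_ne_zero.mpr (by omega))
      · simp only [ne_eq, ENNReal.ofReal_eq_zero, not_le]
        linarith
    have hεtop : ε ≠ ⊤ := ENNReal.pow_ne_top (ENNReal.inv_ne_top.mpr hD0)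
    set r : ℝ≥0∞ := 1 - ε with hr
    have hcontr : ∀ t, P (Bad M X (t+N)) ≤ r * P (Bad M X t) := by
      intro t
      have h1 := contraction hX hκ hn N hN t
      have h2 : P (Bad M X (t+N)) ≤ P (Bad M X t) - ε * P (Bad M X t) :=
        ENNReal.le_sub_of_add_le_right (ENNReal.mul_ne_top hεtop (measure_ne_top P _)) h1
      have h3 : P (Bad M X t) - ε * P (Bad M X t) = (1 - ε) * P (Bad M X t) := by
        rw [ENNReal.sub_mul (fun _ _ => measure_ne_top P _), one_mul]
      rw [h3] at h2
      exact h2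
    have hiter : ∀ m, P (Bad M X (m * N)) ≤ r ^ m := by
      intro m
      induction m with
      | zero => simpa using prob_le_one
      | succ m ih =>
        have he : (m + 1) * N = m * N + N := by ring
        rw [he]
        calc P (Bad M X (m * N + N)) ≤ r * P (Bad M X (m * N)) := hcontr (m * N)
          _ ≤ r * r ^ m := by gcongr
          _ = r ^ (m + 1) := by rw [pow_succ]; ring
    have hsub : ∀ m, P {ω | ∃ t, Stable M (X t ω)}ᶜ ≤ r ^ m := by
      intro m
      refine le_trans (measure_mono ?_) (hiter m)
      intro ω hω s _
      simp only [Set.mem_compl_iff, Set.mem_setOf_eq, not_exists] at hω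
      exact hω s
    have hrlt : r < 1 := ENNReal.sub_lt_self ENNReal.one_ne_top one_ne_zero hε0
    have htends : Filter.Tendsto (fun m => r ^ m) Filter.atTop (nhds 0) :=
      ENNReal.tendsto_pow_atTop_nhds_zero_of_lt_one hrlt
    have hc0 : P {ω | ∃ t, Stable M (X t ω)}ᶜ ≤ 0 :=
      ge_of_tendsto htends (Filter.Eventually.of_forall hsub)
    have hc0' : P {ω | ∃ t, Stable M (X t ω)}ᶜ = 0 := le_antisymm hc0 zero_le
    exact (prob_compl_eq_zero_iff hms).mp hc0'
end

section
/- If subsets F̄ ⊊ F and W̄ ⊊ W with |F̄| = |W̄| = k < n form a fragment of a matching market of size n, then every stable matching μ of the market satisfies μ(F̄) = W̄; that is, under every stable matching of the original market, every firm in F̄ is matched to a worker in W̄ and every worker in W̄ is matched to a firm in F̄. -/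
variable {n : ℕ}

/-- The matching `m` (sending each firm of `Fb` to its partner in `Wb`) induces the
fragment `(Fb, Wb)`: `Fb ⊊ F` and `Wb ⊊ W` have equal size, `m` matches `Fb`
bijectively into `Wb`, this matching is stable in the submarket induced on
`Fb ∪ Wb`, every firm of the fragment prefers its partner to every worker outside
`Wb`, and every worker of the fragment prefers its partner to every firm outside
`Fb`. -/
def InducesFragment (M : Market n) (Fb Wb : Finset (Fin n)) (m : Fin n → Fin n) : Prop :=
  Fb ≠ Finset.univ ∧ Wb ≠ Finset.univ ∧ Fb.card = Wb.card ∧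
  (∀ f ∈ Fb, m f ∈ Wb) ∧ Set.InjOn m ↑Fb ∧
  (∀ f ∈ Fb, ∀ f' ∈ Fb,
    M.fpref f (m f') < M.fpref f (m f) → M.wpref (m f') f' < M.wpref (m f') f) ∧
  (∀ f ∈ Fb, ∀ w, w ∉ Wb → M.fpref f (m f) < M.fpref f w) ∧
  (∀ f ∈ Fb, ∀ f', f' ∉ Fb → M.wpref (m f) f < M.wpref (m f) f')

/-- `(Fb, Wb)` is a fragment of the market `M`. -/
def IsFragment (M : Market n) (Fb Wb : Finset (Fin n)) : Prop :=
  ∃ m, InducesFragment M Fb Wb m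

/-- All stable matchings of the market agree on how they match the agents of
`(Fb, Wb)`; a fragment with this property is trivial. -/
def AgreeOnFragment (M : Market n) (Fb Wb : Finset (Fin n)) : Prop :=
  ∀ μ μ' : Matching n, Stable M μ → Stable M μ' →
    (∀ f ∈ Fb, μ.mf f = μ'.mf f) ∧ (∀ w ∈ Wb, μ.mw w = μ'.mw w)

/-- The market has no non-trivial fragments. -/
def NoNontrivialFragments (M : Market n) : Prop :=
  ∀ Fb Wb, IsFragment M Fb Wb → AgreeOnFragment M Fb Wb
/-- **Lemma 1**: if `(Fb, Wb)` is a fragment, then every stable matching of the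
original market matches every firm of `Fb` to a worker of `Wb` and every worker
of `Wb` to a firm of `Fb`, i.e. `μ(Fb) = Wb`. -/
theorem stmt3 (M : Market n) (Fb Wb : Finset (Fin n)) (hfrag : IsFragment M Fb Wb)
    (μ : Matching n) (hμ : Stable M μ) :
    (∀ f ∈ Fb, ∃ w ∈ Wb, μ.mf f = some w) ∧ (∀ w ∈ Wb, ∃ f ∈ Fb, μ.mw w = some f) := by
  classical
  obtain ⟨m, hne, hwne, hcard, hmW, hinj, hstab, hfout, hwout⟩ := hfrag
  set S : Finset (Fin n) :=
    Fb.filter (fun f => ∀ w' ∈ μ.mf f, M.fpref f (m f) < M.fpref f w') with hS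
  have key : ∀ f ∈ S, ∃ f₁, μ.mw (m f) = some f₁ ∧ f₁ ∈ S ∧ μ.mf f₁ = some (m f) := by
    intro f hf
    rw [hS, Finset.mem_filter] at hf
    obtain ⟨hfF, hpref⟩ := hf
    have hnb := hμ f (m f)
    rw [Blocking] at hnb
    push_neg at hnb
    have hne1 : μ.mf f ≠ some (m f) := by
      intro h
      exact lt_irrefl _ (hpref (m f) h)
    have hw := hnb hne1 hpref
    rw [WPrefOver] at hw
    push_neg at hw
    obtain ⟨f₁, hf₁mem, hge⟩ := hw
    have hsome : μ.mw (m f) = some f₁ := hf₁mem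
    have hmf₁ : μ.mf f₁ = some (m f) := (μ.consistent f₁ (m f)).mpr hsome
    have hf₁ne : f₁ ≠ f := by
      intro h; subst h; exact hne1 hmf₁
    have hstrict : M.wpref (m f) f₁ < M.wpref (m f) f := by
      rcases lt_or_eq_of_le hge with h | h
      · exact h
      · exact absurd (M.wpref_inj (m f) h) hf₁ne
    have hf₁F : f₁ ∈ Fb := by
      by_contra hnot
      exact absurd (hwout f hfF f₁ hnot) (not_lt.mpr hge)
    have hfp : M.fpref f₁ (m f₁) < M.fpref f₁ (m f) := by
      have hnl : ¬ M.fpref f₁ (m f) < M.fpref f₁ (m f₁) := by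
        intro h
        exact absurd (hstab f₁ hf₁F f hfF h) (not_lt.mpr (le_of_lt hstrict))
      rcases lt_or_eq_of_le (not_lt.mp hnl) with h | h
      · exact h
      · exact absurd (hinj hf₁F hfF (M.fpref_inj f₁ h)) hf₁ne
    refine ⟨f₁, hsome, ?_, hmf₁⟩
    rw [hS, Finset.mem_filter]
    refine ⟨hf₁F, ?_⟩
    intro w' hw'
    rw [hmf₁] at hw'
    have : w' = m f := by simpa using hw'.symm
    subst this
    exact hfp
  set T : Finset (Fin n) := S.filter (fun f => ∃ w ∈ Wb, μ.mf f = some w) with hT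
  have hTS : T ⊆ S := Finset.filter_subset _ _
  have hcardST : S.card ≤ T.card := by
    apply Finset.card_le_card_of_injOn (fun f => (μ.mw (m f)).getD f)
    · intro f hf
      obtain ⟨f₁, hsome, hf₁S, hmf₁⟩ := key f hf
      rw [hT, Finset.mem_coe, Finset.mem_filter]
      refine ⟨by simpa [hsome] using hf₁S, ?_⟩
      have hfF : f ∈ Fb := Finset.mem_of_mem_filter f hf
      refine ⟨m f, hmW f hfF, ?_⟩
      simpa [hsome] using hmf₁
    · intro a ha b hb hab
      obtain ⟨fa, hsa, hfaS, hma⟩ := key a ha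
      obtain ⟨fb, hsb, hfbS, hmb⟩ := key b hb
      simp only [hsa, hsb, Option.getD_some] at hab
      subst hab
      rw [hma] at hmb
      have : m a = m b := by simpa using hmb
      exact hinj (Finset.mem_of_mem_filter a ha) (Finset.mem_of_mem_filter b hb) this
  have hTeq : T = S := Finset.eq_of_subset_of_card_le hTS hcardST
  have hmatched : ∀ f ∈ Fb, ∃ w ∈ Wb, μ.mf f = some w := by
    intro f hfF
    by_contra hnot
    push_neg at hnot
    have hfS : f ∈ S := by
      rw [hS, Finset.mem_filter]
      refine ⟨hfF, ?_⟩
      intro w' hw'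
      have hw'notin : w' ∉ Wb := fun hin => hnot w' hin hw'
      exact hfout f hfF w' hw'notin
    rw [← hTeq, hT, Finset.mem_filter] at hfS
    obtain ⟨-, w, hwWb, hmfw⟩ := hfS
    exact hnot w hwWb hmfw
  refine ⟨hmatched, ?_⟩
  have himg : Fb.image (fun f => (μ.mf f).getD f) = Wb := by
    apply Finset.eq_of_subset_of_card_le
    · intro w hw
      rw [Finset.mem_image] at hw
      obtain ⟨f, hfF, hfw⟩ := hw
      obtain ⟨w', hw'Wb, hmfw'⟩ := hmatched f hfF
      rw [hmfw'] at hfw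
      simp only [Option.getD_some] at hfw
      subst hfw
      exact hw'Wb
    · have hinjψ : Set.InjOn (fun f => (μ.mf f).getD f) ↑Fb := by
        intro a ha b hb hab
        obtain ⟨wa, hwa, hma⟩ := hmatched a ha
        obtain ⟨wb, hwb, hmb⟩ := hmatched b hb
        simp only [hma, hmb, Option.getD_some] at hab
        subst hab
        have h1 : μ.mw wa = some a := (μ.consistent a wa).mp hma
        have h2 : μ.mw wa = some b := (μ.consistent b wa).mp hmb
        rw [h1] at h2
        simpa using h2
      rw [Finset.card_image_of_injOn hinjψ, hcard]
  intro w hwWb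
  rw [← himg, Finset.mem_image] at hwWb
  obtain ⟨f, hfF, hfw⟩ := hwWb
  obtain ⟨w', hw'Wb, hmfw'⟩ := hmatched f hfF
  rw [hmfw'] at hfw
  simp only [Option.getD_some] at hfw
  subst hfw
  exact ⟨f, hfF, (μ.consistent f w').mp hmfw'⟩
end

section
/- If a matching μ̄ induces a fragment (F̄, W̄) of a matching market, then there exists a stable matching μ of the whole market that agrees with μ̄ on the fragment, i.e., μ(f) = μ̄(f) for every f ∈ F̄. -/
variable {n : ℕ}

open Classical in
noncomputable def pick (A : Finset (Fin n)) (r : Fin n → ℕ) : Option (Fin n) :=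
  if h : A.Nonempty then some (A.exists_min_image r h).choose else none

theorem pick_mem {A : Finset (Fin n)} {r : Fin n → ℕ} {w : Fin n}
    (h : pick A r = some w) : w ∈ A := by
  classical
  unfold pick at h
  split_ifs at h with hA
  obtain ⟨hmem, -⟩ := (A.exists_min_image r hA).choose_spec
  injection h with h
  exact h ▸ hmem

theorem pick_min {A : Finset (Fin n)} {r : Fin n → ℕ} {w : Fin n}
    (h : pick A r = some w) : ∀ w' ∈ A, r w ≤ r w' := by
  classical
  unfold pick at h
  split_ifs at h with hA
  obtain ⟨-, hmin⟩ := (A.exists_min_image r hA).choose_spec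
  injection h with h
  exact h ▸ hmin

theorem pick_isSome {A : Finset (Fin n)} (r : Fin n → ℕ) (hA : A.Nonempty) :
    ∃ w, pick A r = some w := by
  classical
  unfold pick
  rw [dif_pos hA]
  exact ⟨_, rfl⟩

def rnk (r : Fin n → ℕ) : Option (Fin n) → WithTop ℕ
  | none => ⊤
  | some w => (r w : WithTop ℕ)

@[simp] theorem rnk_none (r : Fin n → ℕ) : rnk r none = ⊤ := rfl
@[simp] theorem rnk_some (r : Fin n → ℕ) (w : Fin n) : rnk r (some w) = (r w : WithTop ℕ) := rfl

theorem rnk_inj {r : Fin n → ℕ} (hr : Function.Injective r) {o o' : Option (Fin n)}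
    (h : rnk r o = rnk r o') : o = o' := by
  cases o with
  | none => cases o' with
    | none => rfl
    | some w => simp [rnk] at h
  | some w => cases o' with
    | none => simp [rnk] at h
    | some w' =>
      simp only [rnk_some, Nat.cast_inj] at h
      exact congrArg some (hr h)

theorem rnk_pick_le_of_subset {A B : Finset (Fin n)} (r : Fin n → ℕ) (hAB : A ⊆ B) :
    rnk r (pick B r) ≤ rnk r (pick A r) := by
  rcases h : pick A r with _ | a
  · simp
  · have haA := pick_mem h
    obtain ⟨b, hb⟩ := pick_isSome r ⟨a, hAB haA⟩
    rw [hb]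
    simpa using pick_min hb a (hAB haA)

open Classical in
noncomputable def gsStep (M : Market n) (S T : Finset (Fin n))
    (p : (Fin n → Option (Fin n)) × (Fin n → Option (Fin n))) :
    (Fin n → Option (Fin n)) × (Fin n → Option (Fin n)) :=
  (fun f => if f ∈ S then
      pick (T.filter fun w => (M.wpref w f : WithTop ℕ) ≤ rnk (M.wpref w) (p.2 w)) (M.fpref f)
    else none,
   fun w => if w ∈ T then
      pick (S.filter fun f => (M.fpref f w : WithTop ℕ) ≤ rnk (M.fpref f) (p.1 f)) (M.wpref w)
    else none)

def GSle (M : Market n)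
    (p q : (Fin n → Option (Fin n)) × (Fin n → Option (Fin n))) : Prop :=
  (∀ f, rnk (M.fpref f) (q.1 f) ≤ rnk (M.fpref f) (p.1 f)) ∧
  (∀ w, rnk (M.wpref w) (p.2 w) ≤ rnk (M.wpref w) (q.2 w))

theorem GSle_trans {M : Market n} {p q r} (h1 : GSle M p q) (h2 : GSle M q r) :
    GSle M p r :=
  ⟨fun f => le_trans (h2.1 f) (h1.1 f), fun w => le_trans (h1.2 w) (h2.2 w)⟩

theorem GSle_antisymm {M : Market n} {p q} (h1 : GSle M p q) (h2 : GSle M q p) :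
    p = q := by
  have h1' : ∀ f, rnk (M.fpref f) (q.1 f) = rnk (M.fpref f) (p.1 f) :=
    fun f => le_antisymm (h1.1 f) (h2.1 f)
  have h2' : ∀ w, rnk (M.wpref w) (p.2 w) = rnk (M.wpref w) (q.2 w) :=
    fun w => le_antisymm (h1.2 w) (h2.2 w)
  refine Prod.ext (funext fun f => ?_) (funext fun w => ?_)
  · exact (rnk_inj (M.fpref_inj f) (h1' f)).symm
  · exact rnk_inj (M.wpref_inj w) (h2' w)

theorem gsStep_mono {M : Market n} {S T : Finset (Fin n)} {p q}
    (h : GSle M p q) : GSle M (gsStep M S T p) (gsStep M S T q) := by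
  classical
  constructor
  · intro f
    simp only [gsStep]
    by_cases hf : f ∈ S
    · rw [if_pos hf, if_pos hf]
      apply rnk_pick_le_of_subset
      intro w hw
      simp only [Finset.mem_filter] at hw ⊢
      exact ⟨hw.1, le_trans hw.2 (h.2 w)⟩
    · rw [if_neg hf, if_neg hf]
  · intro w
    simp only [gsStep]
    by_cases hw : w ∈ T
    · rw [if_pos hw, if_pos hw]
      apply rnk_pick_le_of_subset
      intro f hf
      simp only [Finset.mem_filter] at hf ⊢
      exact ⟨hf.1, le_trans hf.2 (h.1 f)⟩
    · rw [if_neg hw, if_neg hw]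

open Classical in
noncomputable def gsTop (M : Market n) (S T : Finset (Fin n)) :
    (Fin n → Option (Fin n)) × (Fin n → Option (Fin n)) :=
  (fun f => if f ∈ S then pick T (M.fpref f) else none, fun _ => none)

theorem gsStep_le_top (M : Market n) (S T : Finset (Fin n)) :
    GSle M (gsStep M S T (gsTop M S T)) (gsTop M S T) := by
  classical
  constructor
  · intro f
    simp only [gsStep, gsTop]
    by_cases hf : f ∈ S
    · rw [if_pos hf, if_pos hf]
      exact rnk_pick_le_of_subset _ (Finset.filter_subset _ _)
    · rw [if_neg hf, if_neg hf]
  · intro w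
    simp [gsStep, gsTop]

theorem gs_exists_fixed (M : Market n) (S T : Finset (Fin n)) :
    ∃ p, gsStep M S T p = p := by
  classical
  set F := gsStep M S T with hF
  set seq : ℕ → (Fin n → Option (Fin n)) × (Fin n → Option (Fin n)) :=
    fun k => F^[k] (gsTop M S T) with hseq
  have hiter : ∀ k, seq (k + 1) = F (seq k) :=
    fun k => Function.iterate_succ_apply' F k (gsTop M S T)
  have hstep : ∀ k, GSle M (seq (k + 1)) (seq k) := by
    intro k
    induction k with
    | zero => exact gsStep_le_top M S T
    | succ k ih =>
      rw [hiter k] at ih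
      have := gsStep_mono (S := S) (T := T) ih
      rw [← hF, ← hiter k, ← hiter (k + 1)] at this
      exact this
  have hchain : ∀ a b, a ≤ b → GSle M (seq b) (seq a) := by
    intro a b hab
    induction b, hab using Nat.le_induction with
    | base => exact ⟨fun f => le_rfl, fun w => le_rfl⟩
    | succ b hab ih => exact GSle_trans (hstep b) ih
  have key : ∀ i j : ℕ, i < j → seq i = seq j → ∃ p, gsStep M S T p = p := by
    intro i j hlt heq
    refine ⟨seq i, ?_⟩
    have h1 : GSle M (seq (i + 1)) (seq i) := hstep i
    have h2 : GSle M (seq j) (seq (i + 1)) := hchain _ _ hlt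
    rw [← heq] at h2
    have h3 : seq (i + 1) = seq i := GSle_antisymm h1 h2
    calc gsStep M S T (seq i) = F (seq i) := by rw [hF]
      _ = seq (i + 1) := (hiter i).symm
      _ = seq i := h3
  obtain ⟨i, j, hij, heq⟩ := Finite.exists_ne_map_eq_of_infinite seq
  rcases hij.lt_or_gt with hlt | hlt
  · exact key i j hlt heq
  · exact key j i hlt heq.symm

theorem restrictedStable (M : Market n) (S T : Finset (Fin n)) :
    ∃ v u : Fin n → Option (Fin n),
      (∀ f w, v f = some w → f ∈ S ∧ w ∈ T) ∧
      (∀ f w, u w = some f → w ∈ T ∧ f ∈ S) ∧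
      (∀ f w, v f = some w ↔ u w = some f) ∧
      (∀ f ∈ S, ∀ w ∈ T,
        ¬((M.fpref f w : WithTop ℕ) < rnk (M.fpref f) (v f) ∧
          (M.wpref w f : WithTop ℕ) < rnk (M.wpref w) (u w))) := by
  classical
  obtain ⟨p, hp⟩ := gs_exists_fixed M S T
  set v := p.1 with hv0
  set u := p.2 with hu0
  have hv : ∀ f, v f = if f ∈ S then
      pick (T.filter fun w => (M.wpref w f : WithTop ℕ) ≤ rnk (M.wpref w) (u w)) (M.fpref f)
    else none := by
    intro f
    conv_lhs => rw [hv0, ← hp]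
    rfl
  have hu : ∀ w, u w = if w ∈ T then
      pick (S.filter fun f => (M.fpref f w : WithTop ℕ) ≤ rnk (M.fpref f) (v f)) (M.wpref w)
    else none := by
    intro w
    conv_lhs => rw [hu0, ← hp]
    rfl
  have hvmem : ∀ f w, v f = some w → f ∈ S ∧ w ∈ T ∧
      (M.wpref w f : WithTop ℕ) ≤ rnk (M.wpref w) (u w) := by
    intro f w h
    rw [hv f] at h
    by_cases hf : f ∈ S
    · rw [if_pos hf] at h
      have := pick_mem h
      simp only [Finset.mem_filter] at this
      exact ⟨hf, this.1, this.2⟩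
    · rw [if_neg hf] at h; cases h
  have humem : ∀ f w, u w = some f → w ∈ T ∧ f ∈ S ∧
      (M.fpref f w : WithTop ℕ) ≤ rnk (M.fpref f) (v f) := by
    intro f w h
    rw [hu w] at h
    by_cases hw : w ∈ T
    · rw [if_pos hw] at h
      have := pick_mem h
      simp only [Finset.mem_filter] at this
      exact ⟨hw, this.1, this.2⟩
    · rw [if_neg hw] at h; cases h
  refine ⟨v, u, fun f w h => ⟨(hvmem f w h).1, (hvmem f w h).2.1⟩,
    fun f w h => ⟨(humem f w h).1, (humem f w h).2.1⟩, ?_, ?_⟩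
  · intro f w
    constructor
    · intro h
      obtain ⟨hfS, hwT, hacc⟩ := hvmem f w h
      have hfin : f ∈ S.filter fun f' => (M.fpref f' w : WithTop ℕ) ≤ rnk (M.fpref f') (v f') := by
        simp only [Finset.mem_filter]
        exact ⟨hfS, by rw [h]; simp⟩
      obtain ⟨f', hf'⟩ := pick_isSome (M.wpref w) ⟨f, hfin⟩
      have huw : u w = some f' := by rw [hu w, if_pos hwT]; exact hf'
      have h1 : M.wpref w f' ≤ M.wpref w f := pick_min hf' f hfin
      have h2 : (M.wpref w f : WithTop ℕ) ≤ (M.wpref w f' : WithTop ℕ) := by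
        rw [huw] at hacc; simpa using hacc
      have h2' : M.wpref w f ≤ M.wpref w f' := by exact_mod_cast h2
      have : f' = f := M.wpref_inj w (le_antisymm h1 h2')
      rw [huw, this]
    · intro h
      obtain ⟨hwT, hfS, hacc⟩ := humem f w h
      have hwin : w ∈ T.filter fun w' => (M.wpref w' f : WithTop ℕ) ≤ rnk (M.wpref w') (u w') := by
        simp only [Finset.mem_filter]
        exact ⟨hwT, by rw [h]; simp⟩
      obtain ⟨w', hw'⟩ := pick_isSome (M.fpref f) ⟨w, hwin⟩
      have hvf : v f = some w' := by rw [hv f, if_pos hfS]; exact hw'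
      have h1 : M.fpref f w' ≤ M.fpref f w := pick_min hw' w hwin
      have h2 : (M.fpref f w : WithTop ℕ) ≤ (M.fpref f w' : WithTop ℕ) := by
        rw [hvf] at hacc; simpa using hacc
      have h2' : M.fpref f w ≤ M.fpref f w' := by exact_mod_cast h2
      have : w' = w := M.fpref_inj f (le_antisymm h1 h2')
      rw [hvf, this]
  · rintro f hfS w hwT ⟨hblockf, hblockw⟩
    have hwin : w ∈ T.filter fun w' => (M.wpref w' f : WithTop ℕ) ≤ rnk (M.wpref w') (u w') :=
      by simp only [Finset.mem_filter]; exact ⟨hwT, le_of_lt hblockw⟩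
    obtain ⟨w', hw'⟩ := pick_isSome (M.fpref f) ⟨w, hwin⟩
    have hvf : v f = some w' := by rw [hv f, if_pos hfS]; exact hw'
    have h1 : M.fpref f w' ≤ M.fpref f w := pick_min hw' w hwin
    rw [hvf] at hblockf
    simp only [rnk_some, Nat.cast_lt] at hblockf
    omega


/-- If `m` induces a fragment `(Fb, Wb)`, then some stable matching of the whole
market agrees with `m` on the fragment. -/
theorem stmt4 (M : Market n) (Fb Wb : Finset (Fin n)) (m : Fin n → Fin n)
    (hind : InducesFragment M Fb Wb m) :
    ∃ μ : Matching n, Stable M μ ∧ ∀ f ∈ Fb, μ.mf f = some (m f) := by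
  classical
  obtain ⟨hFu, hWu, hcard, hmW, hinj, hstab, hfout, hwout⟩ := hind
  obtain ⟨v, u, hvm, hum, hcons, hnb⟩ := restrictedStable M Fbᶜ Wbᶜ
  have himg : Fb.image m = Wb := by
    apply Finset.eq_of_subset_of_card_le
    · intro w hw
      obtain ⟨f, hf, rfl⟩ := Finset.mem_image.mp hw
      exact hmW f hf
    · rw [Finset.card_image_of_injOn hinj]
      exact le_of_eq hcard.symm
  have hne0 : Nonempty (Fin n) := by
    rcases Nat.eq_zero_or_pos n with h | h
    · exfalso
      apply hFu
      subst h
      exact Finset.eq_univ_iff_forall.mpr fun x => x.elim0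
    · exact ⟨⟨0, h⟩⟩
  set g : Fin n → Fin n := fun w => Function.invFunOn m (↑Fb) w with hg
  have hwimg : ∀ w ∈ Wb, w ∈ m '' (↑Fb) := by
    intro w hw
    rw [← Finset.coe_image, himg]
    exact hw
  have hgmem : ∀ w ∈ Wb, g w ∈ Fb := fun w hw =>
    Finset.mem_coe.mp (Function.invFunOn_mem (hwimg w hw))
  have hgm : ∀ w ∈ Wb, m (g w) = w := fun w hw =>
    Function.invFunOn_eq (f := m) (by simpa using hwimg w hw)
  have hgmf : ∀ f ∈ Fb, g (m f) = f := by
    intro f hf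
    exact hinj (Finset.mem_coe.mpr (hgmem _ (hmW f hf))) (Finset.mem_coe.mpr hf)
      (hgm _ (hmW f hf))
  have hconsis : ∀ f w, (if f ∈ Fb then some (m f) else v f) = some w ↔
      (if w ∈ Wb then some (g w) else u w) = some f := by
    intro f w
    by_cases hf : f ∈ Fb
    · rw [if_pos hf]
      constructor
      · intro h
        injection h with h
        subst h
        rw [if_pos (hmW f hf)]
        exact congrArg some (hgmf f hf)
      · intro h
        by_cases hw : w ∈ Wb
        · rw [if_pos hw] at h
          injection h with h
          have hmw := hgm w hw
          rw [h] at hmw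
          exact congrArg some hmw
        · rw [if_neg hw] at h
          exact absurd hf (Finset.mem_compl.mp (hum f w h).2)
    · rw [if_neg hf]
      by_cases hw : w ∈ Wb
      · rw [if_pos hw]
        constructor
        · intro h
          exact absurd hw (Finset.mem_compl.mp (hvm f w h).2)
        · intro h
          injection h with h
          exact absurd (h ▸ hgmem w hw) hf
      · rw [if_neg hw]
        exact hcons f w
  refine ⟨⟨fun f => if f ∈ Fb then some (m f) else v f,
          fun w => if w ∈ Wb then some (g w) else u w, hconsis⟩, ?_, ?_⟩
  · rintro f w ⟨hne, hfp, hwp⟩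
    have hfp' : FPrefOver M f w (if f ∈ Fb then some (m f) else v f) := hfp
    have hwp' : WPrefOver M w f (if w ∈ Wb then some (g w) else u w) := hwp
    by_cases hf : f ∈ Fb <;> by_cases hw : w ∈ Wb
    · rw [if_pos hf] at hfp'
      rw [if_pos hw] at hwp'
      have h1 : M.fpref f w < M.fpref f (m f) := hfp' (m f) rfl
      have h2 : M.wpref w f < M.wpref w (g w) := hwp' (g w) rfl
      have h3 := hstab f hf (g w) (hgmem w hw)
      rw [hgm w hw] at h3
      have h4 := h3 h1
      omega
    · rw [if_pos hf] at hfp'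
      have h1 : M.fpref f w < M.fpref f (m f) := hfp' (m f) rfl
      have h2 := hfout f hf w hw
      omega
    · rw [if_pos hw] at hwp'
      have h1 : M.wpref w f < M.wpref w (g w) := hwp' (g w) rfl
      have h2 := hwout (g w) (hgmem w hw) f hf
      rw [hgm w hw] at h2
      omega
    · rw [if_neg hf] at hfp'
      rw [if_neg hw] at hwp'
      refine hnb f (Finset.mem_compl.mpr hf) w (Finset.mem_compl.mpr hw) ⟨?_, ?_⟩
      · rcases hvf : v f with _ | w'
        · simp
        · rw [hvf] at hfp'
          simpa using hfp' w' rfl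
      · rcases huw : u w with _ | f'
        · simp
        · rw [huw] at hwp'
          simpa using hwp' f' rfl
  · intro f hf
    exact if_pos hf
end

section
/- Let a matching market of size n (all pairs mutually acceptable) have no non-trivial fragments, let μ be any stable matching, and let f be any firm (in such a market every stable matching matches all agents, so μ(f) ∈ W). Then at least one of the following holds: (a) for every stable matching μ' there exists a path from μ_{-f} to μ'; or (b) for every firm f' there exists a path from μ_{-f} to μ_{-f'}. -/
variable {n : ℕ}

/-- `μ.unmatch f` is the matching `μ_{-f}` obtained from `μ` by unmatching firm `f`
and its partner (if any); all other partnerships are unchanged. -/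
def Matching.unmatch (μ : Matching n) (f : Fin n) : Matching n where
  mf f' := if f' = f then none else μ.mf f'
  mw w := if μ.mw w = some f then none else μ.mw w
  consistent := by
    intro f' w
    try dsimp only
    constructor
    · intro h
      by_cases h1 : f' = f
      · simp [h1] at h
      · rw [if_neg h1] at h
        have h2 := (μ.consistent f' w).mp h
        have hne : μ.mw w ≠ some f := by
          rw [h2]; intro e; exact h1 (Option.some_injective _ e)
        rw [if_neg hne]; exact h2
    · intro h
      by_cases h2 : μ.mw w = some f
      · rw [if_pos h2] at h; exact absurd h (by simp)
      · rw [if_neg h2] at h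
        have h1 : f' ≠ f := fun e => h2 (e ▸ h)
        rw [if_neg h1]; exact (μ.consistent f' w).mpr h
namespace Obs

/-! ### Basic matching lemmas -/

lemma Matching.ext_mf {μ ν : Matching n} (h : ∀ x, μ.mf x = ν.mf x) : μ = ν := by
  have hm : μ.mf = ν.mf := funext h
  have hw : μ.mw = ν.mw := by
    funext y
    cases hy : μ.mw y with
    | none =>
      cases hy' : ν.mw y with
      | none => rfl
      | some x =>
        have h2 := (ν.consistent x y).mpr hy'
        rw [← h x] at h2
        rw [(μ.consistent x y).mp h2] at hy; exact absurd hy (by simp)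
    | some x =>
      have h2 : μ.mf x = some y := (μ.consistent x y).mpr hy
      rw [h x] at h2
      exact ((ν.consistent x y).mp h2).symm
  cases μ; cases ν; simp_all

lemma mw_eq_of_mf {μ : Matching n} {x w : Fin n} (h : μ.mf x = some w) :
    μ.mw w = some x := (μ.consistent x w).mp h

lemma mf_eq_of_mw {μ : Matching n} {x w : Fin n} (h : μ.mw w = some x) :
    μ.mf x = some w := (μ.consistent x w).mpr h

lemma partners_ne {μ : Matching n} {x x' w w' : Fin n} (h : μ.mf x = some w)
    (h' : μ.mf x' = some w') (hx : x ≠ x') : w ≠ w' := by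
  intro e; subst e
  exact hx (Option.some_injective _ ((mw_eq_of_mf h).symm.trans (mw_eq_of_mf h')))

lemma firms_ne {μ : Matching n} {x x' w w' : Fin n} (h : μ.mf x = some w)
    (h' : μ.mf x' = some w') (hw : w ≠ w') : x ≠ x' := by
  intro e; subst e; rw [h] at h'; exact hw (Option.some_injective _ h')

/-! ### Perfect matchings and partner functions -/

def Perf (μ : Matching n) : Prop :=
  (∀ x, (μ.mf x).isSome) ∧ (∀ y, (μ.mw y).isSome)

noncomputable def pF (μ : Matching n) (x : Fin n) : Fin n := (μ.mf x).getD x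
noncomputable def pW (μ : Matching n) (y : Fin n) : Fin n := (μ.mw y).getD y

lemma pF_spec {μ : Matching n} (h : Perf μ) (x : Fin n) : μ.mf x = some (pF μ x) := by
  have := h.1 x
  cases hx : μ.mf x with
  | none => rw [hx] at this; simp at this
  | some w => simp [pF, hx]

lemma pW_spec {μ : Matching n} (h : Perf μ) (y : Fin n) : μ.mw y = some (pW μ y) := by
  have := h.2 y
  cases hy : μ.mw y with
  | none => rw [hy] at this; simp at this
  | some x => simp [pW, hy]

lemma pF_eq {μ : Matching n} {x w : Fin n} (h : μ.mf x = some w) : pF μ x = w := by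
  simp [pF, h]

lemma pW_eq {μ : Matching n} {x w : Fin n} (h : μ.mw w = some x) : pW μ w = x := by
  simp [pW, h]

lemma pW_pF {μ : Matching n} (h : Perf μ) (x : Fin n) : pW μ (pF μ x) = x :=
  pW_eq (mw_eq_of_mf (pF_spec h x))

lemma pF_pW {μ : Matching n} (h : Perf μ) (y : Fin n) : pF μ (pW μ y) = y :=
  pF_eq (mf_eq_of_mw (pW_spec h y))

lemma pF_inj {μ : Matching n} (h : Perf μ) {x x' : Fin n}
    (e : pF μ x = pF μ x') : x = x' := by
  have h1 := pF_spec h x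
  have h2 := pF_spec h x'
  rw [e] at h1
  exact Option.some_injective _ ((mw_eq_of_mf h1).symm.trans (mw_eq_of_mf h2))

lemma pF_ne {μ : Matching n} (h : Perf μ) {x x' : Fin n} (e : x ≠ x') :
    pF μ x ≠ pF μ x' := fun hc => e (pF_inj h hc)

/-- A stable matching (in a mutually acceptable market) is perfect. -/
lemma stable_perf {M : Market n} {μ : Matching n} (hs : Stable M μ) : Perf μ := by
  constructor
  · intro x
    by_contra hx
    have hx' : μ.mf x = none := by
      cases h : μ.mf x with
      | none => rfl
      | some w => rw [h] at hx; simp at hx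
    -- find a free worker
    have : ∃ y, μ.mw y = none := by
      by_contra hall
      push_neg at hall
      have htot : ∀ y, ∃ z, μ.mw y = some z := by
        intro y
        cases h : μ.mw y with
        | none => exact absurd h (hall y)
        | some z => exact ⟨z, rfl⟩
      let g : Fin n → Fin n := fun y => (μ.mw y).getD y
      have hg : ∀ y, μ.mw y = some (g y) := by
        intro y; obtain ⟨z, hz⟩ := htot y; simp [g, hz]
      have hginj : Function.Injective g := by
        intro y y' e
        have h1 := mf_eq_of_mw (hg y)
        have h2 := mf_eq_of_mw (hg y')
        rw [e] at h1
        exact Option.some_injective _ (h1.symm.trans h2)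
      obtain ⟨y, hy⟩ := Finite.injective_iff_surjective.mp hginj x
      have := mf_eq_of_mw (hy ▸ hg y)
      rw [hx'] at this; exact absurd this (by simp)
    obtain ⟨y, hy⟩ := this
    exact hs x y ⟨by rw [hx']; simp, by rw [hx']; intro w hw; simp at hw,
      by rw [hy]; intro f hf; simp at hf⟩
  · intro y
    by_contra hy
    have hy' : μ.mw y = none := by
      cases h : μ.mw y with
      | none => rfl
      | some x => rw [h] at hy; simp at hy
    have : ∃ x, μ.mf x = none := by
      by_contra hall
      push_neg at hall
      have htot : ∀ x, ∃ w, μ.mf x = some w := by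
        intro x
        cases h : μ.mf x with
        | none => exact absurd h (hall x)
        | some w => exact ⟨w, rfl⟩
      let g : Fin n → Fin n := fun x => (μ.mf x).getD x
      have hg : ∀ x, μ.mf x = some (g x) := by
        intro x; obtain ⟨w, hw⟩ := htot x; simp [g, hw]
      have hginj : Function.Injective g := by
        intro x x' e
        have h1 := mw_eq_of_mf (hg x)
        have h2 := mw_eq_of_mf (hg x')
        rw [e] at h1
        exact Option.some_injective _ (h1.symm.trans h2)
      obtain ⟨x, hxx⟩ := (Finite.injective_iff_surjective.mp hginj) y
      have := mw_eq_of_mf (hxx ▸ hg x)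
      rw [hy'] at this; exact absurd this (by simp)
    obtain ⟨x, hx⟩ := this
    exact hs x y ⟨by rw [hx]; simp, by rw [hx]; intro w hw; simp at hw,
      by rw [hy']; intro f hf; simp at hf⟩

/-! ### unmatch lemmas -/

lemma unmatch_mf (μ : Matching n) (f x : Fin n) :
    (μ.unmatch f).mf x = if x = f then none else μ.mf x := rfl

lemma unmatch_mw (μ : Matching n) (f w : Fin n) :
    (μ.unmatch f).mw w = if μ.mw w = some f then none else μ.mw w := rfl

lemma unmatch_mf_self (μ : Matching n) (f : Fin n) : (μ.unmatch f).mf f = none := by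
  simp [unmatch_mf]

lemma unmatch_mf_ne (μ : Matching n) {f x : Fin n} (h : x ≠ f) :
    (μ.unmatch f).mf x = μ.mf x := by simp [unmatch_mf, h]

lemma unmatch_mw_ne (μ : Matching n) {f w : Fin n} (h : μ.mw w ≠ some f) :
    (μ.unmatch f).mw w = μ.mw w := by simp [unmatch_mw, h]

lemma unmatch_mw_partner {μ : Matching n} {f w : Fin n} (h : μ.mf f = some w) :
    (μ.unmatch f).mw w = none := by simp [unmatch_mw, mw_eq_of_mf h]

/-! ### Swap -/

def Swap (μ : Matching n) (g p : Fin n) : Matching n where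
  mf x := if x = g then μ.mf p else if x = p then μ.mf g else μ.mf x
  mw y := if μ.mw y = some g then some p else if μ.mw y = some p then some g else μ.mw y
  consistent := by
    intro x w
    constructor
    · intro h
      by_cases hxg : x = g
      · subst hxg
        rw [if_pos rfl] at h
        have := mw_eq_of_mf h
        by_cases hpg : p = x
        · subst hpg; rw [if_pos this]
        · rw [if_neg (by rw [this]; intro e; exact hpg (Option.some_injective _ e)),
            if_pos this]
      · rw [if_neg hxg] at h
        by_cases hxp : x = p
        · subst hxp
          rw [if_pos rfl] at h
          rw [if_pos (mw_eq_of_mf h)]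
        · rw [if_neg hxp] at h
          have := mw_eq_of_mf h
          rw [if_neg (by rw [this]; intro e; exact hxg (Option.some_injective _ e)),
            if_neg (by rw [this]; intro e; exact hxp (Option.some_injective _ e))]
          exact this
    · intro h
      by_cases h1 : μ.mw w = some g
      · rw [if_pos h1] at h
        have hxp : x = p := (Option.some_injective _ h.symm)
        subst hxp
        by_cases hxg : x = g
        · subst hxg; rw [if_pos rfl]; exact mf_eq_of_mw h1
        · rw [if_neg hxg, if_pos rfl]; exact mf_eq_of_mw h1
      · rw [if_neg h1] at h
        by_cases h2 : μ.mw w = some p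
        · rw [if_pos h2] at h
          have hxg : x = g := (Option.some_injective _ h.symm)
          subst hxg
          rw [if_pos rfl]; exact mf_eq_of_mw h2
        · rw [if_neg h2] at h
          have hxg : x ≠ g := by intro e; rw [e] at h; exact h1 h
          have hxp : x ≠ p := by intro e; rw [e] at h; exact h2 h
          rw [if_neg hxg, if_neg hxp]; exact mf_eq_of_mw h

lemma swap_mf_left (μ : Matching n) (g p : Fin n) : (Swap μ g p).mf g = μ.mf p := by
  simp [Swap]

lemma swap_mf_right (μ : Matching n) {g p : Fin n} (h : p ≠ g) :
    (Swap μ g p).mf p = μ.mf g := by simp [Swap, h]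

lemma swap_mf_other (μ : Matching n) {g p x : Fin n} (h1 : x ≠ g) (h2 : x ≠ p) :
    (Swap μ g p).mf x = μ.mf x := by simp [Swap, h1, h2]

lemma swap_mw (μ : Matching n) (g p y : Fin n) :
    (Swap μ g p).mw y = if μ.mw y = some g then some p
      else if μ.mw y = some p then some g else μ.mw y := rfl

lemma swap_perf {μ : Matching n} (h : Perf μ) (g p : Fin n) : Perf (Swap μ g p) := by
  constructor
  · intro x
    by_cases h1 : x = g
    · subst h1; rw [swap_mf_left]; exact h.1 p
    · by_cases h2 : x = p
      · subst h2; rw [swap_mf_right _ h1]; exact h.1 g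
      · rw [swap_mf_other μ h1 h2]; exact h.1 x
  · intro y
    rw [swap_mw]
    split
    · simp
    · split
      · simp
      · exact h.2 y

lemma swap_swap (μ : Matching n) (g p : Fin n) : Swap (Swap μ g p) g p = μ := by
  apply Matching.ext_mf
  intro x
  by_cases h1 : x = g
  · subst h1
    rw [swap_mf_left]
    by_cases h2 : p = x
    · subst h2; rw [swap_mf_left]
    · rw [swap_mf_right _ h2]
  · by_cases h2 : x = p
    · subst h2
      rw [swap_mf_right _ h1, swap_mf_left]
    · rw [swap_mf_other _ h1 h2, swap_mf_other _ h1 h2]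

lemma swap_comm (μ : Matching n) (g p : Fin n) : Swap μ g p = Swap μ p g := by
  apply Matching.ext_mf
  intro x
  by_cases h1 : x = g
  · subst h1
    rw [swap_mf_left]
    by_cases h2 : x = p
    · subst h2; rw [swap_mf_left]
    · rw [swap_mf_right _ h2]  -- (Swap μ p g).mf g with g ≠ p
  · by_cases h2 : x = p
    · subst h2; rw [swap_mf_right _ h1, swap_mf_left]
    · rw [swap_mf_other _ h1 h2, swap_mf_other _ h2 h1]

/-! ### Step constructors -/

/-- Satisfy the blocking pair `(p, partner of g)` from the state `γ - g`:
`p` leaves its partner `wp` for `g`'s (freed) partner `wg`. -/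
lemma stepA (M : Market n) (γ : Matching n) {g p wg wp : Fin n} (hpg : p ≠ g)
    (hg : γ.mf g = some wg) (hp : γ.mf p = some wp)
    (hpref : M.fpref p wg < M.fpref p wp) :
    StepRel M (γ.unmatch g) ((Swap γ g p).unmatch g) := by
  have hwpg : wp ≠ wg := partners_ne hp hg hpg
  refine ⟨p, wg, ⟨?_, ?_, ?_⟩, ?_, ?_, ?_, ?_, ?_⟩
  · rw [unmatch_mf_ne _ hpg, hp]
    intro e; exact hwpg (Option.some_injective _ e)
  · rw [unmatch_mf_ne _ hpg, hp]
    intro w' hw'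
    have h2 : wp = w' := by simpa using hw'
    subst h2; exact hpref
  · rw [unmatch_mw_partner hg]
    intro f' hf'; simp at hf'
  · rw [unmatch_mf_ne _ hpg, swap_mf_right _ hpg, hg]
  · intro w' hw'
    rw [unmatch_mf_ne _ hpg, hp] at hw'
    have h2 : wp = w' := by simpa using hw'
    subst h2
    have hq : γ.mw wp = some p := mw_eq_of_mf hp
    have h1 : (Swap γ g p).mw wp = some g := by
      rw [swap_mw, if_neg (by rw [hq]; exact fun e => hpg (Option.some_injective _ e)),
        if_pos hq]
    rw [unmatch_mw, if_pos h1]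
  · intro f' hf'
    rw [unmatch_mw_partner hg] at hf'
    exact absurd hf' (by simp)
  · intro f' hne _
    by_cases hfg : f' = g
    · subst hfg
      rw [unmatch_mf_self, unmatch_mf_self]
    · rw [unmatch_mf_ne _ hfg, unmatch_mf_ne _ hfg, swap_mf_other _ hfg hne]
  · intro w' hne hne2
    rw [unmatch_mf_ne _ hpg, hp] at hne2
    have hnwp : w' ≠ wp := fun e => hne2 (by rw [e])
    have hg' : γ.mw w' ≠ some g :=
      fun e => hne (Option.some_injective _ ((mf_eq_of_mw e).symm.trans hg))
    have hp' : γ.mw w' ≠ some p :=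
      fun e => hnwp (Option.some_injective _ ((mf_eq_of_mw e).symm.trans hp))
    have hs : (Swap γ g p).mw w' = γ.mw w' := by rw [swap_mw, if_neg hg', if_neg hp']
    rw [unmatch_mw, unmatch_mw, hs]

/-- Satisfy the blocking pair `(g, partner of q)` from the state `γ - g`:
the free firm `g` grabs `q`'s partner `wq`. -/
lemma stepB (M : Market n) (γ : Matching n) {g q wg wq : Fin n} (hqg : q ≠ g)
    (hg : γ.mf g = some wg) (hq : γ.mf q = some wq)
    (hpref : M.wpref wq g < M.wpref wq q) :
    StepRel M (γ.unmatch g) ((Swap γ g q).unmatch q) := by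
  have hwqg : wq ≠ wg := partners_ne hq hg hqg
  have hgq : g ≠ q := fun e => hqg e.symm
  refine ⟨g, wq, ⟨?_, ?_, ?_⟩, ?_, ?_, ?_, ?_, ?_⟩
  · rw [unmatch_mf_self]; simp
  · rw [unmatch_mf_self]; intro w' hw'; simp at hw'
  · rw [unmatch_mw_ne _ (by rw [mw_eq_of_mf hq]; exact fun e => hqg (Option.some_injective _ e)),
      mw_eq_of_mf hq]
    intro f' hf'
    have h2 : q = f' := by simpa using hf'
    subst h2; exact hpref
  · rw [unmatch_mf_ne _ hgq, swap_mf_left, hq]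
  · intro w' hw'
    rw [unmatch_mf_self] at hw'
    exact absurd hw' (by simp)
  · intro f' hf'
    rw [unmatch_mw_ne _ (by rw [mw_eq_of_mf hq]; exact fun e => hqg (Option.some_injective _ e)),
      mw_eq_of_mf hq] at hf'
    have h2 : q = f' := by simpa using hf'
    subst h2
    rw [unmatch_mf_self]
  · intro f' hne hne2
    rw [unmatch_mw_ne _ (by rw [mw_eq_of_mf hq]; exact fun e => hqg (Option.some_injective _ e)),
      mw_eq_of_mf hq] at hne2
    have hnq : f' ≠ q := fun e => hne2 (by rw [e])
    rw [unmatch_mf_ne _ hnq, unmatch_mf_ne _ hne, swap_mf_other _ hne hnq]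
  · intro w' hne _
    by_cases hwg : w' = wg
    · have h1 : γ.mw w' = some g := by rw [hwg]; exact mw_eq_of_mf hg
      have h2 : (Swap γ g q).mw w' = some q := by rw [swap_mw, if_pos h1]
      rw [unmatch_mw, if_pos h2, unmatch_mw, if_pos h1]
    · have hg' : γ.mw w' ≠ some g :=
        fun e => hwg (Option.some_injective _ ((mf_eq_of_mw e).symm.trans hg))
      have hq' : γ.mw w' ≠ some q :=
        fun e => hne (Option.some_injective _ ((mf_eq_of_mw e).symm.trans hq))
      have hs : (Swap γ g q).mw w' = γ.mw w' := by rw [swap_mw, if_neg hg', if_neg hq']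
      rw [unmatch_mw, unmatch_mw, hs, if_neg hq', if_neg hg']

/-- The two free agents `g` and its partner re-match: from `γ - g` back to `γ`. -/
lemma stepC (M : Market n) (γ : Matching n) {g wg : Fin n} (hg : γ.mf g = some wg) :
    StepRel M (γ.unmatch g) γ := by
  refine ⟨g, wg, ⟨?_, ?_, ?_⟩, hg, ?_, ?_, ?_, ?_⟩
  · rw [unmatch_mf_self]; simp
  · rw [unmatch_mf_self]; intro w' hw'; simp at hw'
  · rw [unmatch_mw_partner hg]; intro f' hf'; simp at hf'
  · intro w' hw'
    rw [unmatch_mf_self] at hw'; exact absurd hw' (by simp)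
  · intro f' hf'
    rw [unmatch_mw_partner hg] at hf'; exact absurd hf' (by simp)
  · intro f' hne _
    rw [unmatch_mf_ne _ hne]
  · intro w' hne _
    have hg' : γ.mw w' ≠ some g :=
      fun e => hne (Option.some_injective _ ((mf_eq_of_mw e).symm.trans hg))
    rw [unmatch_mw_ne _ hg']

/-! ### Stability consequences -/

lemma stable_not_both {M : Market n} {σ : Matching n} (hs : Stable M σ)
    (hperf : Perf σ) {x y : Fin n} (hxy : σ.mf x ≠ some y) :
    ¬ (M.fpref x y < M.fpref x (pF σ x) ∧ M.wpref y x < M.wpref y (pW σ y)) := by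
  rintro ⟨h1, h2⟩
  refine hs x y ⟨hxy, ?_, ?_⟩
  · rw [pF_spec hperf x]
    intro w' hw'
    have h3 : pF σ x = w' := by simpa using hw'
    subst h3; exact h1
  · rw [pW_spec hperf y]
    intro f'' hf''
    have h3 : pW σ y = f'' := by simpa using hf''
    subst h3; exact h2

/-- If `y` (strictly) prefers `x` to her partner, `x` prefers his partner to `y`. -/
lemma prefer_partner_f {M : Market n} {σ : Matching n} (hs : Stable M σ)
    (hperf : Perf σ) {x y : Fin n} (hxy : σ.mf x ≠ some y)
    (h2 : M.wpref y x < M.wpref y (pW σ y)) :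
    M.fpref x (pF σ x) < M.fpref x y := by
  have hnb := stable_not_both hs hperf hxy
  have hne : y ≠ pF σ x := by
    intro e; rw [pF_spec hperf x, ← e] at hxy; exact hxy rfl
  rcases Nat.lt_or_ge (M.fpref x y) (M.fpref x (pF σ x)) with h | h
  · exact absurd ⟨h, h2⟩ hnb
  · exact lt_of_le_of_ne h (fun e => hne (M.fpref_inj x e.symm))

/-- If `x` (strictly) prefers `y` to his partner, `y` prefers her partner to `x`. -/
lemma prefer_partner_w {M : Market n} {σ : Matching n} (hs : Stable M σ)
    (hperf : Perf σ) {x y : Fin n} (hxy : σ.mf x ≠ some y)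
    (h1 : M.fpref x y < M.fpref x (pF σ x)) :
    M.wpref y (pW σ y) < M.wpref y x := by
  have hnb := stable_not_both hs hperf hxy
  have hne : x ≠ pW σ y := by
    intro e
    rw [e, pF_spec hperf (pW σ y), pF_pW hperf] at hxy
    exact hxy rfl
  rcases Nat.lt_or_ge (M.wpref y x) (M.wpref y (pW σ y)) with h | h
  · exact absurd ⟨h1, h⟩ hnb
  · exact lt_of_le_of_ne h (fun e => hne (M.wpref_inj y e.symm))

/-! ### Edges: moving vacancies -/

/-- The vacancy can move from firm `h` to firm `f'` in the stable matching `σ`. -/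
def Edge (M : Market n) (σ : Matching n) (h f' : Fin n) : Prop :=
  h ≠ f' ∧ (M.fpref f' (pF σ h) < M.fpref f' (pF σ f') ∨
            M.wpref (pF σ f') h < M.wpref (pF σ f') f')

lemma edge_path (M : Market n) {σ : Matching n} (hs : Stable M σ) {h f' : Fin n}
    (he : Edge M σ h f') :
    Relation.ReflTransGen (StepRel M) (σ.unmatch h) (σ.unmatch f') := by
  have hperf := stable_perf hs
  obtain ⟨hne, hcase⟩ := he
  have hh := pF_spec hperf h
  have hf := pF_spec hperf f'
  have hfh : f' ≠ h := fun e => hne e.symm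
  have hpne : pF σ h ≠ pF σ f' := pF_ne hperf hne
  rcases hcase with h1 | h2
  · -- R1
    have s1 : StepRel M (σ.unmatch h) ((Swap σ h f').unmatch h) :=
      stepA M σ hfh hh hf h1
    have hxy : σ.mf f' ≠ some (pF σ h) := by
      rw [hf]; exact fun e => hpne (Option.some_injective _ e).symm
    have hc := prefer_partner_w hs hperf hxy h1
    rw [pW_pF hperf] at hc
    have s2 : StepRel M ((Swap σ h f').unmatch h) ((Swap (Swap σ h f') h f').unmatch f') :=
      stepB M (Swap σ h f') hfh
        (by rw [swap_mf_left, hf]) (by rw [swap_mf_right _ hfh, hh]) hc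
    rw [swap_swap] at s2
    exact Relation.ReflTransGen.head s1 (Relation.ReflTransGen.single s2)
  · -- R2
    have s1 : StepRel M (σ.unmatch h) ((Swap σ h f').unmatch f') :=
      stepB M σ hfh hh hf h2
    have hxy : σ.mf h ≠ some (pF σ f') := by
      rw [hh]; exact fun e => hpne (Option.some_injective _ e)
    have ha : M.fpref h (pF σ h) < M.fpref h (pF σ f') := by
      have := prefer_partner_f hs hperf hxy (by rw [pW_pF hperf]; exact h2)
      exact this
    have s2 : StepRel M ((Swap σ h f').unmatch f') ((Swap (Swap σ h f') f' h).unmatch f') :=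
      stepA M (Swap σ h f') hne
        (by rw [swap_mf_right _ hfh, hh]) (by rw [swap_mf_left, hf]) ha
    rw [swap_comm (Swap σ h f'), swap_swap] at s2
    exact Relation.ReflTransGen.head s1 (Relation.ReflTransGen.single s2)

lemma closure_path (M : Market n) {σ : Matching n} (hs : Stable M σ)
    {start : Matching n} {g x : Fin n}
    (hrt : Relation.ReflTransGen (Edge M σ) g x)
    (hg : Relation.ReflTransGen (StepRel M) start (σ.unmatch g)) :
    Relation.ReflTransGen (StepRel M) start (σ.unmatch x) := by
  induction hrt with
  | refl => exact hg
  | tail _ hbc ih => exact ih.trans (edge_path M hs hbc)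

/-! ### The fragment argument -/

/-- All stable matchings agree at the firm `x`. -/
def Frozen (M : Market n) (x : Fin n) : Prop :=
  ∀ τ τ' : Matching n, Stable M τ → Stable M τ' → τ.mf x = τ'.mf x

/-- If `x` is not reachable from `g` by edges of the stable matching `σ`, then the
complement of the edge-closure of `g` forms a fragment; in a market with no
non-trivial fragments, all stable matchings therefore agree at `x`. -/
lemma frozen_of_not_reach (M : Market n) (hno : NoNontrivialFragments M)
    {σ : Matching n} (hs : Stable M σ) (g : Fin n) {x : Fin n}
    (hx : ¬ Relation.ReflTransGen (Edge M σ) g x) :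
    Frozen M x := by
  classical
  have hperf := stable_perf hs
  set Fb : Finset (Fin n) :=
    Finset.univ.filter (fun z => ¬ Relation.ReflTransGen (Edge M σ) g z) with hFb
  have hmemFb : ∀ z, z ∈ Fb ↔ ¬ Relation.ReflTransGen (Edge M σ) g z := by
    intro z; simp [hFb]
  set Wb : Finset (Fin n) := Fb.image (pF σ) with hWb
  have hfrag : IsFragment M Fb Wb := by
    refine ⟨pF σ, ?_, ?_, ?_, ?_, ?_, ?_, ?_, ?_⟩
    · intro e
      have hg : g ∈ Fb := e ▸ Finset.mem_univ g
      exact ((hmemFb g).mp hg) Relation.ReflTransGen.refl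
    · intro e
      have hg : pF σ g ∈ Wb := e ▸ Finset.mem_univ _
      rw [hWb] at hg
      obtain ⟨z, hz, hze⟩ := Finset.mem_image.mp hg
      have : z = g := pF_inj hperf hze
      subst this
      exact ((hmemFb z).mp hz) Relation.ReflTransGen.refl
    · exact (Finset.card_image_of_injOn (fun a _ b _ e => pF_inj hperf e)).symm
    · intro f1 hf1; exact Finset.mem_image_of_mem _ hf1
    · exact fun a _ b _ e => pF_inj hperf e
    · intro f1 hf1 f2 hf2 hlt
      by_cases hee : f1 = f2
      · subst hee; exact absurd hlt (lt_irrefl _)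
      · have hxy : σ.mf f1 ≠ some (pF σ f2) := by
          rw [pF_spec hperf f1]
          exact fun e => hee (pF_inj hperf (Option.some_injective _ e))
        have := prefer_partner_w hs hperf hxy hlt
        rw [pW_pF hperf] at this
        exact this
    · intro f1 hf1 w hw
      set h' := pW σ w with hh'
      have hfw : pF σ h' = w := pF_pW hperf w
      have hnotin : h' ∉ Fb := by
        intro hcon
        exact hw (hWb ▸ Finset.mem_image.mpr ⟨h', hcon, hfw⟩)
      have hreach : Relation.ReflTransGen (Edge M σ) g h' := by
        by_contra hc; exact hnotin ((hmemFb h').mpr hc)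
      have hne : h' ≠ f1 := by
        intro e; rw [e] at hreach
        exact ((hmemFb f1).mp hf1) hreach
      have hnoedge : ¬ Edge M σ h' f1 := by
        intro he
        exact ((hmemFb f1).mp hf1) (hreach.tail he)
      have hnA : ¬ (M.fpref f1 (pF σ h') < M.fpref f1 (pF σ f1)) := by
        intro hA; exact hnoedge ⟨hne, Or.inl hA⟩
      rw [hfw] at hnA
      have hwne : w ≠ pF σ f1 := by
        rw [← hfw]; exact pF_ne hperf hne
      exact lt_of_le_of_ne (Nat.le_of_not_lt hnA)
        (fun e => hwne (M.fpref_inj f1 e).symm)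
    · intro f1 hf1 f'' hf''
      have hreach : Relation.ReflTransGen (Edge M σ) g f'' := by
        by_contra hc; exact hf'' ((hmemFb f'').mpr hc)
      have hne : f'' ≠ f1 := by
        intro e; rw [e] at hreach
        exact ((hmemFb f1).mp hf1) hreach
      have hnoedge : ¬ Edge M σ f'' f1 := by
        intro he
        exact ((hmemFb f1).mp hf1) (hreach.tail he)
      have hnB : ¬ (M.wpref (pF σ f1) f'' < M.wpref (pF σ f1) f1) := by
        intro hB; exact hnoedge ⟨hne, Or.inr hB⟩
      exact lt_of_le_of_ne (Nat.le_of_not_lt hnB)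
        (fun e => hne (M.wpref_inj _ e).symm)
  intro τ τ' hτ hτ'
  exact (hno Fb Wb hfrag τ τ' hτ hτ').1 x ((hmemFb x).mpr hx)

/-! ### Rotation paths -/

lemma pF_congr {σ τ : Matching n} {x : Fin n} (h : σ.mf x = τ.mf x) :
    pF σ x = pF τ x := by simp [pF, h]

lemma pW_congr {σ τ : Matching n} {y : Fin n} (h : σ.mw y = τ.mw y) :
    pW σ y = pW τ y := by simp [pW, h]

/-- Rotating a cycle: all differing firms prefer `τ`; vacancy stays at `g`. -/
lemma rot1 (M : Market n) :
    ∀ N : ℕ, ∀ σ τ : Matching n, ∀ g : Fin n,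
    {x | σ.mf x ≠ τ.mf x}.ncard ≤ N →
    Perf σ → Perf τ →
    σ.mf g ≠ τ.mf g →
    (∀ x, σ.mf x ≠ τ.mf x → ∃ k, (fun z => pW τ (pF σ z))^[k] g = x) →
    (∀ x, σ.mf x ≠ τ.mf x → x ≠ g → M.fpref x (pF τ x) < M.fpref x (pF σ x)) →
    Relation.ReflTransGen (StepRel M) (σ.unmatch g) (τ.unmatch g) := by
  intro N
  induction N with
  | zero =>
    intro σ τ g hcard _ _ hg _ _
    exact absurd (Set.ncard_eq_zero (Set.toFinite _) |>.mp (Nat.le_zero.mp hcard))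
      (by intro h; exact (Set.eq_empty_iff_forall_notMem.mp h g) hg)
  | succ N ih =>
    intro σ τ g hcard hσ hτ hg HORB HPREF
    set wg := pF σ g with hwg
    set p := pW τ wg with hp
    have hσg : σ.mf g = some wg := pF_spec hσ g
    have hτp : τ.mf p = some wg := mf_eq_of_mw (pW_spec hτ wg)
    have hpg : p ≠ g := by
      intro e; rw [e] at hτp; exact hg (hσg.trans hτp.symm)
    have hpD : σ.mf p ≠ τ.mf p := by
      intro e
      rw [hτp] at e
      have := mw_eq_of_mf e
      rw [mw_eq_of_mf hσg] at this
      exact hpg (Option.some_injective _ this.symm)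
    have hpFτp : pF τ p = wg := pF_eq hτp
    have hpref : M.fpref p wg < M.fpref p (pF σ p) := by
      have := HPREF p hpD hpg
      rwa [hpFτp] at this
    have step : StepRel M (σ.unmatch g) ((Swap σ g p).unmatch g) :=
      stepA M σ hpg hσg (pF_spec hσ p) hpref
    set σ' := Swap σ g p with hσ'def
    have hσ'g : σ'.mf g = σ.mf p := swap_mf_left σ g p
    have hσ'p : σ'.mf p = τ.mf p := by
      rw [hσ'def, swap_mf_right _ hpg, hσg, hτp]
    have hσ'other : ∀ x, x ≠ g → x ≠ p → σ'.mf x = σ.mf x :=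
      fun x h1 h2 => swap_mf_other σ h1 h2
    by_cases hdeg : σ'.mf g = τ.mf g
    · -- σ' = τ
      have hπp : pW τ (pF σ p) = g := by
        have : τ.mf g = some (pF σ p) := by
          rw [← hdeg, hσ'g, pF_spec hσ p]
        exact pW_eq (mw_eq_of_mf this)
      have hiter : ∀ k, (fun z => pW τ (pF σ z))^[k] g = g ∨
          (fun z => pW τ (pF σ z))^[k] g = p := by
        intro k
        induction k with
        | zero => exact Or.inl rfl
        | succ k ihk =>
          rw [Function.iterate_succ_apply']
          rcases ihk with h | h
          · rw [h]; exact Or.inr (by rw [← hwg, ← hp])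
          · rw [h]; exact Or.inl hπp
      have heq : σ' = τ := by
        apply Matching.ext_mf
        intro x
        by_cases h1 : x = g
        · subst h1; exact hdeg
        · by_cases h2 : x = p
          · subst h2; exact hσ'p
          · rw [hσ'other x h1 h2]
            by_contra hne
            obtain ⟨k, hk⟩ := HORB x hne
            rcases hiter k with h | h
            · exact h1 (hk.symm.trans h)
            · exact h2 (hk.symm.trans h)
      rw [heq] at step
      exact Relation.ReflTransGen.single step
    · -- recurse
      have hcard' : {x | σ'.mf x ≠ τ.mf x}.ncard ≤ N := by
      -- D' ⊆ D \ {p}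
        have hsub : {x | σ'.mf x ≠ τ.mf x} ⊆ {x | σ.mf x ≠ τ.mf x} \ {p} := by
          intro x hx
          simp only [Set.mem_setOf_eq] at hx
          have hxp : x ≠ p := by
            intro e; rw [e, hσ'p] at hx; exact hx rfl
          have hxD : σ.mf x ≠ τ.mf x := by
            by_cases h1 : x = g
            · subst h1; exact hg
            · rw [← hσ'other x h1 hxp]; exact hx
          exact ⟨hxD, hxp⟩
        have h1 : {x | σ'.mf x ≠ τ.mf x}.ncard ≤
            ({x | σ.mf x ≠ τ.mf x} \ {p}).ncard :=
          Set.ncard_le_ncard hsub (Set.toFinite _)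
        have h2 : ({x | σ.mf x ≠ τ.mf x} \ {p}).ncard < {x | σ.mf x ≠ τ.mf x}.ncard :=
          Set.ncard_diff_singleton_lt_of_mem hpD (Set.toFinite _)
        omega
      have horb' : ∀ x, σ'.mf x ≠ τ.mf x →
          ∃ k, (fun z => pW τ (pF σ' z))^[k] g = x := by
        have key : ∀ k, ∀ x, (fun z => pW τ (pF σ z))^[k] g = x →
            x = p ∨ ∃ k', (fun z => pW τ (pF σ' z))^[k'] g = x := by
          intro k
          induction k with
          | zero =>
            intro x hx; right; exact ⟨0, hx⟩
          | succ k ihk =>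
            intro x hx
            rw [Function.iterate_succ_apply'] at hx
            set y := (fun z => pW τ (pF σ z))^[k] g with hy
            rcases ihk y rfl with h | ⟨k', hk'⟩
            · -- y = p : x = π p, and π' g = π p
              right
              refine ⟨1, ?_⟩
              simp only [Function.iterate_one]
              rw [← hx, h]
              congr 1
              exact pF_eq (hσ'g.trans (pF_spec hσ p))
            · by_cases hyg : y = g
              · left; rw [← hx, hyg]
              · by_cases hyp : y = p
                · right
                  refine ⟨1, ?_⟩
                  simp only [Function.iterate_one]
                  rw [← hx, hyp]
                  have : pF σ' g = pF σ p := pF_eq (hσ'g.trans (pF_spec hσ p))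
                  rw [this]
                · right
                  refine ⟨k' + 1, ?_⟩
                  rw [Function.iterate_succ_apply', hk', ← hx]
                  have : pF σ' y = pF σ y := pF_congr (hσ'other y hyg hyp)
                  rw [this]
        intro x hx
        have hxp : x ≠ p := by intro e; rw [e, hσ'p] at hx; exact hx rfl
        have hxD : σ.mf x ≠ τ.mf x := by
          by_cases h1 : x = g
          · subst h1; exact hg
          · rw [← hσ'other x h1 hxp]; exact hx
        obtain ⟨k, hk⟩ := HORB x hxD
        rcases key k x hk with h | h
        · exact absurd h hxp
        · exact h
      have hpref' : ∀ x, σ'.mf x ≠ τ.mf x → x ≠ g →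
          M.fpref x (pF τ x) < M.fpref x (pF σ' x) := by
        intro x hx hxg
        have hxp : x ≠ p := by intro e; rw [e, hσ'p] at hx; exact hx rfl
        have heq := hσ'other x hxg hxp
        rw [pF_congr heq]
        exact HPREF x (by rw [← heq]; exact hx) hxg
      exact Relation.ReflTransGen.head step
        (ih σ' τ g hcard' (swap_perf hσ g p) hτ hdeg horb' hpref')

/-- Rotating a cycle: all differing workers prefer `τ`; the free firm changes,
ending at the firm whose `τ`-partner is `g`'s `σ`-partner. -/
lemma rot2 (M : Market n) :
    ∀ N : ℕ, ∀ σ τ : Matching n, ∀ g : Fin n,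
    {x | σ.mf x ≠ τ.mf x}.ncard ≤ N →
    Perf σ → Perf τ →
    σ.mf g ≠ τ.mf g →
    (∀ x, σ.mf x ≠ τ.mf x → ∃ k, (fun z => pW σ (pF τ z))^[k] g = x) →
    (∀ x, σ.mf x ≠ τ.mf x → τ.mf x ≠ σ.mf g →
        M.wpref (pF τ x) x < M.wpref (pF τ x) (pW σ (pF τ x))) →
    Relation.ReflTransGen (StepRel M) (σ.unmatch g) (τ.unmatch (pW τ (pF σ g))) := by
  intro N
  induction N with
  | zero =>
    intro σ τ g hcard _ _ hg _ _
    exact absurd (Set.ncard_eq_zero (Set.toFinite _) |>.mp (Nat.le_zero.mp hcard))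
      (by intro h; exact (Set.eq_empty_iff_forall_notMem.mp h g) hg)
  | succ N ih =>
    intro σ τ g hcard hσ hτ hg HORB HPREF
    set y := pF τ g with hy
    set q := pW σ y with hq
    have hτg : τ.mf g = some y := pF_spec hτ g
    have hσq : σ.mf q = some y := mf_eq_of_mw (pW_spec hσ y)
    have hqg : q ≠ g := by
      intro e; rw [e] at hσq; exact hg (hσq.trans hτg.symm)
    have hex : τ.mf g ≠ σ.mf g := fun e => hg e.symm
    have hpref : M.wpref y g < M.wpref y q := HPREF g hg hex
    have step : StepRel M (σ.unmatch g) ((Swap σ g q).unmatch q) :=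
      stepB M σ hqg (pF_spec hσ g) hσq hpref
    set σ₂ := Swap σ g q with hσ₂def
    have hσ₂g : σ₂.mf g = τ.mf g := by
      rw [hσ₂def, swap_mf_left, hσq, hτg]
    have hσ₂q : σ₂.mf q = σ.mf g := by
      rw [hσ₂def, swap_mf_right _ hqg]
    have hσ₂other : ∀ x, x ≠ g → x ≠ q → σ₂.mf x = σ.mf x :=
      fun x h1 h2 => swap_mf_other σ h1 h2
    have hqD : σ.mf q ≠ τ.mf q := by
      intro e
      rw [hσq] at e
      have h1 := mw_eq_of_mf e.symm
      rw [mw_eq_of_mf hτg] at h1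
      exact hqg (Option.some_injective _ h1).symm
    have hend : pW τ (pF σ₂ q) = pW τ (pF σ g) := by
      congr 1
      exact pF_eq (hσ₂q.trans (pF_spec hσ g))
    by_cases hdeg : σ₂.mf q = τ.mf q
    · -- σ₂ = τ, and the endpoint is q
      have hρq : pW σ (pF τ q) = g := by
        have h1 : σ.mf g = some (pF τ q) := by
          rw [← hσ₂q, hdeg, pF_spec hτ q]
        exact pW_eq (mw_eq_of_mf h1)
      have hiter : ∀ k, (fun z => pW σ (pF τ z))^[k] g = g ∨
          (fun z => pW σ (pF τ z))^[k] g = q := by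
        intro k
        induction k with
        | zero => exact Or.inl rfl
        | succ k ihk =>
          rw [Function.iterate_succ_apply']
          rcases ihk with h | h
          · rw [h]; exact Or.inr (by rw [← hy, ← hq])
          · rw [h]; exact Or.inl hρq
      have heq : σ₂ = τ := by
        apply Matching.ext_mf
        intro x
        by_cases h1 : x = g
        · subst h1; exact hσ₂g
        · by_cases h2 : x = q
          · subst h2; exact hdeg
          · rw [hσ₂other x h1 h2]
            by_contra hne
            obtain ⟨k, hk⟩ := HORB x hne
            rcases hiter k with h | h
            · exact h1 (hk.symm.trans h)
            · exact h2 (hk.symm.trans h)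
      have hendq : pW τ (pF σ g) = q := by
        have h1 : τ.mf q = some (pF σ g) := by
          rw [← hdeg, hσ₂q, pF_spec hσ g]
        exact pW_eq (mw_eq_of_mf h1)
      rw [hendq, ← heq]
      exact Relation.ReflTransGen.single step
    · -- recurse
      have hcard' : {x | σ₂.mf x ≠ τ.mf x}.ncard ≤ N := by
        have hsub : {x | σ₂.mf x ≠ τ.mf x} ⊆ {x | σ.mf x ≠ τ.mf x} \ {g} := by
          intro x hx
          simp only [Set.mem_setOf_eq] at hx
          have hxg : x ≠ g := by
            intro e; rw [e, hσ₂g] at hx; exact hx rfl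
          have hxD : σ.mf x ≠ τ.mf x := by
            by_cases h2 : x = q
            · subst h2; exact hqD
            · rw [← hσ₂other x hxg h2]; exact hx
          exact ⟨hxD, hxg⟩
        have h1 : {x | σ₂.mf x ≠ τ.mf x}.ncard ≤
            ({x | σ.mf x ≠ τ.mf x} \ {g}).ncard :=
          Set.ncard_le_ncard hsub (Set.toFinite _)
        have h2 : ({x | σ.mf x ≠ τ.mf x} \ {g}).ncard < {x | σ.mf x ≠ τ.mf x}.ncard :=
          Set.ncard_diff_singleton_lt_of_mem hg (Set.toFinite _)
        omega
      have hy_ne : ∀ x, x ≠ g → pF τ x ≠ y := by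
        intro x hxg e
        exact hxg (pF_inj hτ (e.trans hy))
      have hmw_eq : ∀ v, v ≠ y → v ≠ pF σ g → σ₂.mw v = σ.mw v := by
        intro v h1 h2
        rw [hσ₂def, swap_mw, if_neg, if_neg]
        · intro e; exact h1 (Option.some_injective _
            ((mf_eq_of_mw e).symm.trans hσq) ▸ rfl)
        · intro e; exact h2 (Option.some_injective _
            ((mf_eq_of_mw e).symm.trans (pF_spec hσ g)) ▸ rfl)
      have horb' : ∀ x, σ₂.mf x ≠ τ.mf x →
          ∃ k, (fun z => pW σ₂ (pF τ z))^[k] q = x := by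
        have key : ∀ k, ∀ x, (fun z => pW σ (pF τ z))^[k] g = x →
            x = g ∨ ∃ k', (fun z => pW σ₂ (pF τ z))^[k'] q = x := by
          intro k
          induction k with
          | zero => intro x hx; left; exact hx.symm
          | succ k ihk =>
            intro x hx
            rw [Function.iterate_succ_apply'] at hx
            set z := (fun u => pW σ (pF τ u))^[k] g with hz
            rcases ihk z rfl with h | ⟨k', hk'⟩
            · -- z = g : x = ρ g = q
              right; refine ⟨0, ?_⟩
              simp only [Function.iterate_zero, id]
              rw [← hx, h, ← hy, ← hq]
            · by_cases hzg : z = g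
              · right; refine ⟨0, ?_⟩
                simp only [Function.iterate_zero, id]
                rw [← hx, hzg, ← hy, ← hq]
              · -- z ≠ g
                by_cases hv : pF τ z = pF σ g
                · left
                  rw [← hx, hv]
                  exact pW_pF hσ g
                · right
                  refine ⟨k' + 1, ?_⟩
                  rw [Function.iterate_succ_apply', hk', ← hx]
                  exact pW_congr (hmw_eq (pF τ z) (hy_ne z hzg) hv)
        intro x hx
        have hxg : x ≠ g := by intro e; rw [e, hσ₂g] at hx; exact hx rfl
        have hxD : σ.mf x ≠ τ.mf x := by
          by_cases h2 : x = q
          · subst h2; exact hqD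
          · rw [← hσ₂other x hxg h2]; exact hx
        obtain ⟨k, hk⟩ := HORB x hxD
        rcases key k x hk with h | h
        · exact absurd h hxg
        · exact h
      have hpref' : ∀ x, σ₂.mf x ≠ τ.mf x → τ.mf x ≠ σ₂.mf q →
          M.wpref (pF τ x) x < M.wpref (pF τ x) (pW σ₂ (pF τ x)) := by
        intro x hx hexc
        rw [hσ₂q] at hexc
        have hxg : x ≠ g := by intro e; rw [e, hσ₂g] at hx; exact hx rfl
        have hxD : σ.mf x ≠ τ.mf x := by
          by_cases h2 : x = q
          · subst h2; exact hqD
          · rw [← hσ₂other x hxg h2]; exact hx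
        have hv : pF τ x ≠ pF σ g := by
          intro e
          exact hexc ((pF_spec hτ x).trans (e ▸ (pF_spec hσ g).symm))
        rw [pW_congr (hmw_eq (pF τ x) (hy_ne x hxg) hv)]
        exact HPREF x hxD hexc
      rw [← hend]
      exact Relation.ReflTransGen.head step
        (ih σ₂ τ q hcard' (swap_perf hσ g q) hτ hdeg horb' hpref')

/-! ### The worker-optimal stable matching -/

lemma pW_inj {μ : Matching n} (h : Perf μ) {y y' : Fin n}
    (e : pW μ y = pW μ y') : y = y' := by
  have h1 := pW_spec h y
  have h2 := pW_spec h y'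
  rw [e] at h1
  exact Option.some_injective _ ((mf_eq_of_mw h1).symm.trans (mf_eq_of_mw h2))

lemma exists_wmeet (M : Market n) {σ τ : Matching n} (hσs : Stable M σ)
    (hτs : Stable M τ) :
    ∃ ν : Matching n, Stable M ν ∧
      ∀ y, M.wpref y (pW ν y) ≤ M.wpref y (pW σ y) ∧
           M.wpref y (pW ν y) ≤ M.wpref y (pW τ y) := by
  classical
  have hσ := stable_perf hσs
  have hτ := stable_perf hτs
  set c : Fin n → Fin n :=
    fun y => if M.wpref y (pW σ y) ≤ M.wpref y (pW τ y) then pW σ y else pW τ y with hc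
  have hcσ : ∀ y, c y = pW σ y ∨ c y = pW τ y := by
    intro y; rw [hc]; dsimp only; split_ifs with h
    · exact Or.inl rfl
    · exact Or.inr rfl
  have hcmin : ∀ y, M.wpref y (c y) ≤ M.wpref y (pW σ y) ∧
      M.wpref y (c y) ≤ M.wpref y (pW τ y) := by
    intro y; rw [hc]; dsimp only; split_ifs with h
    · exact ⟨le_refl _, h⟩
    · exact ⟨Nat.le_of_not_le h, le_refl _⟩
  have hinj : Function.Injective c := by
    intro y₁ y₂ he
    by_contra hne
    set x := c y₁ with hx
    have h2 : c y₂ = x := he.symm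
    have key : ∀ (ρ ρ' : Matching n), Stable M ρ → Perf ρ →
        ∀ y₁ y₂ : Fin n, y₁ ≠ y₂ → pW ρ y₁ = x →
        M.wpref y₂ x ≤ M.wpref y₂ (pW ρ y₂) →
        M.fpref x y₂ < M.fpref x y₁ → False := by
      intro ρ ρ' hρs hρ y₁ y₂ hne h1 hle hlt
      have hmf : ρ.mf x = some y₁ := mf_eq_of_mw (h1 ▸ pW_spec hρ y₁)
      have hstrict : M.wpref y₂ x < M.wpref y₂ (pW ρ y₂) := by
        rcases Nat.lt_or_ge (M.wpref y₂ x) (M.wpref y₂ (pW ρ y₂)) with h | h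
        · exact h
        · have heq : pW ρ y₂ = x := M.wpref_inj y₂ (Nat.le_antisymm h hle)
          have h5 : ρ.mf x = some y₂ := mf_eq_of_mw (heq ▸ pW_spec hρ y₂)
          rw [hmf] at h5
          exact absurd (Option.some_injective _ h5) hne
      refine hρs x y₂ ⟨?_, ?_, ?_⟩
      · rw [hmf]; intro e; exact hne (Option.some_injective _ e)
      · rw [hmf]; intro w' hw'
        have h3 : y₁ = w' := by simpa using hw'
        subst h3; exact hlt
      · rw [pW_spec hρ y₂]; intro f'' hf''
        have h3 : pW ρ y₂ = f'' := by simpa using hf''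
        subst h3; exact hstrict
    have hne' : y₂ ≠ y₁ := fun e => hne e.symm
    rcases hcσ y₁ with e1 | e1 <;> rcases hcσ y₂ with e2 | e2
    · have hpp : pW σ y₁ = pW σ y₂ := by rw [← e1, ← e2, ← hx]; exact he
      exact hne (pW_inj hσ hpp)
    · have h1 : pW σ y₁ = x := by rw [← e1, ← hx]
      have h2' : pW τ y₂ = x := by rw [← e2]; exact h2
      rcases Nat.lt_or_ge (M.fpref x y₂) (M.fpref x y₁) with hlt | hge
      · have hle : M.wpref y₂ x ≤ M.wpref y₂ (pW σ y₂) := by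
          rw [← h2', ← e2]; exact (hcmin y₂).1
        exact key σ τ hσs hσ y₁ y₂ hne h1 hle hlt
      · have hle' : M.wpref y₁ x ≤ M.wpref y₁ (pW τ y₁) := by
          rw [← h1, ← e1]; exact (hcmin y₁).2
        have hlt' : M.fpref x y₁ < M.fpref x y₂ :=
          lt_of_le_of_ne hge (fun e => hne (M.fpref_inj x e))
        exact key τ σ hτs hτ y₂ y₁ hne' h2' hle' hlt'
    · have h1 : pW τ y₁ = x := by rw [← e1, ← hx]
      have h2' : pW σ y₂ = x := by rw [← e2]; exact h2
      rcases Nat.lt_or_ge (M.fpref x y₂) (M.fpref x y₁) with hlt | hge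
      · have hle : M.wpref y₂ x ≤ M.wpref y₂ (pW τ y₂) := by
          rw [← h2', ← e2]; exact (hcmin y₂).2
        exact key τ σ hτs hτ y₁ y₂ hne h1 hle hlt
      · have hle' : M.wpref y₁ x ≤ M.wpref y₁ (pW σ y₁) := by
          rw [← h1, ← e1]; exact (hcmin y₁).1
        have hlt' : M.fpref x y₁ < M.fpref x y₂ :=
          lt_of_le_of_ne hge (fun e => hne (M.fpref_inj x e))
        exact key σ τ hσs hσ y₂ y₁ hne' h2' hle' hlt'
    · have hpp : pW τ y₁ = pW τ y₂ := by rw [← e1, ← e2, ← hx]; exact he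
      exact hne (pW_inj hτ hpp)
  have hbij : Function.Bijective c := ⟨hinj, Finite.injective_iff_surjective.mp hinj⟩
  let e : Fin n ≃ Fin n := Equiv.ofBijective c hbij
  refine ⟨⟨fun x => some (e.symm x), fun y => some (c y), ?_⟩, ?_, ?_⟩
  · intro x w
    simp only [Option.some_inj]
    constructor
    · intro h; rw [← h]; exact (Equiv.apply_symm_apply e x)
    · intro h; exact (Equiv.symm_apply_eq e).mpr h.symm
  · rintro x y ⟨h1, h2, h3⟩
    dsimp only at h1 h2 h3
    set yx := e.symm x with hyx
    have hcyx : c yx = x := Equiv.apply_symm_apply e x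
    have hney : y ≠ yx := fun eq => h1 (by rw [eq])
    have hfpref : M.fpref x y < M.fpref x yx := h2 yx (Option.mem_def.mpr rfl)
    have hwpref : M.wpref y x < M.wpref y (c y) := h3 (c y) (Option.mem_def.mpr rfl)
    rcases hcσ yx with ecase | ecase
    · have hps : pW σ yx = x := by rw [← ecase, hcyx]
      have hmf : σ.mf x = some yx := mf_eq_of_mw (hps ▸ pW_spec hσ yx)
      refine hσs x y ⟨?_, ?_, ?_⟩
      · rw [hmf]; intro h; exact hney (Option.some_injective _ h).symm
      · rw [hmf]; intro w' hw'
        have h4 : yx = w' := by simpa using hw'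
        subst h4; exact hfpref
      · rw [pW_spec hσ y]; intro f'' hf''
        have h4 : pW σ y = f'' := by simpa using hf''
        subst h4; exact lt_of_lt_of_le hwpref (hcmin y).1
    · have hps : pW τ yx = x := by rw [← ecase, hcyx]
      have hmf : τ.mf x = some yx := mf_eq_of_mw (hps ▸ pW_spec hτ yx)
      refine hτs x y ⟨?_, ?_, ?_⟩
      · rw [hmf]; intro h; exact hney (Option.some_injective _ h).symm
      · rw [hmf]; intro w' hw'
        have h4 : yx = w' := by simpa using hw'
        subst h4; exact hfpref
      · rw [pW_spec hτ y]; intro f'' hf''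
        have h4 : pW τ y = f'' := by simpa using hf''
        subst h4; exact lt_of_lt_of_le hwpref (hcmin y).2
  · intro y
    rw [pW_eq rfl]
    exact hcmin y

/-- The worker-optimal stable matching exists. -/
lemma exists_wopt (M : Market n) {μ₀ : Matching n} (hμ₀ : Stable M μ₀) :
    ∃ ω : Matching n, Stable M ω ∧
      ∀ σ, Stable M σ → ∀ y, M.wpref y (pW ω y) ≤ M.wpref y (pW σ y) := by
  classical
  set Φ : Matching n → ℕ := fun σ => ∑ y : Fin n, M.wpref y (pW σ y) with hΦ
  have hex : ∃ k, ∃ σ, Stable M σ ∧ Φ σ = k := ⟨Φ μ₀, μ₀, hμ₀, rfl⟩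
  obtain ⟨ω, hωs, hωΦ⟩ := Nat.find_spec hex
  refine ⟨ω, hωs, ?_⟩
  intro σ hσs y
  by_contra hcon
  push_neg at hcon
  obtain ⟨ν, hνs, hνmin⟩ := exists_wmeet M hωs hσs
  have hlt : Φ ν < Φ ω := by
    rw [hΦ]
    apply Finset.sum_lt_sum
    · intro i _; exact (hνmin i).1
    · exact ⟨y, Finset.mem_univ y, lt_of_le_of_lt (hνmin y).2 hcon⟩
  rw [hωΦ] at hlt
  exact absurd (Nat.find_le ⟨ν, hνs, rfl⟩) (Nat.not_le.mpr hlt)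

/-- The worker-optimal stable matching is firm-pessimal. -/
lemma firm_pessimal (M : Market n) {σ ω : Matching n} (hσs : Stable M σ)
    (hωs : Stable M ω)
    (hopt : ∀ y, M.wpref y (pW ω y) ≤ M.wpref y (pW σ y)) (x : Fin n) :
    M.fpref x (pF σ x) ≤ M.fpref x (pF ω x) := by
  have hσ := stable_perf hσs
  have hω := stable_perf hωs
  by_contra hcon
  push_neg at hcon
  set w := pF ω x with hw
  have hne : w ≠ pF σ x := by
    intro e; rw [e] at hcon; exact absurd hcon (lt_irrefl _)
  have hpWω : pW ω w = x := pW_pF hω x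
  have hstrict : M.wpref w x < M.wpref w (pW σ w) := by
    have h1 := hopt w
    rw [hpWω] at h1
    rcases Nat.lt_or_ge (M.wpref w x) (M.wpref w (pW σ w)) with h | h
    · exact h
    · have heq : pW σ w = x := M.wpref_inj w (Nat.le_antisymm h h1)
      have h5 : σ.mf x = some w := mf_eq_of_mw (heq ▸ pW_spec hσ w)
      exact absurd (pF_eq h5).symm hne
  refine absurd (hσs x w ⟨?_, ?_, ?_⟩) not_false
  · rw [pF_spec hσ x]; intro e; exact hne (Option.some_injective _ e).symm
  · rw [pF_spec hσ x]; intro w' hw'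
    have h4 : pF σ x = w' := by simpa using hw'
    subst h4; exact hcon
  · rw [pW_spec hσ w]; intro f'' hf''
    have h4 : pW σ w = f'' := by simpa using hf''
    subst h4; exact hstrict

/-! ### Exposed rotations -/

/-- From a stable `σ` differing from the worker-optimal `ω`, produce a stable `τ`
differing from `σ` on a single cycle, with all differing firms preferring `σ`
and all differing workers preferring `τ`. -/
lemma exposed (M : Market n) {σ ω : Matching n} (hσs : Stable M σ) (hωs : Stable M ω)
    (hopt : ∀ τ, Stable M τ → ∀ y, M.wpref y (pW ω y) ≤ M.wpref y (pW τ y))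
    {x₀ : Fin n} (hx₀ : σ.mf x₀ ≠ ω.mf x₀) :
    ∃ τ : Matching n, Stable M τ ∧ (∃ x, σ.mf x ≠ τ.mf x) ∧
      (∀ x, σ.mf x ≠ τ.mf x → M.fpref x (pF σ x) < M.fpref x (pF τ x)) ∧
      (∀ x, σ.mf x ≠ τ.mf x →
        M.wpref (pF τ x) x < M.wpref (pF τ x) (pW σ (pF τ x))) ∧
      (∀ g x, σ.mf g ≠ τ.mf g → σ.mf x ≠ τ.mf x →
        ∃ k, (fun z => pW σ (pF τ z))^[k] g = x) := by
  classical
  have hσ := stable_perf hσs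
  have hω := stable_perf hωs
  set D₀ : Fin n → Prop := fun x => σ.mf x ≠ ω.mf x with hD₀
  set P : Fin n → Fin n → Prop := fun x y =>
    M.fpref x (pF σ x) < M.fpref x y ∧ M.wpref y x < M.wpref y (pW σ y) with hP
  have hcand : ∀ x, D₀ x → P x (pF ω x) := by
    intro x hx
    constructor
    · have hle := firm_pessimal M hσs hωs (hopt σ hσs) x
      have hne : pF σ x ≠ pF ω x := by
        intro e
        exact hx ((pF_spec hσ x).trans (e ▸ (pF_spec hω x).symm))
      exact lt_of_le_of_ne hle (fun e => hne (M.fpref_inj x e))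
    · have hpW : pW ω (pF ω x) = x := pW_pF hω x
      have hle := hopt σ hσs (pF ω x)
      rw [hpW] at hle
      rcases Nat.lt_or_ge (M.wpref (pF ω x) x) (M.wpref (pF ω x) (pW σ (pF ω x)))
        with h | h
      · exact h
      · have heq : pW σ (pF ω x) = x := M.wpref_inj _ (Nat.le_antisymm h hle)
        have h5a : σ.mw (pF ω x) = some x := by rw [pW_spec hσ (pF ω x), heq]
        exact absurd ((mf_eq_of_mw h5a).trans (pF_spec hω x).symm) hx
  have hnxex : ∀ x, D₀ x → ∃ y, P x y ∧ ∀ z, P x z → M.fpref x y ≤ M.fpref x z := by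
    intro x hx
    obtain ⟨y, hy1, hy2⟩ := Finset.exists_min_image (Finset.univ.filter (P x))
      (fun y => M.fpref x y)
      ⟨pF ω x, Finset.mem_filter.mpr ⟨Finset.mem_univ _, hcand x hx⟩⟩
    exact ⟨y, (Finset.mem_filter.mp hy1).2, fun z hz =>
      hy2 z (Finset.mem_filter.mpr ⟨Finset.mem_univ _, hz⟩)⟩
  choose! nx hnx1 hnx2 using hnxex
  set nxt : Fin n → Fin n := fun x => pW σ (nx x) with hnxt
  have hσnxt : ∀ x, σ.mf (nxt x) = some (nx x) :=
    fun x => mf_eq_of_mw (pW_spec hσ (nx x))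
  have hnext_mem : ∀ x, D₀ x → D₀ (nxt x) := by
    intro x hx heq
    have hω1 : ω.mf (nxt x) = some (nx x) := by rw [← heq]; exact hσnxt x
    by_cases hyω : nx x = pF ω x
    · have h1 : ω.mf x = some (nx x) := by rw [hyω]; exact pF_spec hω x
      have h2 : nxt x = x :=
        Option.some_injective _ ((mw_eq_of_mf hω1).symm.trans (mw_eq_of_mf h1))
      have h3 : σ.mf x = some (nx x) := by
        have h4 := hσnxt x; rw [h2] at h4; exact h4
      exact hx (h3.trans h1.symm)
    · have hPx := hnx1 x hx
      have hminP : M.fpref x (nx x) ≤ M.fpref x (pF ω x) := hnx2 x hx _ (hcand x hx)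
      have hlt : M.fpref x (nx x) < M.fpref x (pF ω x) :=
        lt_of_le_of_ne hminP (fun e => hyω (M.fpref_inj x e))
      refine hωs x (nx x) ⟨?_, ?_, ?_⟩
      · rw [pF_spec hω x]
        intro e; exact hyω (Option.some_injective _ e).symm
      · rw [pF_spec hω x]
        intro w' hw'
        have h4 : pF ω x = w' := by simpa using hw'
        subst h4; exact hlt
      · rw [mw_eq_of_mf hω1]
        intro f'' hf''
        have h4 : nxt x = f'' := by simpa using hf''
        subst h4; exact hPx.2
  set seq : ℕ → Fin n := fun k => nxt^[k] x₀ with hseq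
  have hseqS : ∀ k, seq (k+1) = nxt (seq k) :=
    fun k => Function.iterate_succ_apply' nxt k x₀
  have hseqD : ∀ k, D₀ (seq k) := by
    intro k; induction k with
    | zero => exact hx₀
    | succ k ih => rw [hseqS k]; exact hnext_mem _ ih
  have hpig : ∃ j, ∃ i, i < j ∧ seq i = seq j := by
    obtain ⟨a, _, b, _, hne, heq⟩ := Finset.exists_ne_map_eq_of_card_lt_of_maps_to
      (s := Finset.range (n+1)) (t := (Finset.univ : Finset (Fin n)))
      (by simp) (fun a _ => Finset.mem_univ (seq a))
    rcases Nat.lt_or_ge a b with h | h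
    · exact ⟨b, a, h, heq⟩
    · exact ⟨a, b, lt_of_le_of_ne h (fun e => hne e.symm), heq.symm⟩
  obtain ⟨i₀, hi₀, hseqeq⟩ := Nat.find_spec hpig
  set j₀ := Nat.find hpig with hj₀
  have hinj : ∀ a b, a < b → b < j₀ → seq a ≠ seq b := by
    intro a b hab hb he
    exact (Nat.find_min hpig hb) ⟨a, hab, he⟩
  -- the cycle has length at least 2
  have hKpos : i₀ + 1 < j₀ := by
    rcases Nat.lt_or_ge (i₀+1) j₀ with h | h
    · exact h
    · exfalso
      have hj : j₀ = i₀ + 1 := by omega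
      have he : seq i₀ = nxt (seq i₀) := by
        rw [← hseqS i₀, ← hj]; exact hseqeq
      have h5 : σ.mf (seq i₀) = some (nx (seq i₀)) := by
        have h5a := hσnxt (seq i₀)
        rw [← he] at h5a
        exact h5a
      have h6 := (hnx1 (seq i₀) (hseqD i₀)).1
      rw [pF_eq h5] at h6
      exact absurd h6 (lt_irrefl _)
  set K := j₀ - 1 - i₀ with hK
  set chain : ℕ → Matching n := fun k =>
    Nat.rec σ (fun k m => Swap m (seq (i₀ + k)) (seq (i₀ + k + 1))) k with hchain
  have hchainS : ∀ k, chain (k+1) = Swap (chain k) (seq (i₀+k)) (seq (i₀+k+1)) :=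
    fun k => rfl
  have hchperf : ∀ k, Perf (chain k) := by
    intro k; induction k with
    | zero => exact hσ
    | succ k ih => rw [hchainS k]; exact swap_perf ih _ _
  have hINV : ∀ k, k ≤ K →
      (∀ s, i₀ ≤ s → s < i₀ + k → (chain k).mf (seq s) = σ.mf (seq (s+1)))
      ∧ (chain k).mf (seq (i₀+k)) = σ.mf (seq i₀)
      ∧ (∀ z, (∀ s, i₀ ≤ s → s ≤ i₀ + k → z ≠ seq s) → (chain k).mf z = σ.mf z) := by
    intro k
    induction k with
    | zero =>
      intro _
      refine ⟨fun s hs1 hs2 => absurd hs2 (by omega), ?_, fun z _ => rfl⟩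
      show σ.mf (seq (i₀ + 0)) = σ.mf (seq i₀)
      rw [Nat.add_zero]
    | succ k ih =>
      intro hk1
      have hk : k ≤ K := Nat.le_of_succ_le hk1
      obtain ⟨ih1, ih2, ih3⟩ := ih hk
      have hjk : i₀ + k + 1 < j₀ := by omega
      have hab : seq (i₀+k) ≠ seq (i₀+k+1) := hinj (i₀+k) (i₀+k+1) (by omega) hjk
      have hba : seq (i₀+k+1) ≠ seq (i₀+k) := fun e => hab e.symm
      have hbu : (chain k).mf (seq (i₀+k+1)) = σ.mf (seq (i₀+k+1)) := by
        refine ih3 _ (fun s hs1 hs2 he => ?_)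
        exact hinj s (i₀+k+1) (by omega) hjk he.symm
      refine ⟨?_, ?_, ?_⟩
      · intro s hs1 hs2
        rw [hchainS k]
        by_cases hsk : s = i₀ + k
        · subst hsk
          rw [swap_mf_left, hbu]
        · have hslt : s < i₀ + k := by omega
          have hsa : seq s ≠ seq (i₀+k) := hinj s (i₀+k) (by omega) (by omega)
          have hsb : seq s ≠ seq (i₀+k+1) := hinj s (i₀+k+1) (by omega) hjk
          rw [swap_mf_other _ hsa hsb]
          exact ih1 s hs1 hslt
      · rw [hchainS k]
        have : i₀ + (k+1) = (i₀ + k) + 1 := by omega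
        rw [this, swap_mf_right _ hba]
        exact ih2
      · intro z hz
        rw [hchainS k]
        have hza : z ≠ seq (i₀+k) := hz (i₀+k) (by omega) (by omega)
        have hzb : z ≠ seq (i₀+k+1) := by
          have : i₀ + k + 1 = i₀ + (k+1) := by omega
          rw [this]; exact hz (i₀+(k+1)) (by omega) (by omega)
        rw [swap_mf_other _ hza hzb]
        exact ih3 z (fun s h1 h2 => hz s h1 (by omega))
  set τ := chain K with hτdef
  have hτperf : Perf τ := hchperf K
  obtain ⟨T1, T2, T3⟩ := hINV K (le_refl K)
  have hτC : ∀ t, i₀ ≤ t → t < j₀ → τ.mf (seq t) = some (nx (seq t)) := by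
    intro t h1 h2
    have hs : σ.mf (seq (t+1)) = some (nx (seq t)) := by
      rw [hseqS t]; exact hσnxt (seq t)
    by_cases ht : t = i₀ + K
    · subst ht
      rw [T2]
      have h7 : seq (i₀ + K + 1) = seq i₀ := by
        rw [show i₀ + K + 1 = j₀ by omega]; exact hseqeq.symm
      rw [← h7]
      exact hs
    · have hlt : t < i₀ + K := by omega
      rw [T1 t h1 hlt]; exact hs
  have hτoff : ∀ z, (∀ t, i₀ ≤ t → t < j₀ → z ≠ seq t) → τ.mf z = σ.mf z := by
    intro z hz
    exact T3 z (fun s h1 h2 => hz s h1 (by omega))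
  set C : Fin n → Prop := fun z => ∃ t, i₀ ≤ t ∧ t < j₀ ∧ seq t = z with hC
  have hτmf : ∀ z, C z → τ.mf z = some (nx z) := by
    rintro z ⟨t, h1, h2, rfl⟩; exact hτC t h1 h2
  have hτmf' : ∀ z, ¬ C z → τ.mf z = σ.mf z := by
    intro z hz; exact hτoff z (fun t h1 h2 he => hz ⟨t, h1, h2, he.symm⟩)
  have hCD₀ : ∀ z, C z → D₀ z := by rintro z ⟨t, h1, h2, rfl⟩; exact hseqD t
  have hnxne : ∀ z, D₀ z → nx z ≠ pF σ z := by
    intro z hz e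
    have h6 := (hnx1 z hz).1
    rw [← e] at h6
    exact absurd h6 (lt_irrefl _)
  have hDiff : ∀ z, σ.mf z ≠ τ.mf z ↔ C z := by
    intro z; constructor
    · intro h; by_contra hc; exact h (hτmf' z hc).symm
    · intro hc
      rw [hτmf z hc, pF_spec hσ z]
      intro e
      exact hnxne z (hCD₀ z hc) (Option.some_injective _ e).symm
  have hSUB : ∀ x y : Fin n, M.wpref y x < M.wpref y (pW τ y) →
      M.wpref y x < M.wpref y (pW σ y) := by
    intro x y h3
    have hτu : τ.mf (pW τ y) = some y := mf_eq_of_mw (pW_spec hτperf y)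
    by_cases hcu : C (pW τ y)
    · have hnxu : nx (pW τ y) = y :=
        Option.some_injective _ ((hτmf _ hcu).symm.trans hτu)
      have h4 := (hnx1 (pW τ y) (hCD₀ _ hcu)).2
      rw [hnxu] at h4
      exact lt_trans h3 h4
    · have h5 : σ.mf (pW τ y) = some y := (hτmf' _ hcu).symm.trans hτu
      rw [pW_eq (mw_eq_of_mf h5)]
      exact h3
  have hτs : Stable M τ := by
    rintro x y ⟨h1, h2, h3⟩
    have h2' : M.fpref x y < M.fpref x (pF τ x) := by
      have := h2 (pF τ x) (by rw [pF_spec hτperf x]; exact Option.mem_def.mpr rfl)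
      exact this
    have h3' : M.wpref y x < M.wpref y (pW τ y) := by
      have := h3 (pW τ y) (by rw [pW_spec hτperf y]; exact Option.mem_def.mpr rfl)
      exact this
    have hW : M.wpref y x < M.wpref y (pW σ y) := hSUB x y h3'
    have hyne : y ≠ pF σ x := by
      intro e
      rw [e, pW_pF hσ x] at hW
      exact absurd hW (lt_irrefl _)
    have hblockσ : M.fpref x y < M.fpref x (pF σ x) → False := by
      intro hcase
      refine hσs x y ⟨?_, ?_, ?_⟩
      · rw [pF_spec hσ x]
        intro e; exact hyne (Option.some_injective _ e).symm
      · rw [pF_spec hσ x]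
        intro w' hw'
        have h4 : pF σ x = w' := by simpa using hw'
        subst h4; exact hcase
      · rw [pW_spec hσ y]
        intro f'' hf''
        have h4 : pW σ y = f'' := by simpa using hf''
        subst h4; exact hW
    by_cases hcx : C x
    · have hpFτ : pF τ x = nx x := pF_eq (hτmf x hcx)
      rw [hpFτ] at h2'
      rcases Nat.lt_or_ge (M.fpref x y) (M.fpref x (pF σ x)) with hcase | hcase
      · exact hblockσ hcase
      · have hPxy : P x y :=
          ⟨lt_of_le_of_ne hcase (fun e => hyne (M.fpref_inj x e).symm), hW⟩
        exact absurd h2' (Nat.not_lt.mpr (hnx2 x (hCD₀ x hcx) y hPxy))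
    · have hpFτ : pF τ x = pF σ x := (pF_congr (hτmf' x hcx))
      rw [hpFτ] at h2'
      exact hblockσ h2'
  -- orbit structure
  have hπ1 : ∀ t, i₀ ≤ t → t < j₀ → pW σ (pF τ (seq t)) = seq (t+1) := by
    intro t h1 h2
    rw [pF_eq (hτC t h1 h2), hseqS t]
  have hperiod : ∀ m, seq (j₀ + m) = seq (i₀ + m) := by
    intro m; induction m with
    | zero => simpa using hseqeq.symm
    | succ m ih =>
      have e1 : j₀ + (m+1) = (j₀ + m) + 1 := by omega
      have e2 : i₀ + (m+1) = (i₀ + m) + 1 := by omega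
      rw [e1, e2, hseqS (j₀+m), hseqS (i₀+m), ih]
  have hπall : ∀ t, i₀ ≤ t → pW σ (pF τ (seq t)) = seq (t+1) := by
    intro t
    induction t using Nat.strong_induction_on with
    | _ t ih =>
      intro h1
      by_cases h2 : t < j₀
      · exact hπ1 t h1 h2
      · obtain ⟨m, rfl⟩ := Nat.exists_eq_add_of_le (Nat.le_of_not_lt h2)
        rw [hperiod m]
        rw [show j₀ + m + 1 = j₀ + (m+1) by omega, hperiod (m+1),
          show i₀ + (m+1) = (i₀ + m) + 1 by omega]
        exact ih (i₀ + m) (by omega) (by omega)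
  have hiter : ∀ t k, i₀ ≤ t → (fun z => pW σ (pF τ z))^[k] (seq t) = seq (t + k) := by
    intro t k h1
    induction k with
    | zero => simp
    | succ k ih =>
      rw [Function.iterate_succ_apply', ih, show t + (k+1) = (t+k)+1 by omega]
      exact hπall (t+k) (by omega)
  refine ⟨τ, hτs, ⟨seq i₀, (hDiff _).mpr ⟨i₀, le_refl _, by omega, rfl⟩⟩, ?_, ?_, ?_⟩
  · intro x hx
    have hcx := (hDiff x).mp hx
    rw [pF_eq (hτmf x hcx)]
    exact (hnx1 x (hCD₀ x hcx)).1
  · intro x hx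
    have hcx := (hDiff x).mp hx
    rw [pF_eq (hτmf x hcx)]
    exact (hnx1 x (hCD₀ x hcx)).2
  · intro g x hg hx
    obtain ⟨a, ha1, ha2, rfl⟩ := (hDiff g).mp hg
    obtain ⟨b, hb1, hb2, rfl⟩ := (hDiff x).mp hx
    refine ⟨b + (j₀ - i₀) - a, ?_⟩
    rw [hiter a _ ha1, show a + (b + (j₀ - i₀) - a) = j₀ + (b - i₀) by omega,
      hperiod (b - i₀), show i₀ + (b - i₀) = b by omega]

/-! ### Transfer of reachability across exposed rotations -/

lemma ncard_le_n (s : Set (Fin n)) : s.ncard ≤ n := by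
  have h := Set.ncard_le_ncard (Set.subset_univ s) (Set.toFinite _)
  simpa [Set.ncard_univ] using h

lemma transfer_fwd (M : Market n) (hno : NoNontrivialFragments M)
    {start σ τ : Matching n}
    (hσs : Stable M σ) (hτs : Stable M τ)
    {x₁ : Fin n} (hx₁ : σ.mf x₁ ≠ τ.mf x₁)
    (hfpref : ∀ x, σ.mf x ≠ τ.mf x → M.fpref x (pF σ x) < M.fpref x (pF τ x))
    (hwpref : ∀ x, σ.mf x ≠ τ.mf x →
        M.wpref (pF τ x) x < M.wpref (pF τ x) (pW σ (pF τ x)))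
    (horb : ∀ g x, σ.mf g ≠ τ.mf g → σ.mf x ≠ τ.mf x →
        ∃ k, (fun z => pW σ (pF τ z))^[k] g = x)
    (hgood : ∀ h, ¬ Frozen M h → Relation.ReflTransGen (StepRel M) start (σ.unmatch h)) :
    ∀ h, ¬ Frozen M h → Relation.ReflTransGen (StepRel M) start (τ.unmatch h) := by
  have hσp := stable_perf hσs
  have hτp := stable_perf hτs
  have stage1 : ∀ g, σ.mf g ≠ τ.mf g →
      Relation.ReflTransGen (StepRel M) start (τ.unmatch g) := by
    intro g hg
    set g₁ := pW σ (pF τ g) with hg₁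
    have hσg₁ : σ.mf g₁ = some (pF τ g) := mf_eq_of_mw (pW_spec hσp (pF τ g))
    have hg₁D : σ.mf g₁ ≠ τ.mf g₁ := by
      intro e
      have h2 : τ.mf g₁ = some (pF τ g) := by rw [← e]; exact hσg₁
      have h3 : g₁ = g := Option.some_injective _
        ((mw_eq_of_mf h2).symm.trans (mw_eq_of_mf (pF_spec hτp g)))
      exact hg (h3 ▸ e)
    have hg₁F : ¬ Frozen M g₁ := fun hfz => hg₁D (hfz σ τ hσs hτs)
    have hpath := hgood g₁ hg₁F
    have hrot := rot2 M n σ τ g₁ (ncard_le_n _) hσp hτp hg₁D (fun x hx => horb g₁ x hg₁D hx)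
      (fun x hx _ => hwpref x hx)
    have hend : pW τ (pF σ g₁) = g := by
      rw [pF_eq hσg₁]
      exact pW_pF hτp g
    rw [hend] at hrot
    exact hpath.trans hrot
  intro h hF
  by_cases hr : Relation.ReflTransGen (Edge M τ) x₁ h
  · exact closure_path M hτs hr (stage1 x₁ hx₁)
  · exact absurd (frozen_of_not_reach M hno hτs x₁ hr) hF

lemma transfer_bwd (M : Market n) (hno : NoNontrivialFragments M)
    {start σ τ : Matching n}
    (hσs : Stable M σ) (hτs : Stable M τ)
    {x₁ : Fin n} (hx₁ : σ.mf x₁ ≠ τ.mf x₁)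
    (hfpref : ∀ x, σ.mf x ≠ τ.mf x → M.fpref x (pF σ x) < M.fpref x (pF τ x))
    (horb : ∀ g x, σ.mf g ≠ τ.mf g → σ.mf x ≠ τ.mf x →
        ∃ k, (fun z => pW σ (pF τ z))^[k] g = x)
    (hgood : ∀ h, ¬ Frozen M h → Relation.ReflTransGen (StepRel M) start (τ.unmatch h)) :
    ∀ h, ¬ Frozen M h → Relation.ReflTransGen (StepRel M) start (σ.unmatch h) := by
  have hσp := stable_perf hσs
  have hτp := stable_perf hτs
  have stage1 : ∀ g, σ.mf g ≠ τ.mf g →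
      Relation.ReflTransGen (StepRel M) start (σ.unmatch g) := by
    intro g hg
    have hgF : ¬ Frozen M g := fun hfz => hg (hfz σ τ hσs hτs)
    have hpath := hgood g hgF
    have hrot := rot1 M n τ σ g (ncard_le_n _) hτp hσp (fun e => hg e.symm)
      (fun x hx => horb g x hg (fun e => hx e.symm))
      (fun x hx _ => hfpref x (fun e => hx e.symm))
    exact hpath.trans hrot
  intro h hF
  by_cases hr : Relation.ReflTransGen (Edge M σ) x₁ h
  · exact closure_path M hσs hr (stage1 x₁ hx₁)
  · exact absurd (frozen_of_not_reach M hno hσs x₁ hr) hF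
end Obs

open Obs

/-- **Observation 1** in the proof of Theorem 1: in a market with no non-trivial
fragments, for any stable matching `μ` and any firm `f`, the almost stable
matching `μ_{-f}` can reach either every stable matching, or every other almost
stable matching `μ_{-f'}` corresponding to `μ`. -/
theorem stmt9 (M : Market n) (hno : NoNontrivialFragments M)
    (μ : Matching n) (hμ : Stable M μ) (f : Fin n) :
    (∀ μ' : Matching n, Stable M μ' →
        Relation.ReflTransGen (StepRel M) (μ.unmatch f) μ') ∨
    (∀ f' : Fin n, Relation.ReflTransGen (StepRel M) (μ.unmatch f) (μ.unmatch f')) := by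
  classical
  have hμp := stable_perf hμ
  by_cases hall : ∀ x, Relation.ReflTransGen (Edge M μ) f x
  · right
    intro f'
    exact closure_path M hμ (hall f') Relation.ReflTransGen.refl
  · left
    push_neg at hall
    obtain ⟨x₁, hx₁⟩ := hall
    set start := μ.unmatch f with hstart
    set goodP : Matching n → Prop := fun σ =>
      ∀ h, ¬ Frozen M h →
        Relation.ReflTransGen (StepRel M) start (σ.unmatch h) with hgoodP
    have hgoodμ : goodP μ := by
      intro h hF
      by_cases hr : Relation.ReflTransGen (Edge M μ) f h
      · exact closure_path M hμ hr Relation.ReflTransGen.refl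
      · exact absurd (frozen_of_not_reach M hno hμ f hr) hF
    obtain ⟨ω, hωs, hopt⟩ := exists_wopt M hμ
    set Φ : Matching n → ℕ := fun σ => ∑ x : Fin n, M.fpref x (pF σ x) with hΦ
    set B₀ : ℕ := ∑ x : Fin n, Finset.univ.sup (M.fpref x) with hB₀
    have hΦle : ∀ σ : Matching n, Φ σ ≤ B₀ :=
      fun σ => Finset.sum_le_sum (fun i _ => Finset.le_sup (Finset.mem_univ _))
    have hΦlt : ∀ σ τ : Matching n,
        (∃ x, σ.mf x ≠ τ.mf x) →
        (∀ x, σ.mf x ≠ τ.mf x → M.fpref x (pF σ x) < M.fpref x (pF τ x)) →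
        Φ σ < Φ τ := by
      rintro σ τ ⟨x₂, hx₂⟩ hf
      apply Finset.sum_lt_sum
      · intro i _
        by_cases hi : σ.mf i = τ.mf i
        · rw [pF_congr hi]
        · exact le_of_lt (hf i hi)
      · exact ⟨x₂, Finset.mem_univ _, hf x₂ hx₂⟩
    have hup : ∀ k, ∀ σ, Stable M σ → B₀ - Φ σ ≤ k → goodP σ → goodP ω := by
      intro k
      induction k with
      | zero =>
        intro σ hσs hk hg
        by_cases hsame : ∀ x, σ.mf x = ω.mf x
        · rwa [Matching.ext_mf hsame] at hg
        · push_neg at hsame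
          obtain ⟨x₂, hx₂⟩ := hsame
          obtain ⟨τ, hτs, hd, hf, hw, ho⟩ := exposed M hσs hωs hopt hx₂
          have h1 := hΦlt σ τ hd hf
          have h2 := hΦle τ
          omega
      | succ k ih =>
        intro σ hσs hk hg
        by_cases hsame : ∀ x, σ.mf x = ω.mf x
        · rwa [Matching.ext_mf hsame] at hg
        · push_neg at hsame
          obtain ⟨x₂, hx₂⟩ := hsame
          obtain ⟨τ, hτs, ⟨x₃, hx₃⟩, hf, hw, ho⟩ := exposed M hσs hωs hopt hx₂
          have hlt := hΦlt σ τ ⟨x₃, hx₃⟩ hf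
          have hg' : goodP τ := transfer_fwd M hno hσs hτs hx₃ hf hw ho hg
          exact ih τ hτs (by have := hΦle τ; omega) hg'
    have hdown : ∀ k, ∀ σ, Stable M σ → B₀ - Φ σ ≤ k → goodP ω → goodP σ := by
      intro k
      induction k with
      | zero =>
        intro σ hσs hk hg
        by_cases hsame : ∀ x, σ.mf x = ω.mf x
        · rwa [Matching.ext_mf hsame]
        · push_neg at hsame
          obtain ⟨x₂, hx₂⟩ := hsame
          obtain ⟨τ, hτs, hd, hf, hw, ho⟩ := exposed M hσs hωs hopt hx₂
          have h1 := hΦlt σ τ hd hf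
          have h2 := hΦle τ
          omega
      | succ k ih =>
        intro σ hσs hk hg
        by_cases hsame : ∀ x, σ.mf x = ω.mf x
        · rwa [Matching.ext_mf hsame]
        · push_neg at hsame
          obtain ⟨x₂, hx₂⟩ := hsame
          obtain ⟨τ, hτs, ⟨x₃, hx₃⟩, hf, hw, ho⟩ := exposed M hσs hωs hopt hx₂
          have hlt := hΦlt σ τ ⟨x₃, hx₃⟩ hf
          have hg' : goodP τ := ih τ hτs (by have := hΦle τ; omega) hg
          exact transfer_bwd M hno hσs hτs hx₃ hf ho hg'
    have hgoodω : goodP ω := hup (B₀ - Φ μ) μ hμ (le_refl _) hgoodμ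
    intro μ' hμ'
    have hgood' : goodP μ' := hdown (B₀ - Φ μ') μ' hμ' (le_refl _) hgoodω
    by_cases hsame : ∀ x, μ'.mf x = μ.mf x
    · rw [Matching.ext_mf hsame]
      exact Relation.ReflTransGen.single (stepC M μ (pF_spec hμp f))
    · push_neg at hsame
      obtain ⟨x₂, hx₂⟩ := hsame
      have hF : ¬ Frozen M x₂ := fun hfz => hx₂ (hfz μ' μ hμ' hμ)
      exact (hgood' x₂ hF).tail (stepC M μ' (pF_spec (stable_perf hμ') x₂))
end
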